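/- arXiv:2307.00634 — 7 statements merged into one kernel-verified Lean document; each statement's English description precedes it below -/
import Mathlib

section
/- Let n, m be real numbers with n > m > 3, let σ > 0 and T > 0. Then the function r ↦ (exp(-(1/T)((σ/r)^n - (σ/r)^m)) - 1) · r² is integrable on (0, ∞). -/
open Real MeasureTheory

/-- The integrand of the second virial coefficient for the Mie potential,
`r ↦ (exp(-(1/T)((σ/r)^n - (σ/r)^m)) - 1) r²`, is integrable on `(0, ∞)`
when `n > m > 3`, `σ > 0`, `T > 0`. -/
theorem second_virial_integrand_integrable (n m σ T : ℝ)
    (hm : 3 < m) (hnm : m < n) (hσ : 0 < σ) (hT : 0 < T) :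
    IntegrableOn
      (fun r : ℝ => (Real.exp (-(1 / T) * ((σ / r) ^ n - (σ / r) ^ m)) - 1) * r ^ 2)
      (Set.Ioi 0) := by
  have hT' : 0 < 1 / T := by positivity
  set f : ℝ → ℝ := fun r => (Real.exp (-(1 / T) * ((σ / r) ^ n - (σ / r) ^ m)) - 1) * r ^ 2
    with hf
  have hcont : ContinuousOn f (Set.Ioi 0) := by
    apply ContinuousOn.mul
    · apply ContinuousOn.sub _ continuousOn_const
      apply ContinuousOn.rexp
      apply ContinuousOn.mul continuousOn_const
      have hdiv : ContinuousOn (fun r : ℝ => σ / r) (Set.Ioi 0) :=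
        continuousOn_const.div continuousOn_id (fun r hr => ne_of_gt hr)
      exact (hdiv.rpow_const (fun r hr => Or.inl (ne_of_gt (div_pos hσ hr)))).sub
        (hdiv.rpow_const (fun r hr => Or.inl (ne_of_gt (div_pos hσ hr))))
    · exact (continuous_pow 2).continuousOn
  have hmeas : AEStronglyMeasurable f (volume.restrict (Set.Ioi 0)) :=
    hcont.aestronglyMeasurable measurableSet_Ioi
  have h1 : IntegrableOn f (Set.Ioc 0 σ) := by
    apply Integrable.mono' (g := fun _ : ℝ => σ ^ 2)
    · exact integrableOn_const measure_Ioc_lt_top.ne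
    · exact hmeas.mono_measure (Measure.restrict_mono Set.Ioc_subset_Ioi_self le_rfl)
    · filter_upwards [ae_restrict_mem measurableSet_Ioc] with r hr
      obtain ⟨hr0, hrσ⟩ := hr
      have hb : 1 ≤ σ / r := (one_le_div hr0).2 hrσ
      have hle : (σ / r) ^ m ≤ (σ / r) ^ n :=
        Real.rpow_le_rpow_of_exponent_le hb hnm.le
      have hexp : Real.exp (-(1 / T) * ((σ / r) ^ n - (σ / r) ^ m)) ≤ 1 := by
        rw [Real.exp_le_one_iff]
        nlinarith
      have hexp0 : (0:ℝ) < Real.exp (-(1 / T) * ((σ / r) ^ n - (σ / r) ^ m)) :=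
        Real.exp_pos _
      have habs : |Real.exp (-(1 / T) * ((σ / r) ^ n - (σ / r) ^ m)) - 1| ≤ 1 := by
        rw [abs_le]; constructor <;> nlinarith
      calc ‖f r‖ = |Real.exp (-(1 / T) * ((σ / r) ^ n - (σ / r) ^ m)) - 1| * |r ^ 2| := by
            simp [hf, abs_mul]
        _ ≤ 1 * σ ^ 2 := by
            apply mul_le_mul habs _ (abs_nonneg _) zero_le_one
            rw [abs_of_nonneg (by positivity)]
            exact pow_le_pow_left₀ hr0.le hrσ 2
        _ = σ ^ 2 := one_mul _
  have h2 : IntegrableOn f (Set.Ioi σ) := by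
    have hint : IntegrableOn (fun r : ℝ => (Real.exp (1 / T) * (1 / T) * σ ^ m) * r ^ (2 - m))
        (Set.Ioi σ) :=
      (integrableOn_Ioi_rpow_of_lt (by linarith) hσ).const_mul _
    apply Integrable.mono' hint
      (hmeas.mono_measure (Measure.restrict_mono (Set.Ioi_subset_Ioi hσ.le) le_rfl))
    filter_upwards [ae_restrict_mem measurableSet_Ioi] with r hr
    have hr0 : 0 < r := hσ.trans hr
    have hd : 0 < σ / r := div_pos hσ hr0
    have hd1 : σ / r ≤ 1 := (div_le_one hr0).2 hr.le
    set x := -(1 / T) * ((σ / r) ^ n - (σ / r) ^ m) with hx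
    have hle : (σ / r) ^ n ≤ (σ / r) ^ m :=
      Real.rpow_le_rpow_of_exponent_ge hd hd1 hnm.le
    have hx0 : 0 ≤ x := by rw [hx]; nlinarith
    have hxle : x ≤ 1 / T * (σ / r) ^ m := by
      have h0 : 0 < (σ / r) ^ n := Real.rpow_pos_of_pos hd n
      rw [hx]; nlinarith
    have hm1 : (σ / r) ^ m ≤ 1 := Real.rpow_le_one hd.le hd1 (by linarith)
    have hx1 : x ≤ 1 / T := hxle.trans (by nlinarith)
    have hex1 : 1 ≤ Real.exp x := Real.one_le_exp hx0
    have key : Real.exp x - 1 ≤ x * Real.exp x := by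
      have h := Real.add_one_le_exp (-x)
      rw [Real.exp_neg] at h
      have h2 := mul_le_mul_of_nonneg_right h (Real.exp_pos x).le
      rw [inv_mul_cancel₀ (Real.exp_ne_zero x)] at h2
      nlinarith
    have hexle : Real.exp x ≤ Real.exp (1 / T) := Real.exp_le_exp.2 hx1
    have hrw : (σ / r) ^ m * r ^ 2 = σ ^ m * r ^ (2 - m) := by
      have hrm : (0:ℝ) < r ^ m := Real.rpow_pos_of_pos hr0 m
      rw [Real.div_rpow hσ.le hr0.le, Real.rpow_sub hr0,
        show ((2:ℝ)) = ((2:ℕ):ℝ) by norm_num, Real.rpow_natCast]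
      field_simp
    calc ‖f r‖ = (Real.exp x - 1) * r ^ 2 := by
          rw [hf]
          simp only
          rw [← hx, norm_eq_abs, abs_of_nonneg (by nlinarith [sq_nonneg r])]
      _ ≤ (x * Real.exp x) * r ^ 2 := by nlinarith [sq_nonneg r]
      _ ≤ ((1 / T * (σ / r) ^ m) * Real.exp (1 / T)) * r ^ 2 := by
          have hxen : 0 ≤ x * Real.exp x := mul_nonneg hx0 (Real.exp_pos x).le
          have : x * Real.exp x ≤ (1 / T * (σ / r) ^ m) * Real.exp (1 / T) := by
            apply mul_le_mul hxle hexle (Real.exp_pos x).le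
            positivity
          nlinarith [sq_nonneg r]
      _ = (Real.exp (1 / T) * (1 / T) * σ ^ m) * r ^ (2 - m) := by
          rw [show 1 / T * (σ / r) ^ m * Real.exp (1 / T) * r ^ 2
            = (Real.exp (1 / T) * (1 / T)) * ((σ / r) ^ m * r ^ 2) by ring, hrw]
          ring
  rw [← Set.Ioc_union_Ioi_eq_Ioi hσ.le]
  exact h1.union h2
end

section
/- Let n, m be real numbers with n > m > 3 and let T > 0. Then the series Σ_{k=0}^∞ (1/k!) Γ((k·m - 3)/n) · T^{-(n-m)k/n} is summable (converges absolutely), where Γ is the Euler Gamma function. -/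
/-! Write the `k`-th term as `Γ(d k - c) b^k / k!` with `d = m/n ∈ (0,1)`, `c = 3/n` and
`b = T^{-(n-m)/n}`. Log-convexity of `Γ` on `(0, ∞)`, applied between `x` and `x + 1`, gives the
Gautschi-type bound `Γ(x + d) ≤ Γ(x) x^d`. Hence the ratio of consecutive terms is eventually at
most `|b| (k+1)^d / (k+1) → 0`, and the ratio test applies. -/

open Real Filter Topology

namespace Real

theorem Gamma_add_le_Gamma_mul_rpow {x d : ℝ} (hx : 0 < x) (hd₀ : 0 ≤ d) (hd₁ : d ≤ 1) :
    Gamma (x + d) ≤ Gamma x * x ^ d := by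
  have hΓ : 0 < Gamma x := Gamma_pos_of_pos hx
  have hconv := convexOn_log_Gamma.2 (Set.mem_Ioi.mpr hx)
    (Set.mem_Ioi.mpr (by linarith : 0 < x + 1)) (sub_nonneg.mpr hd₁) hd₀ (sub_add_cancel 1 d)
  have hcomb : (1 - d) • x + d • (x + 1) = x + d := by simp only [smul_eq_mul]; ring
  rw [hcomb, Function.comp_apply, Function.comp_apply, Function.comp_apply, Gamma_add_one hx.ne',
    log_mul hx.ne' hΓ.ne', smul_eq_mul, smul_eq_mul] at hconv
  calc Gamma (x + d) = exp (log (Gamma (x + d))) :=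
        (exp_log (Gamma_pos_of_pos (by linarith))).symm
    _ ≤ exp (log (Gamma x) + d * log x) := exp_le_exp.mpr (by linarith)
    _ = Gamma x * x ^ d := by rw [exp_add, exp_log hΓ, rpow_def_of_pos hx, mul_comm d]

theorem summable_Gamma_mul_sub_mul_pow_div_factorial {d : ℝ} (hd₀ : 0 < d) (hd₁ : d < 1)
    (c b : ℝ) : Summable fun k : ℕ => Gamma (d * k - c) * b ^ k / k.factorial := by
  have hsmall : Tendsto (fun k : ℕ => |b| * ((k : ℝ) + 1) ^ (d - 1)) atTop (𝓝 0) := by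
    have := ((tendsto_rpow_neg_atTop (sub_pos.mpr hd₁)).comp
      (tendsto_atTop_add_const_right _ 1 tendsto_natCast_atTop_atTop)).const_mul |b|
    simpa only [neg_sub, mul_zero, Function.comp_def] using this
  have hlinear {a : ℝ} (ha : 0 < a) (e : ℝ) : ∀ᶠ k : ℕ in atTop, e < a * k :=
    (tendsto_natCast_atTop_atTop.const_mul_atTop ha).eventually_gt_atTop e
  refine summable_of_ratio_norm_eventually_le (r := 1 / 2) (by norm_num) ?_
  filter_upwards [hsmall.eventually_le_const one_half_pos, hlinear hd₀ c,
    hlinear (sub_pos.mpr hd₁) (-1 - c)] with k hk hx hxk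
  set x := d * k - c
  replace hx : 0 < x := sub_pos.mpr hx
  replace hxk : x ≤ k + 1 := by linarith
  have hk₁ : (0 : ℝ) < k + 1 := by positivity
  have hpow : |b| * x ^ d ≤ (k + 1) / 2 := calc
    |b| * x ^ d ≤ |b| * ((k : ℝ) + 1) ^ d := by gcongr
    _ = |b| * ((k : ℝ) + 1) ^ (d - 1) * (k + 1) := by
      rw [mul_assoc, ← rpow_add_one hk₁.ne']; ring_nf
    _ ≤ 1 / 2 * (k + 1) := by gcongr
    _ = (k + 1) / 2 := by ring
  have hΓ : Gamma (x + d) ≤ Gamma x * x ^ d := Gamma_add_le_Gamma_mul_rpow hx hd₀.le hd₁.le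
  have hshift : d * ((k + 1 : ℕ) : ℝ) - c = x + d := by push_cast; ring
  have hΓx := Gamma_pos_of_pos hx
  have hΓxd := Gamma_pos_of_pos (add_pos hx hd₀)
  rw [hshift, Real.norm_eq_abs, Real.norm_eq_abs]
  simp only [abs_div, abs_mul, abs_pow, Nat.abs_cast, abs_of_pos hΓx, abs_of_pos hΓxd,
    abs_of_pos hk₁, Nat.factorial_succ, pow_succ, Nat.cast_mul, Nat.cast_succ]
  calc Gamma (x + d) * (|b| ^ k * |b|) / ((k + 1) * k.factorial)
      ≤ Gamma x * x ^ d * |b| * |b| ^ k / ((k + 1) * k.factorial) := by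
        rw [mul_comm (|b| ^ k), ← mul_assoc]; gcongr
    _ = Gamma x * (|b| * x ^ d) * |b| ^ k / ((k + 1) * k.factorial) := by ring
    _ ≤ Gamma x * ((k + 1) / 2) * |b| ^ k / ((k + 1) * k.factorial) := by gcongr
    _ = 1 / 2 * (Gamma x * |b| ^ k / k.factorial) := by field_simp

end Real

/-- The series `∑_{k=0}^∞ Γ((km-3)/n)/k! · T^{-(n-m)k/n}` appearing in the
bracket-series evaluation of the second virial coefficient is summable for
`n > m > 3` and `T > 0`. -/
theorem second_virial_series_summable (n m T : ℝ)
    (hm : 3 < m) (hnm : m < n) (hT : 0 < T) :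
    Summable (fun k : ℕ =>
      (1 / (k.factorial : ℝ)) * Real.Gamma (((k : ℝ) * m - 3) / n) *
        T ^ (-((n - m) * (k : ℝ) / n))) := by
  have hn : 0 < n := by linarith
  have hterm (k : ℕ) : (1 / (k.factorial : ℝ)) * Gamma (((k : ℝ) * m - 3) / n) *
      T ^ (-((n - m) * (k : ℝ) / n)) =
      Gamma (m / n * k - 3 / n) * (T ^ (-((n - m) / n))) ^ k / k.factorial := by
    rw [← rpow_mul_natCast hT.le, show m / n * k - 3 / n = (k * m - 3) / n by ring,
      show -((n - m) / n) * k = -((n - m) * k / n) by ring]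
    ring
  simpa only [hterm] using summable_Gamma_mul_sub_mul_pow_div_factorial
    (div_pos (by linarith) hn) ((div_lt_one hn).mpr hnm) (3 / n) (T ^ (-((n - m) / n)))
end

section
/- Let n, m be real numbers with n > m > 3, let σ > 0, T > 0, and let ε be a real number with ε > 3/n. Then ∫₀^∞ exp(-(1/T)((σ/r)^n - (σ/r)^m)) · r^{2 - nε} dr = (σ^{3-nε}/n) · T^{ε - 3/n} · Σ_{k=0}^∞ (T^{(m-n)k/n}/k!) · Γ((m·k - 3)/n + ε), where Γ is the Euler Gamma function. -/
open Real MeasureTheory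
open Set Filter

lemma key_int (s c q : ℝ) (hs : 0 < s) (hc : 0 < c) (hq : q < -1) :
    IntegrableOn (fun x : ℝ => Real.exp (-c * x ^ (-s)) * x ^ q) (Ioi 0) ∧
    ∫ x in Ioi (0:ℝ), Real.exp (-c * x ^ (-s)) * x ^ q
      = (1/s) * (c ^ ((q+1)/s) * Real.Gamma (-(q+1)/s)) := by
  set β := -(q+1)/s - 1 with hβdef
  have hβ : (-1:ℝ) < β := by
    have : 0 < -(q+1)/s := div_pos (by linarith) hs
    simp only [hβdef]; linarith
  set f : ℝ → ℝ := fun y => y ^ β * Real.exp (-c * y) with hfdef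
  have hf : IntegrableOn f (Ioi 0) := by
    have := integrableOn_rpow_mul_exp_neg_mul_rpow hβ one_pos hc
    simpa [hfdef] using this
  have hsne : (-s : ℝ) ≠ 0 := by linarith
  have heq : ∀ x ∈ Ioi (0:ℝ), (|(-s)| * x ^ ((-s) - 1)) • f (x ^ (-s))
      = s * (Real.exp (-c * x ^ (-s)) * x ^ q) := by
    intro x hx
    have hx0 : (0:ℝ) < x := hx
    have h1 : (x ^ (-s)) ^ β = x ^ ((-s) * β) := (Real.rpow_mul hx0.le _ _).symm
    have h2 : x ^ ((-s) - 1) * x ^ ((-s) * β) = x ^ (((-s) - 1) + (-s) * β) :=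
      (Real.rpow_add hx0 _ _).symm
    have h3 : ((-s) - 1) + (-s) * β = q := by
      rw [hβdef]
      field_simp
      ring
    have habs : |(-s)| = s := by rw [abs_neg, abs_of_pos hs]
    simp only [smul_eq_mul, hfdef, habs, h1]
    rw [show s * (x ^ (-s - 1)) * (x ^ ((-s) * β) * Real.exp (-c * x ^ (-s)))
        = s * (Real.exp (-c * x ^ (-s)) * (x ^ ((-s) - 1) * x ^ ((-s) * β))) by ring,
      h2, h3]
  have hint := (integrableOn_Ioi_comp_rpow_iff f hsne).mpr hf
  have hint2 : IntegrableOn (fun x : ℝ => s * (Real.exp (-c * x ^ (-s)) * x ^ q)) (Ioi 0) :=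
    hint.congr_fun heq measurableSet_Ioi
  have hint3 : IntegrableOn (fun x : ℝ => Real.exp (-c * x ^ (-s)) * x ^ q) (Ioi 0) := by
    have h := hint2.const_mul (1/s)
    have h' : IntegrableOn (fun x : ℝ => (1/s) * (s * (Real.exp (-c * x ^ (-s)) * x ^ q))) (Ioi 0) := h
    refine h'.congr_fun (fun x _ => ?_) measurableSet_Ioi
    field_simp
  refine ⟨hint3, ?_⟩
  have hchg := integral_comp_rpow_Ioi f hsne
  rw [setIntegral_congr_fun measurableSet_Ioi heq] at hchg
  rw [integral_const_mul] at hchg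
  have hfval : ∫ y in Ioi (0:ℝ), f y = c ^ (-(β+1)/1) * (1/1) * Real.Gamma ((β+1)/1) := by
    simpa [hfdef] using integral_rpow_mul_exp_neg_mul_rpow one_pos hβ hc
  have hβ1 : β + 1 = -(q+1)/s := by simp [hβdef]
  rw [hfval, hβ1] at hchg
  have : ∫ x in Ioi (0:ℝ), Real.exp (-c * x ^ (-s)) * x ^ q
      = (1/s) * (c ^ (-(-(q+1)/s)/1) * (1/1) * Real.Gamma ((-(q+1)/s)/1)) := by
    field_simp at hchg ⊢
    linarith [hchg]
  rw [this]
  have h4 : -(-(q+1)/s)/1 = (q+1)/s := by ring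
  have h5 : (-(q+1)/s)/1 = -(q+1)/s := by ring
  rw [h4, h5]
  ring

lemma gamma_shift_le {x α : ℝ} (hx : 0 < x) (hα0 : 0 ≤ α) (hα1 : α ≤ 1) :
    Real.Gamma (x + α) ≤ x ^ α * Real.Gamma x := by
  have hΓx : 0 < Real.Gamma x := Real.Gamma_pos_of_pos hx
  have hΓx1 : 0 < Real.Gamma (x + 1) := Real.Gamma_pos_of_pos (by linarith)
  have hmem : x ∈ Ioi (0:ℝ) := hx
  have hmem1 : x + 1 ∈ Ioi (0:ℝ) := by simp; linarith
  have hconv := Real.convexOn_log_Gamma.2 hmem hmem1 (by linarith : (0:ℝ) ≤ 1 - α)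
    hα0 (by ring)
  have hcomb : (1 - α) • x + α • (x + 1) = x + α := by simp [smul_eq_mul]; ring
  rw [hcomb] at hconv
  simp only [Function.comp_apply, smul_eq_mul] at hconv
  have h1 : Real.Gamma (x + α) = Real.exp (Real.log (Real.Gamma (x + α))) :=
    (Real.exp_log (Real.Gamma_pos_of_pos (by linarith))).symm
  have h2 : Real.exp ((1 - α) * Real.log (Real.Gamma x) + α * Real.log (Real.Gamma (x + 1)))
      = Real.Gamma x ^ (1 - α) * Real.Gamma (x + 1) ^ α := by
    rw [Real.exp_add, Real.rpow_def_of_pos hΓx, Real.rpow_def_of_pos hΓx1]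
    ring_nf
  calc Real.Gamma (x + α) ≤ Real.exp ((1 - α) * Real.log (Real.Gamma x)
        + α * Real.log (Real.Gamma (x + 1))) := by
        rw [h1]; exact Real.exp_le_exp.mpr hconv
    _ = Real.Gamma x ^ (1 - α) * Real.Gamma (x + 1) ^ α := h2
    _ = x ^ α * Real.Gamma x := by
        rw [Real.Gamma_add_one hx.ne', Real.mul_rpow hx.le hΓx.le]
        rw [show Real.Gamma x ^ (1-α) * (x ^ α * Real.Gamma x ^ α)
            = x ^ α * (Real.Gamma x ^ (1-α) * Real.Gamma x ^ α) by ring,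
          ← Real.rpow_add hΓx]
        norm_num


lemma summable_term {ρ α c : ℝ} (hρ : 0 < ρ) (hα0 : 0 < α) (hα1 : α < 1) (hc : 0 < c) :
    Summable (fun k : ℕ => ρ ^ k / (k.factorial : ℝ) * Real.Gamma (α * k + c)) := by
  set a : ℕ → ℝ := fun k => ρ ^ k / (k.factorial : ℝ) * Real.Gamma (α * k + c) with hadef
  have hapos : ∀ k, 0 < a k := by
    intro k
    have : (0:ℝ) < α * k + c := by positivity
    exact mul_pos (div_pos (pow_pos hρ k) (by exact_mod_cast k.factorial_pos))
      (Real.Gamma_pos_of_pos this)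
  apply summable_of_ratio_norm_eventually_le (r := 1/2) (by norm_num)
  have htend : Tendsto (fun k : ℕ => ρ * (α+c) ^ α * ((k:ℝ)+1) ^ (α-1)) atTop (nhds 0) := by
    have h1 : Tendsto (fun x : ℝ => x ^ (-(1-α))) atTop (nhds 0) :=
      tendsto_rpow_neg_atTop (by linarith)
    have h2 : Tendsto (fun k : ℕ => (k:ℝ)+1) atTop atTop :=
      tendsto_atTop_add_const_right atTop 1 tendsto_natCast_atTop_atTop
    have h3 := h1.comp h2
    have h4 : (fun k : ℕ => ((k:ℝ)+1) ^ (α-1)) = (fun x : ℝ => x ^ (-(1-α))) ∘ (fun k : ℕ => (k:ℝ)+1) := by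
      funext k; simp [Function.comp]
    rw [show (0:ℝ) = ρ * (α+c)^α * 0 by ring]
    exact (h4 ▸ h3).const_mul _
  have hev : ∀ᶠ k : ℕ in atTop, ρ * (α+c) ^ α * ((k:ℝ)+1) ^ (α-1) < 1/2 :=
    htend.eventually_lt_const (by norm_num)
  filter_upwards [hev] with k hk
  have hx : (0:ℝ) < α * k + c := by positivity
  have hΓ : Real.Gamma (α * (k+1) + c) ≤ (α * k + c) ^ α * Real.Gamma (α * k + c) := by
    have := gamma_shift_le hx hα0.le hα1.le
    rw [show α * k + c + α = α * (k+1) + c by push_cast; ring] at this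
    exact_mod_cast this
  have hk1 : (0:ℝ) < (k:ℝ) + 1 := by positivity
  have hb : ρ * (α * k + c) ^ α ≤ (1/2) * ((k:ℝ)+1) := by
    have h5 : (α * k + c) ^ α ≤ ((α+c) * ((k:ℝ)+1)) ^ α := by
      apply Real.rpow_le_rpow hx.le _ hα0.le
      nlinarith [Nat.cast_nonneg (α := ℝ) k]
    have h6 : ((α+c) * ((k:ℝ)+1)) ^ α = (α+c) ^ α * (((k:ℝ)+1) ^ (α-1) * ((k:ℝ)+1)) := by
      rw [Real.mul_rpow (by positivity) hk1.le]
      congr 1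
      rw [← Real.rpow_add_one hk1.ne']
      norm_num
    calc ρ * (α * k + c) ^ α ≤ ρ * ((α+c) ^ α * (((k:ℝ)+1) ^ (α-1) * ((k:ℝ)+1))) := by
          rw [← h6]; exact mul_le_mul_of_nonneg_left h5 hρ.le
      _ = (ρ * (α+c) ^ α * ((k:ℝ)+1) ^ (α-1)) * ((k:ℝ)+1) := by ring
      _ ≤ (1/2) * ((k:ℝ)+1) := mul_le_mul_of_nonneg_right hk.le hk1.le
  have key : a (k+1) ≤ (1/2) * a k := by
    have hfact : ((k+1).factorial : ℝ) = ((k:ℝ)+1) * (k.factorial : ℝ) := by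
      rw [Nat.factorial_succ]; push_cast; ring
    have h7 : a (k+1) = (ρ / ((k:ℝ)+1)) * (ρ ^ k / (k.factorial : ℝ)) * Real.Gamma (α * (k+1) + c) := by
      simp only [hadef, pow_succ, hfact]
      push_cast
      field_simp
    have hΓpos : 0 < Real.Gamma (α * k + c) := Real.Gamma_pos_of_pos hx
    have hfk : (0:ℝ) < (k.factorial : ℝ) := by exact_mod_cast k.factorial_pos
    rw [h7]
    calc (ρ / ((k:ℝ)+1)) * (ρ ^ k / (k.factorial : ℝ)) * Real.Gamma (α * (k+1) + c)
        ≤ (ρ / ((k:ℝ)+1)) * (ρ ^ k / (k.factorial : ℝ)) * ((α * k + c) ^ α * Real.Gamma (α * k + c)) := by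
          apply mul_le_mul_of_nonneg_left hΓ
          positivity
      _ = (ρ * (α * k + c) ^ α / ((k:ℝ)+1)) * a k := by simp only [hadef]; ring
      _ ≤ (1/2) * a k := by
          apply mul_le_mul_of_nonneg_right _ (hapos k).le
          rw [div_le_iff₀ hk1]
          linarith [hb]
  rw [Real.norm_of_nonneg (hapos _).le, Real.norm_of_nonneg (hapos _).le]
  exact key


lemma real_exp_tsum (x : ℝ) : Real.exp x = ∑' k : ℕ, x ^ k / (k.factorial : ℝ) := by
  rw [Real.exp_eq_exp_ℝ, NormedSpace.exp_eq_tsum_div]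

/-- Regularized evaluation: for `n > m > 3`, `σ > 0`, `T > 0` and `ε > 3/n`,
`∫₀^∞ exp(-(1/T)((σ/r)^n - (σ/r)^m)) r^{2-nε} dr
  = (σ^{3-nε}/n) T^{ε-3/n} ∑_{k=0}^∞ (T^{(m-n)k/n}/k!) Γ((mk-3)/n + ε)`. -/
theorem second_virial_regularized (n m σ T ε : ℝ)
    (hm : 3 < m) (hnm : m < n) (hσ : 0 < σ) (hT : 0 < T) (hε : 3 / n < ε) :
    ∫ r in Set.Ioi (0 : ℝ),
        Real.exp (-(1 / T) * ((σ / r) ^ n - (σ / r) ^ m)) * r ^ (2 - n * ε)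
      = (σ ^ (3 - n * ε) / n) * T ^ (ε - 3 / n) *
          ∑' k : ℕ, (T ^ ((m - n) * (k : ℝ) / n) / (k.factorial : ℝ)) *
            Real.Gamma ((m * (k : ℝ) - 3) / n + ε) := by
  have hn : (0:ℝ) < n := by linarith
  have hnε : 3 < n * ε := by
    have := (div_lt_iff₀ hn).mp hε; linarith [this]
  set c₁ : ℝ := σ ^ n / T with hc₁def
  set c₂ : ℝ := σ ^ m / T with hc₂def
  have hc₁ : 0 < c₁ := div_pos (rpow_pos_of_pos hσ n) hT
  have hc₂ : 0 < c₂ := div_pos (rpow_pos_of_pos hσ m) hT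
  set f : ℕ → ℝ → ℝ := fun k r =>
    (c₂ ^ k / (k.factorial : ℝ)) * (Real.exp (-c₁ * r ^ (-n)) * r ^ (2 - n*ε - m*(k:ℝ)))
    with hfdef
  -- pointwise expansion
  have hpt : ∀ r ∈ Ioi (0:ℝ),
      Real.exp (-(1 / T) * ((σ / r) ^ n - (σ / r) ^ m)) * r ^ (2 - n * ε)
        = ∑' k : ℕ, f k r := by
    intro r hr
    have hr0 : (0:ℝ) < r := hr
    have hdivn : (σ / r) ^ n = σ ^ n * r ^ (-n) := by
      rw [Real.div_rpow hσ.le hr0.le, Real.rpow_neg hr0.le, div_eq_mul_inv]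
    have hdivm : (σ / r) ^ m = σ ^ m * r ^ (-m) := by
      rw [Real.div_rpow hσ.le hr0.le, Real.rpow_neg hr0.le, div_eq_mul_inv]
    have harg : -(1 / T) * ((σ / r) ^ n - (σ / r) ^ m)
        = -c₁ * r ^ (-n) + c₂ * r ^ (-m) := by
      rw [hdivn, hdivm, hc₁def, hc₂def]; field_simp; ring
    have hfk : ∀ k : ℕ, f k r = (Real.exp (-c₁ * r ^ (-n)) * r ^ (2 - n*ε)) *
        ((c₂ * r ^ (-m)) ^ k / (k.factorial : ℝ)) := by
      intro k
      have h1 : r ^ (2 - n*ε - m*(k:ℝ)) = r ^ (2 - n*ε) * r ^ (-(m*(k:ℝ))) := by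
        rw [← Real.rpow_add hr0]; ring_nf
      have h2 : (r ^ (-m)) ^ k = r ^ (-(m*(k:ℝ))) := by
        rw [← Real.rpow_natCast (r ^ (-m)) k, ← Real.rpow_mul hr0.le]
        ring_nf
      rw [hfdef]
      simp only
      rw [h1, mul_pow, h2]
      ring
    rw [harg, Real.exp_add, real_exp_tsum (c₂ * r ^ (-m)), ← tsum_mul_left, ← tsum_mul_right]
    apply tsum_congr
    intro k
    rw [hfk k]; ring
  -- each term : integrability and value
  have hq : ∀ k : ℕ, (2 - n*ε - m*(k:ℝ)) < -1 := by
    intro k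
    have : (0:ℝ) ≤ m * k := by positivity
    linarith
  have hint : ∀ k : ℕ, IntegrableOn (f k) (Ioi 0) := by
    intro k
    exact ((key_int n c₁ _ hn hc₁ (hq k)).1.const_mul _)
  set t : ℕ → ℝ := fun k => T ^ ((m - n) * (k : ℝ) / n) / (k.factorial : ℝ) *
      Real.Gamma ((m * (k : ℝ) - 3) / n + ε) with htdef
  have hval : ∀ k : ℕ, ∫ r in Ioi (0:ℝ), f k r
      = (σ ^ (3 - n * ε) / n) * T ^ (ε - 3 / n) * t k := by
    intro k
    set q : ℝ := 2 - n*ε - m*(k:ℝ) with hqdef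
    set A : ℝ := (m * (k : ℝ) - 3) / n + ε with hAdef
    have hA : -(q+1)/n = A := by rw [hqdef, hAdef]; field_simp; ring
    have hAq : (q+1)/n = -A := by rw [← hA]; ring
    rw [hfdef]
    simp only
    rw [integral_const_mul, (key_int n c₁ q hn hc₁ (hq k)).2, hA, hAq]
    have e1 : c₁ ^ (-A) = T ^ A * σ ^ (-(n*A)) := by
      rw [hc₁def, Real.div_rpow (rpow_pos_of_pos hσ n).le hT.le,
        ← Real.rpow_mul hσ.le, Real.rpow_neg hT.le]
      rw [show n * -A = -(n*A) by ring]
      field_simp [Real.rpow_neg hT.le]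
    have e2 : c₂ ^ k = σ ^ (m*(k:ℝ)) * T ^ (-(k:ℝ)) := by
      rw [hc₂def, div_pow, ← Real.rpow_natCast (σ ^ m) k, ← Real.rpow_mul hσ.le,
        ← Real.rpow_natCast T k, Real.rpow_neg hT.le, div_eq_mul_inv]
    rw [e1, e2, htdef]
    simp only
    rw [← hAdef]
    have e3 : σ ^ (m*(k:ℝ)) * σ ^ (-(n*A)) = σ ^ (3 - n*ε) := by
      rw [← Real.rpow_add hσ, hAdef]; congr 1; field_simp; ring
    have e4 : T ^ (-(k:ℝ)) * T ^ A = T ^ (ε - 3/n) * T ^ ((m - n) * (k : ℝ) / n) := by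
      rw [← Real.rpow_add hT, ← Real.rpow_add hT, hAdef]; congr 1; field_simp; ring
    calc σ ^ (m * (k:ℝ)) * T ^ (-(k:ℝ)) / (k.factorial:ℝ) *
          (1 / n * (T ^ A * σ ^ (-(n * A)) * Real.Gamma A))
        = (σ ^ (m*(k:ℝ)) * σ ^ (-(n*A))) * (T ^ (-(k:ℝ)) * T ^ A) * Real.Gamma A
          / ((k.factorial:ℝ) * n) := by ring
      _ = σ ^ (3 - n*ε) * (T ^ (ε - 3/n) * T ^ ((m - n) * (k : ℝ) / n)) * Real.Gamma A
          / ((k.factorial:ℝ) * n) := by rw [e3, e4]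
      _ = σ ^ (3 - n * ε) / n * T ^ (ε - 3 / n) *
          (T ^ ((m - n) * (k:ℝ) / n) / (k.factorial:ℝ) * Real.Gamma A) := by ring
  -- summability
  have ht : Summable t := by
    have h := summable_term (ρ := T ^ ((m-n)/n)) (α := m/n) (c := ε - 3/n)
      (rpow_pos_of_pos hT _) (div_pos (by linarith) hn) ((div_lt_one hn).mpr hnm)
      (by linarith)
    apply h.congr
    intro k
    rw [htdef]
    simp only
    congr 1
    · congr 1
      rw [← Real.rpow_natCast (T ^ ((m-n)/n)) k, ← Real.rpow_mul hT.le]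
      congr 1; ring
    · congr 1; field_simp; ring
  -- interchange
  have hnorm : ∀ k : ℕ, ∫ r in Ioi (0:ℝ), ‖f k r‖
      = (σ ^ (3 - n * ε) / n) * T ^ (ε - 3 / n) * t k := by
    intro k
    rw [← hval k]
    apply setIntegral_congr_fun measurableSet_Ioi
    intro r hr
    have hr0 : (0:ℝ) < r := hr
    have : 0 ≤ f k r := by
      rw [hfdef]; simp only
      have := (rpow_pos_of_pos hr0 (2 - n*ε - m*(k:ℝ))).le
      positivity
    exact Real.norm_of_nonneg this
  have hsum_norm : Summable (fun k : ℕ => ∫ r in Ioi (0:ℝ), ‖f k r‖) := by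
    apply Summable.congr ((ht.mul_left ((σ ^ (3 - n * ε) / n) * T ^ (ε - 3 / n))))
    intro k; exact (hnorm k).symm
  have hswap := MeasureTheory.integral_tsum_of_summable_integral_norm
    (μ := volume.restrict (Ioi (0:ℝ))) (F := f) hint hsum_norm
  rw [setIntegral_congr_fun measurableSet_Ioi hpt, ← hswap]
  rw [tsum_congr hval, tsum_mul_left]
end

section
/- Let n, m be real numbers with n > m > 3 and let σ > 0. Then the limit as Λ → ∞ of (2πσ³/n) · Λ^{-3/n} · Σ_{k=0}^∞ (1/k!) Γ((k·m - 3)/n) · Λ^{-(n-m)k/n} is 0, where Γ is the Euler Gamma function. -/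
open Real Filter

/-- The regularizing term vanishes: for `n > m > 3` and `σ > 0`,
`(2πσ³/n) Λ^{-3/n} ∑_{k=0}^∞ Γ((km-3)/n)/k! · Λ^{-(n-m)k/n} → 0` as `Λ → ∞`. -/
theorem second_virial_regulator_vanishes (n m σ : ℝ)
    (hm : 3 < m) (hnm : m < n) (hσ : 0 < σ) :
    Tendsto (fun Λ : ℝ => (2 * π * σ ^ 3 / n) * Λ ^ (-(3 / n)) *
        ∑' k : ℕ, (1 / (k.factorial : ℝ)) * Real.Gamma (((k : ℝ) * m - 3) / n) *
          Λ ^ (-((n - m) * (k : ℝ) / n)))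
      atTop (nhds 0) := by
  have hn : (0 : ℝ) < n := by linarith
  have hm0 : (0 : ℝ) < m := by linarith
  set c : ℝ := (n - m) / n with hc_def
  have hc : 0 < c := div_pos (by linarith) hn
  set a : ℕ → ℝ := fun k => (1 / (k.factorial : ℝ)) * Real.Gamma (((k : ℝ) * m - 3) / n)
    with ha_def
  set b : ℕ → ℝ := fun k => |a k| * (1 / 2 : ℝ) ^ k with hb_def
  -- eventually |a k| ≤ 1
  have ha_ev : ∀ᶠ k : ℕ in atTop, |a k| ≤ 1 := by
    filter_upwards [eventually_ge_atTop ⌈(2 * n + 3) / m⌉₊] with k hk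
    have hk' : (2 * n + 3) / m ≤ (k : ℝ) := le_trans (Nat.le_ceil _) (by exact_mod_cast hk)
    have hkm : 2 * n + 3 ≤ (k : ℝ) * m := by
      rw [div_le_iff₀ hm0] at hk'; linarith
    have h2 : (2 : ℝ) ≤ ((k : ℝ) * m - 3) / n := by
      rw [le_div_iff₀ hn]; linarith
    have hk1 : ((k : ℝ) * m - 3) / n ≤ (k : ℝ) + 1 := by
      rw [div_le_iff₀ hn]
      have hkn : (k : ℝ) * m ≤ (k : ℝ) * n :=
        mul_le_mul_of_nonneg_left (le_of_lt hnm) (Nat.cast_nonneg k)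
      nlinarith
    have hk2 : (2 : ℝ) ≤ (k : ℝ) + 1 := by linarith
    have hmono := Real.Gamma_strictMonoOn_Ici.monotoneOn (a := ((k : ℝ) * m - 3) / n)
      (b := (k : ℝ) + 1) h2 hk2 hk1
    rw [Real.Gamma_nat_eq_factorial] at hmono
    have hΓpos : 0 < Real.Gamma (((k : ℝ) * m - 3) / n) :=
      Real.Gamma_pos_of_pos (by linarith)
    have hfac : (0 : ℝ) < (k.factorial : ℝ) := by positivity
    have : |a k| = Real.Gamma (((k : ℝ) * m - 3) / n) / (k.factorial : ℝ) := by
      rw [ha_def]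
      rw [abs_of_pos (by positivity)]; ring
    rw [this, div_le_one hfac]
    exact hmono
  have hb_sum : Summable b := by
    apply Summable.of_norm_bounded_eventually_nat (g := fun k => (1 / 2 : ℝ) ^ k)
      (summable_geometric_of_lt_one (by norm_num) (by norm_num))
    filter_upwards [ha_ev] with k hk
    have : ‖b k‖ = |a k| * (1 / 2 : ℝ) ^ k := by
      rw [hb_def]; rw [Real.norm_eq_abs, abs_of_nonneg (by positivity)]
    rw [this]
    calc |a k| * (1 / 2 : ℝ) ^ k ≤ 1 * (1 / 2 : ℝ) ^ k := by
          apply mul_le_mul_of_nonneg_right hk (by positivity)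
      _ = (1 / 2 : ℝ) ^ k := one_mul _
  set C : ℝ := ∑' k, b k with hC_def
  set D : ℝ := |2 * π * σ ^ 3 / n| with hD_def
  -- squeeze
  apply squeeze_zero_norm' (a := fun Λ : ℝ => (D * C) * Λ ^ (-(3 / n)))
  · filter_upwards [eventually_ge_atTop (max 1 ((2 : ℝ) ^ (1 / c)))] with Λ hΛ
    have hΛ1 : (1 : ℝ) ≤ Λ := le_trans (le_max_left _ _) hΛ
    have hΛ0 : (0 : ℝ) < Λ := by linarith
    have hΛ2 : (2 : ℝ) ^ (1 / c) ≤ Λ := le_trans (le_max_right _ _) hΛ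
    -- Λ^(-c) ≤ 1/2
    have hr : Λ ^ (-c) ≤ 1 / 2 := by
      have h2c : (2 : ℝ) ≤ Λ ^ c := by
        calc (2 : ℝ) = ((2 : ℝ) ^ (1 / c)) ^ c := by
              rw [← Real.rpow_mul (by norm_num), one_div_mul_cancel (ne_of_gt hc),
                Real.rpow_one]
          _ ≤ Λ ^ c := Real.rpow_le_rpow (by positivity) hΛ2 (le_of_lt hc)
      rw [Real.rpow_neg (le_of_lt hΛ0)]
      rw [inv_le_comm₀ (by positivity) (by norm_num)]
      simpa using h2c
    -- termwise bound
    have hterm : ∀ k : ℕ, ‖a k * Λ ^ (-((n - m) * (k : ℝ) / n))‖ ≤ b k := by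
      intro k
      have hrw : Λ ^ (-((n - m) * (k : ℝ) / n)) = (Λ ^ (-c)) ^ k := by
        rw [← Real.rpow_natCast (Λ ^ (-c)) k, ← Real.rpow_mul (le_of_lt hΛ0)]
        congr 1
        rw [hc_def]; ring
      rw [hrw, norm_mul, hb_def]
      apply mul_le_mul_of_nonneg_left _ (abs_nonneg _)
      rw [Real.norm_eq_abs, abs_of_nonneg (by positivity)]
      exact pow_le_pow_left₀ (by positivity) hr k
    have hsum_bound : ‖∑' k : ℕ, a k * Λ ^ (-((n - m) * (k : ℝ) / n))‖ ≤ C :=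
      tsum_of_norm_bounded hb_sum.hasSum hterm
    have hΛrpow : (0 : ℝ) ≤ Λ ^ (-(3 / n)) := Real.rpow_nonneg (le_of_lt hΛ0) _
    calc ‖(2 * π * σ ^ 3 / n) * Λ ^ (-(3 / n)) *
            ∑' k : ℕ, (1 / (k.factorial : ℝ)) * Real.Gamma (((k : ℝ) * m - 3) / n) *
              Λ ^ (-((n - m) * (k : ℝ) / n))‖
        = D * Λ ^ (-(3 / n)) * ‖∑' k : ℕ, a k * Λ ^ (-((n - m) * (k : ℝ) / n))‖ := by
          rw [norm_mul, norm_mul, Real.norm_eq_abs, Real.norm_eq_abs,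
            abs_of_nonneg hΛrpow, hD_def]
      _ ≤ D * Λ ^ (-(3 / n)) * C := by
          apply mul_le_mul_of_nonneg_left hsum_bound (by positivity)
      _ = (D * C) * Λ ^ (-(3 / n)) := by ring
  · have h3n : 0 < 3 / n := by positivity
    have := (tendsto_rpow_neg_atTop h3n).const_mul (D * C)
    simpa [mul_comm] using this
end

section
/- Let m be a real number with m > 3, let σ > 0 and T > 0, and set n = 2m. Then the second virial coefficient B(T) = -2π ∫₀^∞ [exp(-(1/T)((σ/r)^{2m} - (σ/r)^m)) - 1] r² dr equals -(πσ³/(m·T^{3/(2m)})) · [ Γ(-3/(2m)) · ₁F₁(-3/(2m); 1/2; 1/(4T)) + (Γ(1/2 - 3/(2m))/√T) · ₁F₁(1/2 - 3/(2m); 3/2; 1/(4T)) ]. -/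
open Real MeasureTheory Set Filter

/-- The Pochhammer symbol (rising factorial) `(a)_k = a(a+1)⋯(a+k-1)`. -/
noncomputable def risingFactorial (a : ℝ) (k : ℕ) : ℝ :=
  ∏ i ∈ Finset.range k, (a + i)

/-- The Kummer confluent hypergeometric function
`₁F₁(a;b;x) = ∑_{k=0}^∞ ((a)_k/(b)_k) xᵏ/k!`. -/
noncomputable def kummer (a b x : ℝ) : ℝ :=
  ∑' k : ℕ, (risingFactorial a k / risingFactorial b k) * x ^ k / (k.factorial : ℝ)



lemma rf_succ (a : ℝ) (k : ℕ) : risingFactorial a (k+1) = risingFactorial a k * (a + k) :=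
  Finset.prod_range_succ _ _

lemma rf_ne_zero {a : ℝ} (h : ∀ i : ℕ, a + (i:ℝ) ≠ 0) (k : ℕ) : risingFactorial a k ≠ 0 :=
  Finset.prod_ne_zero_iff.mpr fun i _ => h i

lemma Gamma_add_nat {a : ℝ} (h : ∀ i : ℕ, a + (i:ℝ) ≠ 0) (k : ℕ) :
    Real.Gamma (a + k) = Real.Gamma a * risingFactorial a k := by
  induction k with
  | zero => simp [risingFactorial]
  | succ n ih =>
    have h2 : a + ((n+1 : ℕ) : ℝ) = (a + n) + 1 := by push_cast; ring
    rw [h2, Real.Gamma_add_one (h n), ih, rf_succ]; ring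

lemma fact_even (j : ℕ) :
    (((2*j).factorial : ℕ) : ℝ) = 4^j * (j.factorial : ℝ) * risingFactorial (1/2) j := by
  induction j with
  | zero => simp [risingFactorial]
  | succ n ih =>
    have h2 : 2*(n+1) = (2*n+1)+1 := by ring
    rw [h2, Nat.factorial_succ, Nat.factorial_succ, Nat.factorial_succ, rf_succ]
    push_cast
    rw [ih]
    ring

lemma fact_odd (j : ℕ) :
    (((2*j+1).factorial : ℕ) : ℝ) = 4^j * (j.factorial : ℝ) * risingFactorial (3/2) j := by
  induction j with
  | zero => simp [risingFactorial]
  | succ n ih =>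
    have key : (((2*(n+1)+1).factorial : ℕ) : ℝ)
        = (2*(n:ℝ)+3) * (2*(n:ℝ)+2) * (((2*n+1).factorial : ℕ) : ℝ) := by
      have h2 : 2*(n+1)+1 = (2*n+1)+1+1 := by ring
      rw [h2, Nat.factorial_succ, Nat.factorial_succ]
      push_cast; ring
    rw [key, ih, rf_succ, Nat.factorial_succ]
    push_cast; ring

lemma tendsto_linear_ratio (α β : ℝ) :
    Filter.Tendsto (fun j : ℕ => (α + j)/(β + j)) atTop (nhds 1) := by
  have hb : Filter.Tendsto (fun j : ℕ => β + (j:ℝ)) atTop atTop :=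
    tendsto_atTop_add_const_left _ β tendsto_natCast_atTop_atTop
  have h0 : Filter.Tendsto (fun j : ℕ => (α - β)/(β + (j:ℝ))) atTop (nhds 0) :=
    tendsto_const_nhds.div_atTop hb
  have h1 := h0.const_add 1
  rw [add_zero] at h1
  apply h1.congr'
  filter_upwards [hb.eventually_gt_atTop 0] with j hj
  field_simp
  ring



lemma summable_A {α β x : ℝ} (hα : ∀ i : ℕ, α + (i:ℝ) ≠ 0) (hβ : ∀ i : ℕ, β + (i:ℝ) ≠ 0)
    (hx : x ≠ 0) :
    Summable (fun j : ℕ =>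
      ((j:ℝ)+1) * |risingFactorial α j / risingFactorial β j| * |x| ^ j / (j.factorial : ℝ)) := by
  set F : ℕ → ℝ := fun j =>
      ((j:ℝ)+1) * |risingFactorial α j / risingFactorial β j| * |x| ^ j / (j.factorial : ℝ)
    with hF
  have hFpos : ∀ j, 0 < F j := by
    intro j
    have h1 : risingFactorial α j ≠ 0 := rf_ne_zero hα j
    have h2 : risingFactorial β j ≠ 0 := rf_ne_zero hβ j
    have h3 : (0:ℝ) < |risingFactorial α j / risingFactorial β j| :=
      abs_pos.mpr (div_ne_zero h1 h2)
    have h4 : (0:ℝ) < |x| ^ j := pow_pos (abs_pos.mpr hx) j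
    have h5 : (0:ℝ) < (j.factorial : ℝ) := by positivity
    have h6 : (0:ℝ) < (j:ℝ)+1 := by positivity
    rw [hF]
    positivity
  have key : ∀ j : ℕ, F (j+1) / F j
      = ((2+(j:ℝ))/(1+(j:ℝ))) * |(α+(j:ℝ))/(β+(j:ℝ))| * (|x|/(1+(j:ℝ))) := by
    intro j
    have h1 : risingFactorial α j ≠ 0 := rf_ne_zero hα j
    have h2 : risingFactorial β j ≠ 0 := rf_ne_zero hβ j
    have h5 : ((j.factorial : ℕ) : ℝ) ≠ 0 := by positivity
    have h6 : ((j:ℝ)+1) ≠ 0 := by positivity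
    have h1' : |risingFactorial α j| ≠ 0 := abs_ne_zero.mpr h1
    have h2' : |risingFactorial β j| ≠ 0 := abs_ne_zero.mpr h2
    have h7 : |β + (j:ℝ)| ≠ 0 := abs_ne_zero.mpr (hβ j)
    simp only [hF, rf_succ, pow_succ, Nat.factorial_succ, abs_mul, abs_div]
    push_cast
    field_simp
    ring
  apply summable_of_ratio_test_tendsto_lt_one (l := 0) zero_lt_one
    (Filter.Eventually.of_forall fun j => (hFpos j).ne')
  have t1 := tendsto_linear_ratio 2 1
  have t2 : Filter.Tendsto (fun j : ℕ => |(α+(j:ℝ))/(β+(j:ℝ))|) atTop (nhds 1) := by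
    have := (tendsto_linear_ratio α β).abs
    simpa using this
  have t3 : Filter.Tendsto (fun j : ℕ => |x|/(1+(j:ℝ))) atTop (nhds 0) :=
    tendsto_const_nhds.div_atTop
      (tendsto_atTop_add_const_left _ 1 tendsto_natCast_atTop_atTop)
  have tall := (t1.mul t2).mul t3
  rw [mul_zero] at tall
  apply tall.congr
  intro j
  rw [← key j, Real.norm_eq_abs, Real.norm_eq_abs, abs_of_pos (hFpos (j+1)), abs_of_pos (hFpos j)]

lemma summable_of_le_A {α β x : ℝ} (hα : ∀ i : ℕ, α + (i:ℝ) ≠ 0)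
    (hβ : ∀ i : ℕ, β + (i:ℝ) ≠ 0) (hx : x ≠ 0) (g : ℕ → ℝ) (C : ℝ)
    (hg : ∀ j : ℕ, |g j| ≤ C * (((j:ℝ)+1) * |risingFactorial α j / risingFactorial β j|
      * |x| ^ j / (j.factorial : ℝ))) : Summable g := by
  apply Summable.of_norm_bounded ((summable_A hα hβ hx).mul_left C)
  intro j
  simpa using hg j

lemma G_int {T p : ℝ} (hT : 0 < T) (hp : -1 < p) :
    IntegrableOn (fun t : ℝ => t ^ p * Real.exp (-t^2 / T)) (Ioi 0) := by
  have h := integrableOn_rpow_mul_exp_neg_mul_rpow hp two_pos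
    (show (0:ℝ) < 1/T by positivity)
  apply h.congr_fun _ measurableSet_Ioi
  intro t ht
  have h2 : t ^ (2:ℝ) = t^2 := by
    rw [show (2:ℝ) = ((2:ℕ):ℝ) by norm_num, Real.rpow_natCast]
  show t ^ p * rexp (-(1 / T) * t ^ (2:ℝ)) = t ^ p * rexp (-t ^ 2 / T)
  rw [h2]
  ring_nf

lemma G_eval {T p : ℝ} (hT : 0 < T) (hp : -1 < p) :
    ∫ t in Ioi (0:ℝ), t ^ p * Real.exp (-t^2 / T)
      = (1/2) * T ^ ((p+1)/2) * Real.Gamma ((p+1)/2) := by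
  have h := integral_rpow_mul_exp_neg_mul_rpow two_pos hp (show (0:ℝ) < 1/T by positivity)
  have hcongr : ∫ t in Ioi (0:ℝ), t ^ p * Real.exp (-t^2 / T)
      = ∫ x in Ioi (0:ℝ), x ^ p * Real.exp (-(1/T) * x ^ (2:ℝ)) := by
    refine setIntegral_congr_fun measurableSet_Ioi fun t ht => ?_
    have h2 : t ^ (2:ℝ) = t^2 := by
      rw [show (2:ℝ) = ((2:ℕ):ℝ) by norm_num, Real.rpow_natCast]
    rw [h2]
    ring_nf
  have hpow : (1/T) ^ (-(p+1)/2) = T ^ ((p+1)/2) := by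
    rw [one_div, ← Real.rpow_neg_one T, ← Real.rpow_mul hT.le]
    congr 1; ring
  rw [hcongr, h, hpow]; ring

section Hyps
variable {T s : ℝ}

lemma ha_ne (hs0 : 0 < s) (hs1 : s < 1) : ∀ i : ℕ, -(s/2) + (i:ℝ) ≠ 0 := by
  intro i
  rcases Nat.eq_zero_or_pos i with h | h
  · subst h; simp; linarith
  · have : (1:ℝ) ≤ (i:ℝ) := by exact_mod_cast h
    have : (0:ℝ) < -(s/2) + i := by linarith
    linarith

lemma hb_ne (hs0 : 0 < s) (hs1 : s < 1) : ∀ i : ℕ, (1-s)/2 + (i:ℝ) ≠ 0 := by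
  intro i
  have h1 : (0:ℝ) < (1-s)/2 := by linarith
  have h2 : (0:ℝ) ≤ (i:ℝ) := Nat.cast_nonneg i
  positivity

lemma hhalf_ne : ∀ i : ℕ, (1/2:ℝ) + (i:ℝ) ≠ 0 := by
  intro i; have : (0:ℝ) ≤ (i:ℝ) := Nat.cast_nonneg i; positivity

lemma h32_ne : ∀ i : ℕ, (3/2:ℝ) + (i:ℝ) ≠ 0 := by
  intro i; have : (0:ℝ) ≤ (i:ℝ) := Nat.cast_nonneg i; positivity

lemma summable_Sa (hT : 0 < T) (hs0 : 0 < s) (hs1 : s < 1) :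
    Summable (fun j : ℕ => (risingFactorial (-(s/2)) j / risingFactorial (1/2) j)
      * (1/(4*T)) ^ j / (j.factorial : ℝ)) := by
  have hx : (1/(4*T)) ≠ 0 := by positivity
  apply summable_of_le_A (ha_ne hs0 hs1) hhalf_ne hx _ 1
  intro j
  rw [one_mul]
  have h1 : |risingFactorial (-(s/2)) j / risingFactorial (1/2) j
      * (1/(4*T)) ^ j / (j.factorial : ℝ)|
      = |risingFactorial (-(s/2)) j / risingFactorial (1/2) j| * |(1/(4*T))| ^ j
        / (j.factorial : ℝ) := by
    rw [abs_div, abs_mul, abs_pow, Nat.abs_cast]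
  have h2 : (0:ℝ) ≤ |risingFactorial (-(s/2)) j / risingFactorial (1/2) j| * |(1/(4*T))| ^ j
        / (j.factorial : ℝ) := by positivity
  have h3 : (1:ℝ) ≤ (j:ℝ)+1 := by
    have := Nat.cast_nonneg (α := ℝ) j; linarith
  rw [h1, show ((j:ℝ)+1) * |risingFactorial (-(s/2)) j / risingFactorial (1/2) j|
      * |(1/(4*T))| ^ j / (j.factorial : ℝ)
      = ((j:ℝ)+1) * (|risingFactorial (-(s/2)) j / risingFactorial (1/2) j| * |(1/(4*T))| ^ j
      / (j.factorial : ℝ)) from by ring]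
  exact le_mul_of_one_le_left h2 h3

lemma summable_Sb (hT : 0 < T) (hs0 : 0 < s) (hs1 : s < 1) :
    Summable (fun j : ℕ => (risingFactorial ((1-s)/2) j / risingFactorial (3/2) j)
      * (1/(4*T)) ^ j / (j.factorial : ℝ)) := by
  have hx : (1/(4*T)) ≠ 0 := by positivity
  apply summable_of_le_A (hb_ne hs0 hs1) h32_ne hx _ 1
  intro j
  rw [one_mul]
  have h1 : |risingFactorial ((1-s)/2) j / risingFactorial (3/2) j
      * (1/(4*T)) ^ j / (j.factorial : ℝ)|
      = |risingFactorial ((1-s)/2) j / risingFactorial (3/2) j| * |(1/(4*T))| ^ j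
        / (j.factorial : ℝ) := by
    rw [abs_div, abs_mul, abs_pow, Nat.abs_cast]
  have h2 : (0:ℝ) ≤ |risingFactorial ((1-s)/2) j / risingFactorial (3/2) j| * |(1/(4*T))| ^ j
        / (j.factorial : ℝ) := by positivity
  have h3 : (1:ℝ) ≤ (j:ℝ)+1 := by
    have := Nat.cast_nonneg (α := ℝ) j; linarith
  rw [h1, show ((j:ℝ)+1) * |risingFactorial ((1-s)/2) j / risingFactorial (3/2) j|
      * |(1/(4*T))| ^ j / (j.factorial : ℝ)
      = ((j:ℝ)+1) * (|risingFactorial ((1-s)/2) j / risingFactorial (3/2) j| * |(1/(4*T))| ^ j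
      / (j.factorial : ℝ)) from by ring]
  exact le_mul_of_one_le_left h2 h3

end Hyps

section CSeries
variable {T s : ℝ}

lemma c_even (hT : 0 < T) (hs0 : 0 < s) (hs1 : s < 1) (j : ℕ) :
    Real.Gamma ((((2*j:ℕ):ℝ)-s)/2) * T ^ (-((((2*j:ℕ):ℝ)+s)/2)) / (((2*j).factorial : ℕ) : ℝ)
      = (T ^ (-(s/2)) * Real.Gamma (-(s/2))) *
        ((risingFactorial (-(s/2)) j / risingFactorial (1/2) j) * (1/(4*T)) ^ j
          / (j.factorial : ℝ)) := by
  have hTne : T ≠ 0 := hT.ne'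
  have e1 : ((((2*j:ℕ)):ℝ)-s)/2 = -(s/2) + (j:ℝ) := by push_cast; ring
  have e2 : T ^ (-((((2*j:ℕ):ℝ)+s)/2)) = T ^ (-(s/2)) * ((T:ℝ)^j)⁻¹ := by
    rw [← Real.rpow_natCast T j, ← Real.rpow_neg hT.le, ← Real.rpow_add hT]
    congr 1; push_cast; ring
  rw [e1, Gamma_add_nat (ha_ne hs0 hs1) j, e2, fact_even j]
  have hrf : risingFactorial (1/2) j ≠ 0 := rf_ne_zero hhalf_ne j
  have hfac : (j.factorial : ℝ) ≠ 0 := by positivity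
  have h4 : (4:ℝ)^j ≠ 0 := by positivity
  have hTj : (T:ℝ)^j ≠ 0 := pow_ne_zero j hTne
  field_simp
  have e : T ^ j * T⁻¹ ^ j * (1 / 4 : ℝ) ^ j * 4 ^ j = 1 := by
    rw [← mul_pow, ← mul_pow, ← mul_pow, mul_inv_cancel₀ hTne]; norm_num
  linear_combination (-(Gamma (-(s / 2)) * risingFactorial (-(s / 2)) j)) * e

lemma c_odd (hT : 0 < T) (hs0 : 0 < s) (hs1 : s < 1) (j : ℕ) :
    Real.Gamma ((((2*j+1:ℕ):ℝ)-s)/2) * T ^ (-((((2*j+1:ℕ):ℝ)+s)/2))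
        / (((2*j+1).factorial : ℕ) : ℝ)
      = (T ^ (-(s/2)) * (Real.Gamma ((1-s)/2) / Real.sqrt T)) *
        ((risingFactorial ((1-s)/2) j / risingFactorial (3/2) j) * (1/(4*T)) ^ j
          / (j.factorial : ℝ)) := by
  have hTne : T ≠ 0 := hT.ne'
  have e1 : ((((2*j+1:ℕ)):ℝ)-s)/2 = (1-s)/2 + (j:ℝ) := by push_cast; ring
  have e2 : T ^ (-((((2*j+1:ℕ):ℝ)+s)/2)) = T ^ (-(s/2)) * (Real.sqrt T)⁻¹ * ((T:ℝ)^j)⁻¹ := by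
    rw [Real.sqrt_eq_rpow, ← Real.rpow_neg hT.le, ← Real.rpow_natCast T j,
      ← Real.rpow_neg hT.le, ← Real.rpow_add hT, ← Real.rpow_add hT]
    congr 1; push_cast; ring
  rw [e1, Gamma_add_nat (hb_ne hs0 hs1) j, e2, fact_odd j]
  have hrf : risingFactorial (3/2) j ≠ 0 := rf_ne_zero h32_ne j
  have hfac : (j.factorial : ℝ) ≠ 0 := by positivity
  have h4 : (4:ℝ)^j ≠ 0 := by positivity
  have hTj : (T:ℝ)^j ≠ 0 := pow_ne_zero j hTne
  have hsq : Real.sqrt T ≠ 0 := by positivity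
  field_simp
  have e : T ^ j * T⁻¹ ^ j * (1 / 4 : ℝ) ^ j * 4 ^ j = 1 := by
    rw [← mul_pow, ← mul_pow, ← mul_pow, mul_inv_cancel₀ hTne]; norm_num
  linear_combination (-(Gamma ((1 - s) / 2) * risingFactorial ((1 - s) / 2) j)) * e

lemma hasSum_c (hT : 0 < T) (hs0 : 0 < s) (hs1 : s < 1) :
    HasSum (fun k : ℕ =>
        Real.Gamma (((k:ℝ)-s)/2) * T ^ (-(((k:ℝ)+s)/2)) / (k.factorial : ℝ))
      (T ^ (-(s/2)) * (Real.Gamma (-(s/2)) * kummer (-(s/2)) (1/2) (1/(4*T)) +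
        Real.Gamma ((1-s)/2) / Real.sqrt T * kummer ((1-s)/2) (3/2) (1/(4*T)))) := by
  set F : ℕ → ℝ := fun k =>
    Real.Gamma (((k:ℝ)-s)/2) * T ^ (-(((k:ℝ)+s)/2)) / (k.factorial : ℝ) with hF
  have hkA : HasSum (fun j : ℕ => (risingFactorial (-(s/2)) j / risingFactorial (1/2) j)
      * (1/(4*T)) ^ j / (j.factorial : ℝ)) (kummer (-(s/2)) (1/2) (1/(4*T))) :=
    (summable_Sa hT hs0 hs1).hasSum
  have hkB : HasSum (fun j : ℕ => (risingFactorial ((1-s)/2) j / risingFactorial (3/2) j)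
      * (1/(4*T)) ^ j / (j.factorial : ℝ)) (kummer ((1-s)/2) (3/2) (1/(4*T))) :=
    (summable_Sb hT hs0 hs1).hasSum
  have he : HasSum (fun j : ℕ => F (2*j))
      ((T ^ (-(s/2)) * Real.Gamma (-(s/2))) * kummer (-(s/2)) (1/2) (1/(4*T))) := by
    have h2 := hkA.mul_left (T ^ (-(s/2)) * Real.Gamma (-(s/2)))
    have hfe : (fun j : ℕ => F (2*j)) = fun j : ℕ =>
        (T ^ (-(s/2)) * Real.Gamma (-(s/2))) *
          ((risingFactorial (-(s/2)) j / risingFactorial (1/2) j) * (1/(4*T)) ^ j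
            / (j.factorial : ℝ)) := by
      funext j
      exact c_even hT hs0 hs1 j
    rw [hfe]
    exact h2
  have ho : HasSum (fun j : ℕ => F (2*j+1))
      ((T ^ (-(s/2)) * (Real.Gamma ((1-s)/2) / Real.sqrt T)) *
        kummer ((1-s)/2) (3/2) (1/(4*T))) := by
    have h2 := hkB.mul_left (T ^ (-(s/2)) * (Real.Gamma ((1-s)/2) / Real.sqrt T))
    have hfe : (fun j : ℕ => F (2*j+1)) = fun j : ℕ =>
        (T ^ (-(s/2)) * (Real.Gamma ((1-s)/2) / Real.sqrt T)) *
          ((risingFactorial ((1-s)/2) j / risingFactorial (3/2) j) * (1/(4*T)) ^ j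
            / (j.factorial : ℝ)) := by
      funext j
      exact c_odd hT hs0 hs1 j
    rw [hfe]
    exact h2
  have hfinal := he.even_add_odd ho
  have : (T ^ (-(s/2)) * Real.Gamma (-(s/2))) * kummer (-(s/2)) (1/2) (1/(4*T)) +
      (T ^ (-(s/2)) * (Real.Gamma ((1-s)/2) / Real.sqrt T)) * kummer ((1-s)/2) (3/2) (1/(4*T))
      = T ^ (-(s/2)) * (Real.Gamma (-(s/2)) * kummer (-(s/2)) (1/2) (1/(4*T)) +
        Real.Gamma ((1-s)/2) / Real.sqrt T * kummer ((1-s)/2) (3/2) (1/(4*T))) := by ring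
  rw [this] at hfinal
  exact hfinal

end CSeries

lemma abs_S (α β x : ℝ) (j : ℕ) :
    |(risingFactorial α j / risingFactorial β j) * x ^ j / (j.factorial : ℝ)|
      = |risingFactorial α j / risingFactorial β j| * |x| ^ j / (j.factorial : ℝ) := by
  rw [abs_div, abs_mul, abs_pow, Nat.abs_cast]

lemma summable_weighted_S (α β x c : ℝ) (hα : ∀ i : ℕ, α + (i:ℝ) ≠ 0)
    (hβ : ∀ i : ℕ, β + (i:ℝ) ≠ 0) (hx : x ≠ 0) (w : ℕ → ℝ)
    (hw : ∀ j : ℕ, |w j| ≤ 2*((j:ℝ)+1)) :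
    Summable (fun j : ℕ => w j * ((risingFactorial α j / risingFactorial β j) * x ^ j
      / (j.factorial : ℝ))) := by
  apply summable_of_le_A hα hβ hx _ 2
  intro j
  rw [abs_mul, abs_S]
  have hP : (0:ℝ) ≤ |risingFactorial α j / risingFactorial β j| * |x| ^ j
      / (j.factorial : ℝ) := by positivity
  calc |w j| * (|risingFactorial α j / risingFactorial β j| * |x| ^ j / (j.factorial : ℝ))
      ≤ (2*((j:ℝ)+1)) * (|risingFactorial α j / risingFactorial β j| * |x| ^ j
        / (j.factorial : ℝ)) := mul_le_mul_of_nonneg_right (hw j) hP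
    _ = 2 * (((j:ℝ)+1) * |risingFactorial α j / risingFactorial β j| * |x| ^ j
        / (j.factorial : ℝ)) := by ring

section CSeries2
variable {T s : ℝ}

lemma summable_kc (hT : 0 < T) (hs0 : 0 < s) (hs1 : s < 1) :
    Summable (fun k : ℕ => (k:ℝ) *
      (Real.Gamma (((k:ℝ)-s)/2) * T ^ (-(((k:ℝ)+s)/2)) / (k.factorial : ℝ))) := by
  have hx : (1/(4*T)) ≠ 0 := by positivity
  apply Summable.even_add_odd
  · have hfe : (fun j : ℕ => ((2*j:ℕ):ℝ) *
        (Real.Gamma ((((2*j:ℕ):ℝ)-s)/2) * T ^ (-((((2*j:ℕ):ℝ)+s)/2))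
          / (((2*j).factorial : ℕ) : ℝ)))
        = fun j : ℕ => (((2*j:ℕ):ℝ) * (T ^ (-(s/2)) * Real.Gamma (-(s/2)))) *
          ((risingFactorial (-(s/2)) j / risingFactorial (1/2) j) * (1/(4*T)) ^ j
            / (j.factorial : ℝ)) := by
      funext j
      rw [c_even hT hs0 hs1 j]
      ring
    rw [hfe]
    have hs2 := (summable_weighted_S (-(s/2)) (1/2) (1/(4*T)) 1 (ha_ne hs0 hs1) hhalf_ne hx
      (fun j => ((2*j:ℕ):ℝ)) ?_).mul_right (T ^ (-(s/2)) * Real.Gamma (-(s/2)))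
    · apply hs2.congr
      intro j
      push_cast
      ring
    · intro j
      rw [Nat.abs_cast]
      push_cast
      linarith [Nat.cast_nonneg (α := ℝ) j]
  · have hfe : (fun j : ℕ => ((2*j+1:ℕ):ℝ) *
        (Real.Gamma ((((2*j+1:ℕ):ℝ)-s)/2) * T ^ (-((((2*j+1:ℕ):ℝ)+s)/2))
          / (((2*j+1).factorial : ℕ) : ℝ)))
        = fun j : ℕ => (((2*j+1:ℕ):ℝ) *
            (T ^ (-(s/2)) * (Real.Gamma ((1-s)/2) / Real.sqrt T))) *
          ((risingFactorial ((1-s)/2) j / risingFactorial (3/2) j) * (1/(4*T)) ^ j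
            / (j.factorial : ℝ)) := by
      funext j
      rw [c_odd hT hs0 hs1 j]
      ring
    rw [hfe]
    have hs2 := (summable_weighted_S ((1-s)/2) (3/2) (1/(4*T)) 1 (hb_ne hs0 hs1) h32_ne hx
      (fun j => ((2*j+1:ℕ):ℝ)) ?_).mul_right
        (T ^ (-(s/2)) * (Real.Gamma ((1-s)/2) / Real.sqrt T))
    · apply hs2.congr
      intro j
      push_cast
      ring
    · intro j
      rw [Nat.abs_cast]
      push_cast
      linarith [Nat.cast_nonneg (α := ℝ) j]

end CSeries2

section CSeries3
variable {T s : ℝ}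

lemma hasSum_e (hT : 0 < T) (hs0 : 0 < s) (hs1 : s < 1) :
    HasSum (fun k : ℕ =>
      (1/(2*s)) * (((k:ℝ)+1) *
        (Real.Gamma ((((k:ℝ)+1)-s)/2) * T ^ (-((((k:ℝ)+1)+s)/2)) / (((k+1).factorial : ℕ) : ℝ)))
      - (1/(2*s)) * (((k:ℝ)-s) *
        (Real.Gamma (((k:ℝ)-s)/2) * T ^ (-(((k:ℝ)+s)/2)) / (k.factorial : ℝ))))
      ((T ^ (-(s/2)) * (Real.Gamma (-(s/2)) * kummer (-(s/2)) (1/2) (1/(4*T)) +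
        Real.Gamma ((1-s)/2) / Real.sqrt T * kummer ((1-s)/2) (3/2) (1/(4*T)))) / 2) := by
  set C : ℝ := T ^ (-(s/2)) * (Real.Gamma (-(s/2)) * kummer (-(s/2)) (1/2) (1/(4*T)) +
        Real.Gamma ((1-s)/2) / Real.sqrt T * kummer ((1-s)/2) (3/2) (1/(4*T))) with hC
  have hc := hasSum_c hT hs0 hs1
  have hkcS := summable_kc hT hs0 hs1
  set g : ℕ → ℝ := fun k => (k:ℝ) *
      (Real.Gamma (((k:ℝ)-s)/2) * T ^ (-(((k:ℝ)+s)/2)) / (k.factorial : ℝ)) with hg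
  set A : ℝ := ∑' k : ℕ, g k with hA
  have hkc : HasSum g A := hkcS.hasSum
  have h1 : HasSum (fun k : ℕ => ((k:ℝ)+1) *
      (Real.Gamma ((((k:ℝ)+1)-s)/2) * T ^ (-((((k:ℝ)+1)+s)/2))
        / (((k+1).factorial : ℕ) : ℝ))) A := by
    have h2 : HasSum (fun k : ℕ => g (k+1)) A := by
      refine (hasSum_nat_add_iff 1).mpr ?_
      simpa [hg] using hkc
    have hfe : (fun k : ℕ => g (k+1)) = fun k : ℕ => ((k:ℝ)+1) *
        (Real.Gamma ((((k:ℝ)+1)-s)/2) * T ^ (-((((k:ℝ)+1)+s)/2))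
          / (((k+1).factorial : ℕ) : ℝ)) := by
      funext k
      simp only [hg]
      push_cast
      ring_nf
    rw [← hfe]
    exact h2
  have h2 : HasSum (fun k : ℕ => ((k:ℝ)-s) *
      (Real.Gamma (((k:ℝ)-s)/2) * T ^ (-(((k:ℝ)+s)/2)) / (k.factorial : ℝ))) (A - s*C) := by
    have h3 := hkc.sub (hc.mul_left s)
    have hfe : (fun k : ℕ => g k - s * (Real.Gamma (((k:ℝ)-s)/2) * T ^ (-(((k:ℝ)+s)/2))
        / (k.factorial : ℝ))) = fun k : ℕ => ((k:ℝ)-s) *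
        (Real.Gamma (((k:ℝ)-s)/2) * T ^ (-(((k:ℝ)+s)/2)) / (k.factorial : ℝ)) := by
      funext k
      simp only [hg]
      ring
    rw [← hfe]
    exact h3
  have hfin := (h1.mul_left (1/(2*s))).sub (h2.mul_left (1/(2*s)))
  have hval : (1/(2*s)) * A - (1/(2*s)) * (A - s*C) = C/2 := by
    field_simp
    ring
  rw [hval] at hfin
  exact hfin

end CSeries3

section Ident
variable {T s : ℝ}

lemma half_ne (hs0 : 0 < s) (hs1 : s < 1) (k : ℕ) : ((k:ℝ)-s)/2 ≠ 0 := by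
  rcases Nat.eq_zero_or_pos k with h | h
  · subst h; simp; intro h'; linarith
  · have : (1:ℝ) ≤ (k:ℝ) := by exact_mod_cast h
    intro h'
    have : (k:ℝ) = s := by linarith
    linarith

lemma e_ident (hT : 0 < T) (hs0 : 0 < s) (hs1 : s < 1) (k : ℕ) :
    (1/(s*T)) * ((((T:ℝ)^k * (k.factorial : ℝ))⁻¹) *
      ((1/2) * T ^ ((((k:ℝ)-s)+1)/2) * Real.Gamma ((((k:ℝ)-s)+1)/2)
        - 2 * ((1/2) * T ^ (((((k:ℝ)+1)-s)+1)/2) * Real.Gamma (((((k:ℝ)+1)-s)+1)/2))))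
    = (1/(2*s)) * (((k:ℝ)+1) *
        (Real.Gamma ((((k:ℝ)+1)-s)/2) * T ^ (-((((k:ℝ)+1)+s)/2)) / (((k+1).factorial : ℕ) : ℝ)))
      - (1/(2*s)) * (((k:ℝ)-s) *
        (Real.Gamma (((k:ℝ)-s)/2) * T ^ (-(((k:ℝ)+s)/2)) / (k.factorial : ℝ))) := by
  have hTne : T ≠ 0 := hT.ne'
  have hg1 : ((((k:ℝ)-s)+1)/2) = (((k:ℝ)+1)-s)/2 := by ring
  have hg2 : Real.Gamma (((((k:ℝ)+1)-s)+1)/2) = (((k:ℝ)-s)/2) * Real.Gamma (((k:ℝ)-s)/2) := by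
    rw [show (((((k:ℝ)+1)-s)+1)/2) = ((k:ℝ)-s)/2 + 1 by ring,
      Real.Gamma_add_one (half_ne hs0 hs1 k)]
  have hpow1 : T ^ ((((k:ℝ)-s)+1)/2) = T ^ (-((((k:ℝ)+1)+s)/2)) * T^k * T := by
    rw [show (((k:ℝ)-s)+1)/2 = -((((k:ℝ)+1)+s)/2) + ((k:ℝ) + 1) by ring,
      Real.rpow_add hT, Real.rpow_add hT, Real.rpow_one, Real.rpow_natCast]
    ring
  have hpow2 : T ^ (((((k:ℝ)+1)-s)+1)/2) = T ^ (-(((k:ℝ)+s)/2)) * T^k * T := by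
    rw [show ((((k:ℝ)+1)-s)+1)/2 = -(((k:ℝ)+s)/2) + ((k:ℝ) + 1) by ring,
      Real.rpow_add hT, Real.rpow_add hT, Real.rpow_one, Real.rpow_natCast]
    ring
  have hfac : (((k+1).factorial : ℕ) : ℝ) = ((k:ℝ)+1) * (k.factorial : ℝ) := by
    rw [Nat.factorial_succ]; push_cast; ring
  rw [hg2, hpow1, hpow2, hfac, hg1]
  have h1 : (k.factorial : ℝ) ≠ 0 := by positivity
  have h2 : (T:ℝ)^k ≠ 0 := pow_ne_zero k hTne
  have h3 : ((k:ℝ)+1) ≠ 0 := by positivity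
  field_simp

lemma h_ident (hT : 0 < T) (hs0 : 0 < s) (hs1 : s < 1) (k : ℕ) :
    (((T:ℝ)^k * (k.factorial : ℝ))⁻¹) *
      ((1/2) * T ^ ((((k:ℝ)-s)+1)/2) * Real.Gamma ((((k:ℝ)-s)+1)/2)
        + 2 * ((1/2) * T ^ (((((k:ℝ)+1)-s)+1)/2) * Real.Gamma (((((k:ℝ)+1)-s)+1)/2)))
    = (T/2) * (((k:ℝ)+1) *
        (Real.Gamma ((((k:ℝ)+1)-s)/2) * T ^ (-((((k:ℝ)+1)+s)/2)) / (((k+1).factorial : ℕ) : ℝ)))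
      + (T/2) * (((k:ℝ)-s) *
        (Real.Gamma (((k:ℝ)-s)/2) * T ^ (-(((k:ℝ)+s)/2)) / (k.factorial : ℝ))) := by
  have hTne : T ≠ 0 := hT.ne'
  have hg1 : ((((k:ℝ)-s)+1)/2) = (((k:ℝ)+1)-s)/2 := by ring
  have hg2 : Real.Gamma (((((k:ℝ)+1)-s)+1)/2) = (((k:ℝ)-s)/2) * Real.Gamma (((k:ℝ)-s)/2) := by
    rw [show (((((k:ℝ)+1)-s)+1)/2) = ((k:ℝ)-s)/2 + 1 by ring,
      Real.Gamma_add_one (half_ne hs0 hs1 k)]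
  have hpow1 : T ^ ((((k:ℝ)-s)+1)/2) = T ^ (-((((k:ℝ)+1)+s)/2)) * T^k * T := by
    rw [show (((k:ℝ)-s)+1)/2 = -((((k:ℝ)+1)+s)/2) + ((k:ℝ) + 1) by ring,
      Real.rpow_add hT, Real.rpow_add hT, Real.rpow_one, Real.rpow_natCast]
    ring
  have hpow2 : T ^ (((((k:ℝ)+1)-s)+1)/2) = T ^ (-(((k:ℝ)+s)/2)) * T^k * T := by
    rw [show ((((k:ℝ)+1)-s)+1)/2 = -(((k:ℝ)+s)/2) + ((k:ℝ) + 1) by ring,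
      Real.rpow_add hT, Real.rpow_add hT, Real.rpow_one, Real.rpow_natCast]
    ring
  have hfac : (((k+1).factorial : ℕ) : ℝ) = ((k:ℝ)+1) * (k.factorial : ℝ) := by
    rw [Nat.factorial_succ]; push_cast; ring
  rw [hg2, hpow1, hpow2, hfac, hg1]
  have h1 : (k.factorial : ℝ) ≠ 0 := by positivity
  have h2 : (T:ℝ)^k ≠ 0 := pow_ne_zero k hTne
  have h3 : ((k:ℝ)+1) ≠ 0 := by positivity
  field_simp

end Ident

section PhiInt
variable {T s : ℝ}

lemma phi_integrable (hT : 0 < T) (hs0 : 0 < s) (hs1 : s < 1) (k : ℕ) :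
    IntegrableOn (fun t : ℝ => (1-2*t) * t ^ ((k:ℝ)-s) * Real.exp (-t^2/T)) (Ioi 0) := by
  have hp1 : (-1:ℝ) < (k:ℝ)-s := by
    have := Nat.cast_nonneg (α := ℝ) k; linarith
  have hp2 : (-1:ℝ) < ((k:ℝ)+1)-s := by linarith
  have hi1 := G_int hT hp1
  have hi2 := (G_int hT hp2).const_mul 2
  apply IntegrableOn.congr_fun (hi1.sub hi2) _ measurableSet_Ioi
  intro t ht
  have ht' : (0:ℝ) < t := ht
  simp only [Pi.sub_apply]
  show t ^ ((k:ℝ)-s) * Real.exp (-t^2/T) - 2 * (t ^ (((k:ℝ)+1)-s) * Real.exp (-t^2/T))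
    = (1-2*t) * t ^ ((k:ℝ)-s) * Real.exp (-t^2/T)
  rw [show ((k:ℝ)+1)-s = ((k:ℝ)-s) + 1 by ring, Real.rpow_add_one ht'.ne']
  ring

lemma psi_integrable (hT : 0 < T) (hs0 : 0 < s) (hs1 : s < 1) (k : ℕ) :
    IntegrableOn (fun t : ℝ => (1+2*t) * t ^ ((k:ℝ)-s) * Real.exp (-t^2/T)) (Ioi 0) := by
  have hp1 : (-1:ℝ) < (k:ℝ)-s := by
    have := Nat.cast_nonneg (α := ℝ) k; linarith
  have hp2 : (-1:ℝ) < ((k:ℝ)+1)-s := by linarith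
  have hi1 := G_int hT hp1
  have hi2 := (G_int hT hp2).const_mul 2
  apply IntegrableOn.congr_fun (hi1.add hi2) _ measurableSet_Ioi
  intro t ht
  have ht' : (0:ℝ) < t := ht
  simp only [Pi.add_apply]
  show t ^ ((k:ℝ)-s) * Real.exp (-t^2/T) + 2 * (t ^ (((k:ℝ)+1)-s) * Real.exp (-t^2/T))
    = (1+2*t) * t ^ ((k:ℝ)-s) * Real.exp (-t^2/T)
  rw [show ((k:ℝ)+1)-s = ((k:ℝ)-s) + 1 by ring, Real.rpow_add_one ht'.ne']
  ring

lemma phi_integral (hT : 0 < T) (hs0 : 0 < s) (hs1 : s < 1) (k : ℕ) :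
    ∫ t in Ioi (0:ℝ), (1-2*t) * t ^ ((k:ℝ)-s) * Real.exp (-t^2/T)
      = (1/2) * T ^ ((((k:ℝ)-s)+1)/2) * Real.Gamma ((((k:ℝ)-s)+1)/2)
        - 2 * ((1/2) * T ^ (((((k:ℝ)+1)-s)+1)/2) * Real.Gamma (((((k:ℝ)+1)-s)+1)/2)) := by
  have hp1 : (-1:ℝ) < (k:ℝ)-s := by
    have := Nat.cast_nonneg (α := ℝ) k; linarith
  have hp2 : (-1:ℝ) < ((k:ℝ)+1)-s := by linarith
  have hi1 := G_int hT hp1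
  have hi2 := (G_int hT hp2).const_mul 2
  have hcong : ∫ t in Ioi (0:ℝ), (1-2*t) * t ^ ((k:ℝ)-s) * Real.exp (-t^2/T)
      = ∫ t in Ioi (0:ℝ), (t ^ ((k:ℝ)-s) * Real.exp (-t^2/T)
        - 2 * (t ^ (((k:ℝ)+1)-s) * Real.exp (-t^2/T))) := by
    refine setIntegral_congr_fun measurableSet_Ioi fun t ht => ?_
    have ht' : (0:ℝ) < t := ht
    show (1-2*t) * t ^ ((k:ℝ)-s) * Real.exp (-t^2/T)
      = t ^ ((k:ℝ)-s) * Real.exp (-t^2/T) - 2 * (t ^ (((k:ℝ)+1)-s) * Real.exp (-t^2/T))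
    rw [show ((k:ℝ)+1)-s = ((k:ℝ)-s) + 1 by ring, Real.rpow_add_one ht'.ne']
    ring
  rw [hcong, integral_sub hi1 hi2, MeasureTheory.integral_const_mul, G_eval hT hp1, G_eval hT hp2]

lemma psi_integral (hT : 0 < T) (hs0 : 0 < s) (hs1 : s < 1) (k : ℕ) :
    ∫ t in Ioi (0:ℝ), (1+2*t) * t ^ ((k:ℝ)-s) * Real.exp (-t^2/T)
      = (1/2) * T ^ ((((k:ℝ)-s)+1)/2) * Real.Gamma ((((k:ℝ)-s)+1)/2)
        + 2 * ((1/2) * T ^ (((((k:ℝ)+1)-s)+1)/2) * Real.Gamma (((((k:ℝ)+1)-s)+1)/2)) := by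
  have hp1 : (-1:ℝ) < (k:ℝ)-s := by
    have := Nat.cast_nonneg (α := ℝ) k; linarith
  have hp2 : (-1:ℝ) < ((k:ℝ)+1)-s := by linarith
  have hi1 := G_int hT hp1
  have hi2 := (G_int hT hp2).const_mul 2
  have hcong : ∫ t in Ioi (0:ℝ), (1+2*t) * t ^ ((k:ℝ)-s) * Real.exp (-t^2/T)
      = ∫ t in Ioi (0:ℝ), (t ^ ((k:ℝ)-s) * Real.exp (-t^2/T)
        + 2 * (t ^ (((k:ℝ)+1)-s) * Real.exp (-t^2/T))) := by
    refine setIntegral_congr_fun measurableSet_Ioi fun t ht => ?_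
    have ht' : (0:ℝ) < t := ht
    show (1+2*t) * t ^ ((k:ℝ)-s) * Real.exp (-t^2/T)
      = t ^ ((k:ℝ)-s) * Real.exp (-t^2/T) + 2 * (t ^ (((k:ℝ)+1)-s) * Real.exp (-t^2/T))
    rw [show ((k:ℝ)+1)-s = ((k:ℝ)-s) + 1 by ring, Real.rpow_add_one ht'.ne']
    ring
  rw [hcong, integral_add hi1 hi2, MeasureTheory.integral_const_mul, G_eval hT hp1, G_eval hT hp2]

end PhiInt

section Interchange
variable {T s : ℝ}

lemma summable_h (hT : 0 < T) (hs0 : 0 < s) (hs1 : s < 1) :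
    Summable (fun k : ℕ => (((T:ℝ)^k * (k.factorial : ℝ))⁻¹) *
      ((1/2) * T ^ ((((k:ℝ)-s)+1)/2) * Real.Gamma ((((k:ℝ)-s)+1)/2)
        + 2 * ((1/2) * T ^ (((((k:ℝ)+1)-s)+1)/2) * Real.Gamma (((((k:ℝ)+1)-s)+1)/2)))) := by
  have hkc := summable_kc hT hs0 hs1
  have h1 : Summable (fun k : ℕ => ((k:ℝ)+1) *
      (Real.Gamma ((((k:ℝ)+1)-s)/2) * T ^ (-((((k:ℝ)+1)+s)/2))
        / (((k+1).factorial : ℕ) : ℝ))) := by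
    have h2 : Summable (fun k : ℕ => ((k+1:ℕ):ℝ) *
        (Real.Gamma ((((k+1:ℕ):ℝ)-s)/2) * T ^ (-((((k+1:ℕ):ℝ)+s)/2))
          / (((k+1).factorial : ℕ) : ℝ))) := (summable_nat_add_iff 1).mpr hkc
    apply h2.congr
    intro k
    push_cast
    ring_nf
  have h2 : Summable (fun k : ℕ => ((k:ℝ)-s) *
      (Real.Gamma (((k:ℝ)-s)/2) * T ^ (-(((k:ℝ)+s)/2)) / (k.factorial : ℝ))) := by
    have h3 := hkc.sub (((hasSum_c hT hs0 hs1).summable).mul_left s)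
    apply h3.congr
    intro k
    ring
  have hsum := (h1.mul_left (T/2)).add (h2.mul_left (T/2))
  apply hsum.congr
  intro k
  exact (h_ident hT hs0 hs1 k).symm

lemma hasSum_int (hT : 0 < T) (hs0 : 0 < s) (hs1 : s < 1) :
    HasSum (fun k : ℕ => ∫ t in Ioi (0:ℝ),
        (1-2*t) * t ^ ((k:ℝ)-s) * Real.exp (-t^2/T) / ((T:ℝ)^k * (k.factorial : ℝ)))
      (∫ t in Ioi (0:ℝ), (1-2*t) * t ^ (-s) * Real.exp (-(t^2-t)/T)) := by
  have hTne : T ≠ 0 := hT.ne'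
  set F : ℕ → ℝ → ℝ := fun k t =>
    (1-2*t) * t ^ ((k:ℝ)-s) * Real.exp (-t^2/T) / ((T:ℝ)^k * (k.factorial : ℝ)) with hFdef
  have hconst : ∀ k : ℕ, ((T:ℝ)^k * (k.factorial : ℝ)) ≠ 0 := by
    intro k
    have h1 : (k.factorial : ℝ) ≠ 0 := by positivity
    exact mul_ne_zero (pow_ne_zero k hTne) h1
  have hint : ∀ k : ℕ, Integrable (F k) (volume.restrict (Ioi 0)) := by
    intro k
    exact (phi_integrable hT hs0 hs1 k).div_const _
  have hnorm : ∀ k : ℕ, (∫ t in Ioi (0:ℝ), ‖F k t‖)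
      ≤ (((T:ℝ)^k * (k.factorial : ℝ))⁻¹) *
        ((1/2) * T ^ ((((k:ℝ)-s)+1)/2) * Real.Gamma ((((k:ℝ)-s)+1)/2)
          + 2 * ((1/2) * T ^ (((((k:ℝ)+1)-s)+1)/2)
            * Real.Gamma (((((k:ℝ)+1)-s)+1)/2))) := by
    intro k
    have hmaj : IntegrableOn (fun t : ℝ =>
        (1+2*t) * t ^ ((k:ℝ)-s) * Real.exp (-t^2/T) / ((T:ℝ)^k * (k.factorial : ℝ))) (Ioi 0) :=
      (psi_integrable hT hs0 hs1 k).div_const _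
    have hle := setIntegral_mono_on ((hint k).norm) hmaj measurableSet_Ioi ?_
    · refine hle.trans_eq ?_
      rw [MeasureTheory.integral_div, psi_integral hT hs0 hs1 k]
      ring
    · intro t ht
      have ht' : (0:ℝ) < t := ht
      have hck : (0:ℝ) < (T:ℝ)^k * (k.factorial : ℝ) := by positivity
      have h1 : ‖F k t‖ = |1-2*t| * t ^ ((k:ℝ)-s) * Real.exp (-t^2/T)
          / ((T:ℝ)^k * (k.factorial : ℝ)) := by
        rw [hFdef]
        rw [Real.norm_eq_abs, abs_div, abs_mul, abs_mul, abs_of_pos (Real.exp_pos _),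
          abs_of_nonneg (Real.rpow_nonneg ht'.le _), abs_of_pos hck]
      rw [h1]
      gcongr
      exact abs_le.2 ⟨by linarith, by linarith⟩
  have hsummable : Summable (fun k : ℕ => ∫ t in Ioi (0:ℝ), ‖F k t‖) :=
    Summable.of_nonneg_of_le (fun k => integral_nonneg fun t => norm_nonneg _) hnorm
      (summable_h hT hs0 hs1)
  have key := MeasureTheory.hasSum_integral_of_summable_integral_norm hint hsummable
  have hpt : ∀ t ∈ Ioi (0:ℝ), (∑' k : ℕ, F k t)
      = (1-2*t) * t ^ (-s) * Real.exp (-(t^2-t)/T) := by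
    intro t ht
    have ht' : (0:ℝ) < t := ht
    have hfe : (fun k : ℕ => F k t) = fun k : ℕ =>
        ((1-2*t) * t ^ (-s) * Real.exp (-t^2/T)) * ((t/T)^k / (k.factorial : ℝ)) := by
      funext k
      rw [hFdef]
      have hts : t ^ ((k:ℝ)-s) = t ^ (-s) * t^k := by
        rw [show (k:ℝ)-s = -s + (k:ℝ) by ring, Real.rpow_add ht', Real.rpow_natCast]
      show (1-2*t) * t ^ ((k:ℝ)-s) * Real.exp (-t^2/T) / ((T:ℝ)^k * (k.factorial : ℝ)) = _
      rw [hts, div_pow]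
      have h1 : (k.factorial : ℝ) ≠ 0 := by positivity
      have h2 : (T:ℝ)^k ≠ 0 := pow_ne_zero k hTne
      field_simp
    rw [hfe, tsum_mul_left]
    have hexp : (∑' k : ℕ, ((t/T)^k / (k.factorial : ℝ))) = Real.exp (t/T) := by
      rw [Real.exp_eq_exp_ℝ, NormedSpace.exp_eq_tsum_div]
    rw [hexp, show -(t^2-t)/T = -t^2/T + t/T by ring, Real.exp_add]
    ring
  have hrw : ∫ t in Ioi (0:ℝ), (∑' k : ℕ, F k t)
      = ∫ t in Ioi (0:ℝ), (1-2*t) * t ^ (-s) * Real.exp (-(t^2-t)/T) :=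
    setIntegral_congr_fun measurableSet_Ioi hpt
  rw [hrw] at key
  exact key

end Interchange

section KJ
variable {T s : ℝ}

lemma K_eval (hT : 0 < T) (hs0 : 0 < s) (hs1 : s < 1) :
    ∫ t in Ioi (0:ℝ), (1-2*t) * t ^ (-s) * Real.exp (-(t^2-t)/T)
      = s * T * ((T ^ (-(s/2)) * (Real.Gamma (-(s/2)) * kummer (-(s/2)) (1/2) (1/(4*T)) +
          Real.Gamma ((1-s)/2) / Real.sqrt T * kummer ((1-s)/2) (3/2) (1/(4*T)))) / 2) := by
  have hTne : T ≠ 0 := hT.ne'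
  have hsne : s ≠ 0 := hs0.ne'
  have h1 := hasSum_int hT hs0 hs1
  have h3 : ∀ k : ℕ, (∫ t in Ioi (0:ℝ),
      (1-2*t) * t ^ ((k:ℝ)-s) * Real.exp (-t^2/T) / ((T:ℝ)^k * (k.factorial : ℝ)))
      = (s*T) * ((1/(2*s)) * (((k:ℝ)+1) *
          (Real.Gamma ((((k:ℝ)+1)-s)/2) * T ^ (-((((k:ℝ)+1)+s)/2))
            / (((k+1).factorial : ℕ) : ℝ)))
        - (1/(2*s)) * (((k:ℝ)-s) *
          (Real.Gamma (((k:ℝ)-s)/2) * T ^ (-(((k:ℝ)+s)/2)) / (k.factorial : ℝ)))) := by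
    intro k
    rw [MeasureTheory.integral_div, phi_integral hT hs0 hs1 k, ← e_ident hT hs0 hs1 k]
    have hck : ((T:ℝ)^k * (k.factorial : ℝ)) ≠ 0 := by
      have h1 : (k.factorial : ℝ) ≠ 0 := by positivity
      exact mul_ne_zero (pow_ne_zero k hTne) h1
    field_simp
  have h4 := (hasSum_e hT hs0 hs1).mul_left (s*T)
  have hfe : (fun k : ℕ => ∫ t in Ioi (0:ℝ),
      (1-2*t) * t ^ ((k:ℝ)-s) * Real.exp (-t^2/T) / ((T:ℝ)^k * (k.factorial : ℝ)))
      = fun k : ℕ => (s*T) * ((1/(2*s)) * (((k:ℝ)+1) *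
          (Real.Gamma ((((k:ℝ)+1)-s)/2) * T ^ (-((((k:ℝ)+1)+s)/2))
            / (((k+1).factorial : ℕ) : ℝ)))
        - (1/(2*s)) * (((k:ℝ)-s) *
          (Real.Gamma (((k:ℝ)-s)/2) * T ^ (-(((k:ℝ)+s)/2)) / (k.factorial : ℝ)))) :=
    funext h3
  rw [hfe] at h1
  have := h1.unique h4
  rw [this]

end KJ

lemma exp_sub_one_le {y : ℝ} (hy : 0 ≤ y) : Real.exp y - 1 ≤ y * Real.exp y := by
  have h1 := Real.add_one_le_exp (-y)
  have h2 : (0:ℝ) < Real.exp y := Real.exp_pos y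
  have h3 : Real.exp (-y) * Real.exp y = 1 := by
    rw [← Real.exp_add]; simp
  nlinarith

section KJ2
variable {T s : ℝ}

lemma Kint (hT : 0 < T) (hs0 : 0 < s) (hs1 : s < 1) :
    IntegrableOn (fun t : ℝ => (1-2*t) * t ^ (-s) * Real.exp (-(t^2-t)/T)) (Ioi 0) := by
  have hT2 : (0:ℝ) < 2*T := by linarith
  have hmaj0 := psi_integrable (T := 2*T) hT2 hs0 hs1 0
  have hmaj : IntegrableOn (fun t : ℝ =>
      Real.exp (1/(2*T)) * ((1+2*t) * t ^ (-s) * Real.exp (-t^2/(2*T)))) (Ioi 0) := by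
    apply Integrable.const_mul
    apply IntegrableOn.congr_fun hmaj0 _ measurableSet_Ioi
    intro t ht
    norm_num
  apply Integrable.mono' hmaj
  · apply ContinuousOn.aestronglyMeasurable _ measurableSet_Ioi
    apply ContinuousOn.mul
    · apply ContinuousOn.mul
      · exact (continuous_const.sub (continuous_const.mul continuous_id)).continuousOn
      · exact fun x hx => (Real.continuousAt_rpow_const x (-s) (Or.inl (ne_of_gt hx))).continuousWithinAt
    · apply Continuous.continuousOn
      continuity
  · filter_upwards [ae_restrict_mem measurableSet_Ioi] with t ht
    have ht' : (0:ℝ) < t := ht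
    have hrp : (0:ℝ) ≤ t ^ (-s) := Real.rpow_nonneg ht'.le _
    have habs : |1-2*t| ≤ 1+2*t := abs_le.2 ⟨by linarith, by linarith⟩
    have hexp : Real.exp (-(t^2-t)/T) ≤ Real.exp (1/(2*T)) * Real.exp (-t^2/(2*T)) := by
      rw [← Real.exp_add]
      apply Real.exp_le_exp.mpr
      rw [div_add_div _ _ (by linarith : (2*T) ≠ 0) (by linarith : (2*T) ≠ 0)]
      rw [div_le_div_iff₀ (by positivity) (by positivity)]
      nlinarith [mul_nonneg (sq_nonneg (t-1)) (mul_pos hT hT).le, mul_pos hT hT]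
    have h1 : ‖(1-2*t) * t ^ (-s) * Real.exp (-(t^2-t)/T)‖
        = |1-2*t| * t ^ (-s) * Real.exp (-(t^2-t)/T) := by
      rw [Real.norm_eq_abs, abs_mul, abs_mul, abs_of_nonneg hrp,
        abs_of_pos (Real.exp_pos _)]
    rw [h1]
    calc |1-2*t| * t ^ (-s) * Real.exp (-(t^2-t)/T)
        ≤ (1+2*t) * t ^ (-s) * (Real.exp (1/(2*T)) * Real.exp (-t^2/(2*T))) := by
          apply mul_le_mul
          · apply mul_le_mul_of_nonneg_right habs hrp
          · exact hexp
          · positivity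
          · positivity
      _ = Real.exp (1/(2*T)) * ((1+2*t) * t ^ (-s) * Real.exp (-t^2/(2*T))) := by ring

lemma Jint (hT : 0 < T) (hs0 : 0 < s) (hs1 : s < 1) :
    IntegrableOn (fun t : ℝ => (Real.exp (-(t^2-t)/T) - 1) * t ^ (-s-1)) (Ioi 0) := by
  have hsplit : Ioi (0:ℝ) = Ioc 0 1 ∪ Ioi 1 := (Set.Ioc_union_Ioi_eq_Ioi zero_le_one).symm
  rw [hsplit]
  apply IntegrableOn.union
  · -- on Ioc 0 1
    have hmaj : IntegrableOn (fun t : ℝ => (Real.exp (1/T)/T) * t ^ (-s)) (Ioc (0:ℝ) 1) := by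
      apply Integrable.const_mul
      have h1 : IntervalIntegrable (fun t : ℝ => t ^ (-s)) volume 0 1 :=
        intervalIntegral.intervalIntegrable_rpow' (by linarith)
      have h2 := (intervalIntegrable_iff_integrableOn_Ioc_of_le zero_le_one).mp h1
      exact h2
    apply Integrable.mono' hmaj
    · apply ContinuousOn.aestronglyMeasurable _ measurableSet_Ioc
      apply ContinuousOn.mul
      · apply Continuous.continuousOn
        continuity
      · intro x hx
        exact (Real.continuousAt_rpow_const x (-s-1) (Or.inl (ne_of_gt hx.1))).continuousWithinAt
    · filter_upwards [ae_restrict_mem measurableSet_Ioc] with t ht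
      obtain ⟨ht0, ht1⟩ := ht
      have hrw : -(t^2-t)/T = (t - t^2)/T := by ring
      have hy0 : (0:ℝ) ≤ (t - t^2)/T := by
        apply div_nonneg _ hT.le
        nlinarith
      have hyt : (t - t^2)/T ≤ t/T := by
        gcongr <;> nlinarith
      have hy1 : (t - t^2)/T ≤ 1/T := by
        gcongr <;> nlinarith
      have hE1 : Real.exp ((t - t^2)/T) ≤ Real.exp (1/T) := Real.exp_le_exp.mpr hy1
      have hEm1 : Real.exp ((t - t^2)/T) - 1 ≤ (t/T) * Real.exp (1/T) := by
        calc Real.exp ((t - t^2)/T) - 1 ≤ ((t - t^2)/T) * Real.exp ((t - t^2)/T) :=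
              exp_sub_one_le hy0
          _ ≤ (t/T) * Real.exp (1/T) := by
              apply mul_le_mul hyt hE1 (Real.exp_pos _).le
              positivity
      have hrp : (0:ℝ) ≤ t ^ (-s-1) := Real.rpow_nonneg ht0.le _
      have h1 : ‖(Real.exp (-(t^2-t)/T) - 1) * t ^ (-s-1)‖
          = (Real.exp ((t - t^2)/T) - 1) * t ^ (-s-1) := by
        rw [hrw, Real.norm_eq_abs, abs_mul, abs_of_nonneg hrp,
          abs_of_nonneg (by linarith [Real.one_le_exp hy0] : (0:ℝ) ≤ Real.exp ((t-t^2)/T) - 1)]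
      rw [h1]
      have hts : t ^ (-s) = t ^ (-s-1) * t := by
        rw [← Real.rpow_add_one ht0.ne' (-s-1)]
        congr 1
        ring
      calc (Real.exp ((t - t^2)/T) - 1) * t ^ (-s-1)
          ≤ ((t/T) * Real.exp (1/T)) * t ^ (-s-1) := mul_le_mul_of_nonneg_right hEm1 hrp
        _ = (Real.exp (1/T)/T) * t ^ (-s) := by rw [hts]; ring
  · -- on Ioi 1
    have hmaj : IntegrableOn (fun t : ℝ => t ^ (-s-1)) (Ioi (1:ℝ)) :=
      integrableOn_Ioi_rpow_of_lt (by linarith) zero_lt_one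
    apply Integrable.mono' hmaj
    · apply ContinuousOn.aestronglyMeasurable _ measurableSet_Ioi
      apply ContinuousOn.mul
      · apply Continuous.continuousOn
        continuity
      · intro x hx
        have hx1 : (1:ℝ) < x := hx
        exact (Real.continuousAt_rpow_const x (-s-1)
          (Or.inl (by linarith))).continuousWithinAt
    · filter_upwards [ae_restrict_mem measurableSet_Ioi] with t ht
      have ht1 : (1:ℝ) < t := ht
      have ht0 : (0:ℝ) < t := by linarith
      have hrp : (0:ℝ) ≤ t ^ (-s-1) := Real.rpow_nonneg ht0.le _
      have hE : Real.exp (-(t^2-t)/T) ≤ 1 := by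
        rw [show (1:ℝ) = Real.exp 0 by simp]
        apply Real.exp_le_exp.mpr
        apply div_nonpos_of_nonpos_of_nonneg _ hT.le
        nlinarith
      have habs : |Real.exp (-(t^2-t)/T) - 1| ≤ 1 :=
        abs_le.2 ⟨by linarith [Real.exp_pos (-(t^2-t)/T)], by linarith⟩
      have h1 : ‖(Real.exp (-(t^2-t)/T) - 1) * t ^ (-s-1)‖
          = |Real.exp (-(t^2-t)/T) - 1| * t ^ (-s-1) := by
        rw [Real.norm_eq_abs, abs_mul, abs_of_nonneg hrp]
      rw [h1]
      calc |Real.exp (-(t^2-t)/T) - 1| * t ^ (-s-1)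
          ≤ 1 * t ^ (-s-1) := mul_le_mul_of_nonneg_right habs hrp
        _ = t ^ (-s-1) := one_mul _

end KJ2

section BP
variable {T s : ℝ}

lemma J_eq (hT : 0 < T) (hs0 : 0 < s) (hs1 : s < 1) :
    ∫ t in Ioi (0:ℝ), (Real.exp (-(t^2-t)/T) - 1) * t ^ (-s-1)
      = (1/(s*T)) * ∫ t in Ioi (0:ℝ), (1-2*t) * t ^ (-s) * Real.exp (-(t^2-t)/T) := by
  have hTne : T ≠ 0 := hT.ne'
  have hsne : s ≠ 0 := hs0.ne'
  set F : ℝ → ℝ := fun t => -(1/s) * (t ^ (-s) * (Real.exp (-(t^2-t)/T) - 1)) with hFdef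
  set F' : ℝ → ℝ := fun t => (Real.exp (-(t^2-t)/T) - 1) * t ^ (-s-1)
    - (1/(s*T)) * ((1-2*t) * t ^ (-s) * Real.exp (-(t^2-t)/T)) with hF'def
  have hderiv : ∀ x ∈ Ioi (0:ℝ), HasDerivAt F (F' x) x := by
    intro x hx
    have hx' : (0:ℝ) < x := hx
    have hA : HasDerivAt (fun t : ℝ => t ^ (-s)) (-s * x ^ (-s-1)) x :=
      Real.hasDerivAt_rpow_const (x := x) (p := -s) (Or.inl hx'.ne')
    have hinner : HasDerivAt (fun t : ℝ => -(t^2-t)/T) (-(2*x-1)/T) x := by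
      have h1 : HasDerivAt (fun t : ℝ => t^2-t) (2*x-1) x := by
        exact ((hasDerivAt_pow 2 x).sub (hasDerivAt_id' x)).congr_deriv (by norm_num)
      exact (h1.neg).div_const T
    have hB : HasDerivAt (fun t : ℝ => Real.exp (-(t^2-t)/T) - 1)
        (Real.exp (-(x^2-x)/T) * (-(2*x-1)/T)) x := (hinner.exp).sub_const 1
    have hAB := (hA.mul hB).const_mul (-(1/s))
    refine hAB.congr_deriv ?_
    rw [hF'def]
    have hxs : x ^ (-s) = x ^ (-s-1) * x := by
      rw [← Real.rpow_add_one hx'.ne' (-s-1)]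
      congr 1
      ring
    field_simp
    rw [hxs]
    ring
  have hcont : ContinuousWithinAt F (Set.Ici (0:ℝ)) 0 := by
    have hF0 : F 0 = 0 := by
      rw [hFdef]
      norm_num
    unfold ContinuousWithinAt
    rw [hF0]
    apply squeeze_zero_norm'
      (a := fun t : ℝ => (Real.exp (1/T)/(s*T)) * t ^ (1-s))
    · filter_upwards [Icc_mem_nhdsGE_of_mem (Set.mem_Ico.mpr ⟨le_refl (0:ℝ), zero_lt_one⟩)]
        with t ht
      obtain ⟨ht0, ht1⟩ := ht
      rcases eq_or_lt_of_le ht0 with h | h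
      · rw [← h, hF0]
        simp [Real.zero_rpow (show (1:ℝ)-s ≠ 0 by linarith)]
      · have hy0 : (0:ℝ) ≤ (t - t^2)/T := by
          apply div_nonneg _ hT.le
          nlinarith
        have hrw : -(t^2-t)/T = (t - t^2)/T := by ring
        have hyt : (t - t^2)/T ≤ t/T := by gcongr <;> nlinarith
        have hy1 : (t - t^2)/T ≤ 1/T := by gcongr <;> nlinarith
        have hE1 : Real.exp ((t - t^2)/T) ≤ Real.exp (1/T) := Real.exp_le_exp.mpr hy1
        have hEm1 : Real.exp ((t - t^2)/T) - 1 ≤ (t/T) * Real.exp (1/T) := by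
          calc Real.exp ((t - t^2)/T) - 1 ≤ ((t - t^2)/T) * Real.exp ((t - t^2)/T) :=
                exp_sub_one_le hy0
            _ ≤ (t/T) * Real.exp (1/T) := by
                apply mul_le_mul hyt hE1 (Real.exp_pos _).le
                positivity
        have hrp : (0:ℝ) ≤ t ^ (-s) := Real.rpow_nonneg h.le _
        have hts : t ^ (1-s) = t ^ (-s) * t := by
          rw [← Real.rpow_add_one h.ne' (-s)]
          congr 1
          ring
        have h1 : ‖F t‖ = (1/s) * (t ^ (-s) * (Real.exp ((t-t^2)/T) - 1)) := by
          rw [hFdef]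
          show ‖-(1/s) * (t ^ (-s) * (Real.exp (-(t^2-t)/T) - 1))‖ = _
          rw [hrw, Real.norm_eq_abs, abs_mul, abs_mul, abs_neg,
            abs_of_nonneg (by positivity : (0:ℝ) ≤ (1/s)),
            abs_of_nonneg hrp,
            abs_of_nonneg (by linarith [Real.one_le_exp hy0] :
              (0:ℝ) ≤ Real.exp ((t-t^2)/T) - 1)]
        rw [h1]
        calc (1/s) * (t ^ (-s) * (Real.exp ((t-t^2)/T) - 1))
            ≤ (1/s) * (t ^ (-s) * ((t/T) * Real.exp (1/T))) := by
              apply mul_le_mul_of_nonneg_left _ (by positivity : (0:ℝ) ≤ 1/s)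
              exact mul_le_mul_of_nonneg_left hEm1 hrp
          _ = (Real.exp (1/T)/(s*T)) * t ^ (1-s) := by
              rw [hts]
              field_simp
    · have hc : ContinuousAt (fun t : ℝ => t ^ (1-s)) 0 :=
        Real.continuousAt_rpow_const 0 (1-s) (Or.inr (by linarith))
      have hc2 : ContinuousAt (fun t : ℝ => (Real.exp (1/T)/(s*T)) * t ^ (1-s)) 0 :=
        hc.const_mul _
      have htend : Filter.Tendsto (fun t : ℝ => (Real.exp (1/T)/(s*T)) * t ^ (1-s))
          (nhdsWithin 0 (Set.Ici (0:ℝ)))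
          (nhds ((Real.exp (1/T)/(s*T)) * (0:ℝ) ^ (1-s))) :=
        hc2.continuousWithinAt
      rw [show (Real.exp (1/T)/(s*T)) * (0:ℝ) ^ (1-s) = 0 by
        rw [Real.zero_rpow (show (1:ℝ)-s ≠ 0 by linarith)]; ring] at htend
      exact htend
  have htop : Filter.Tendsto F atTop (nhds 0) := by
    have h1 : Filter.Tendsto (fun t : ℝ => t ^ (-s)) atTop (nhds 0) :=
      tendsto_rpow_neg_atTop hs0
    have h2 : Filter.Tendsto (fun t : ℝ => Real.exp (-(t^2-t)/T)) atTop (nhds 0) := by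
      apply Real.tendsto_exp_atBot.comp
      have h3 : Filter.Tendsto (fun t : ℝ => t^2 - t) atTop atTop := by
        apply tendsto_atTop_mono' _ _ tendsto_id
        filter_upwards [Filter.eventually_ge_atTop (2:ℝ)] with t ht
        show t ≤ t^2 - t
        nlinarith
      have h4 := h3.atTop_mul_const_of_neg (neg_lt_zero.mpr (by positivity : (0:ℝ) < 1/T))
      apply h4.congr
      intro t
      field_simp
    have h5 := (h1.mul ((h2.sub_const 1))).const_mul (-(1/s))
    rw [show (-(1/s)) * (0 * (0 - 1)) = 0 by ring] at h5
    exact h5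
  have hJ := Jint hT hs0 hs1
  have hK := (Kint hT hs0 hs1).const_mul (1/(s*T))
  have hFint : IntegrableOn F' (Ioi 0) := by
    rw [hF'def]
    exact hJ.sub hK
  have hmain := integral_Ioi_of_hasDerivAt_of_tendsto hcont hderiv hFint htop
  have hF0 : F 0 = 0 := by
    rw [hFdef]
    norm_num
  rw [hF0, sub_zero] at hmain
  rw [hF'def] at hmain
  rw [integral_sub hJ hK] at hmain
  rw [MeasureTheory.integral_const_mul] at hmain
  linarith

end BP

/-- For the Mie potential with `n = 2m`, `m > 3`, `σ > 0`, `T > 0`, the second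
virial coefficient is a combination of two Kummer functions. -/
theorem second_virial_mie_n_eq_two_m (m σ T : ℝ) (hm : 3 < m) (hσ : 0 < σ) (hT : 0 < T) :
    -2 * π * ∫ r in Set.Ioi (0 : ℝ),
        (Real.exp (-(1 / T) * ((σ / r) ^ (2 * m) - (σ / r) ^ m)) - 1) * r ^ 2
      = -(π * σ ^ 3 / (m * T ^ (3 / (2 * m)))) *
          (Real.Gamma (-(3 / (2 * m))) * kummer (-(3 / (2 * m))) (1 / 2) (1 / (4 * T)) +
            Real.Gamma (1 / 2 - 3 / (2 * m)) / Real.sqrt T *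
              kummer (1 / 2 - 3 / (2 * m)) (3 / 2) (1 / (4 * T))) := by
  have hm0 : (0:ℝ) < m := by linarith
  have hmne : m ≠ 0 := hm0.ne'
  set s : ℝ := 3/m with hs
  have hs0 : 0 < s := by positivity
  have hs1 : s < 1 := by
    rw [hs, div_lt_one hm0]; linarith
  set f : ℝ → ℝ := fun r =>
    (Real.exp (-(1 / T) * ((σ / r) ^ (2 * m) - (σ / r) ^ m)) - 1) * r ^ 2 with hf
  set g : ℝ → ℝ := fun u => f (σ * u) with hg
  -- step A : substitution
  have hback : ∀ u : ℝ, 0 < u → g u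
      = (Real.exp (-(1 / T) * (u ^ (-(2*m)) - u ^ (-m))) - 1) * (σ^2 * u^2) := by
    intro u hu
    rw [hg, hf]
    have hdiv : σ/(σ*u) = u⁻¹ := by
      field_simp
    have hinv1 : (u⁻¹) ^ (2*m) = u ^ (-(2*m)) := by
      rw [Real.inv_rpow hu.le, ← Real.rpow_neg hu.le]
    have hinv2 : (u⁻¹) ^ m = u ^ (-m) := by
      rw [Real.inv_rpow hu.le, ← Real.rpow_neg hu.le]
    show (Real.exp (-(1 / T) * ((σ/(σ*u)) ^ (2 * m) - (σ/(σ*u)) ^ m)) - 1) * (σ*u) ^ 2 = _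
    rw [hdiv, hinv1, hinv2]
    ring
  have h1 : ∫ u in Ioi (0:ℝ), g u = σ⁻¹ • ∫ x in Ioi (σ*0:ℝ), f x :=
    integral_comp_mul_left_Ioi f 0 hσ
  rw [mul_zero, smul_eq_mul] at h1
  have hpne : -(1/m) ≠ 0 := by
    simp only [ne_eq, neg_eq_zero]
    positivity
  have h2 := integral_comp_rpow_Ioi g hpne
  have h3 : ∀ x : ℝ, x ∈ Ioi (0:ℝ) →
      (|(-(1/m))| * x ^ ((-(1/m)) - 1)) • g (x ^ (-(1/m)))
      = (σ^2/m) * ((Real.exp (-(x^2-x)/T) - 1) * x ^ (-s-1)) := by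
    intro x hx
    have hx' : (0:ℝ) < x := hx
    have hxp : (0:ℝ) < x ^ (-(1/m)) := Real.rpow_pos_of_pos hx' _
    rw [hback _ hxp]
    have e1 : (x ^ (-(1/m))) ^ (-(2*m)) = x ^ (2:ℝ) := by
      rw [← Real.rpow_mul hx'.le]
      congr 1
      field_simp
    have e2 : (x ^ (-(1/m))) ^ (-m) = x := by
      rw [← Real.rpow_mul hx'.le]
      have : (-(1/m)) * (-m) = 1 := by field_simp
      rw [this, Real.rpow_one]
    have e3 : (x ^ (-(1/m)))^(2:ℕ) = x ^ (-(2/m)) := by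
      rw [← Real.rpow_natCast (x ^ (-(1/m))) 2, ← Real.rpow_mul hx'.le]
      congr 1
      push_cast
      ring
    have e4 : x ^ (2:ℝ) = x^(2:ℕ) := by
      rw [show (2:ℝ) = ((2:ℕ):ℝ) by norm_num, Real.rpow_natCast]
    have habs : |(-(1/m))| = 1/m := by
      rw [abs_neg, abs_of_pos (by positivity : (0:ℝ) < 1/m)]
    have e5 : x ^ ((-(1/m)) - 1) * x ^ (-(2/m)) = x ^ (-s-1) := by
      rw [← Real.rpow_add hx']
      congr 1
      rw [hs]
      field_simp
      ring
    rw [e1, e2, e3, e4, habs, smul_eq_mul]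
    have hexp : -(1 / T) * (x^(2:ℕ) - x) = -(x^2-x)/T := by ring
    rw [hexp]
    calc 1/m * x ^ (-(1/m) - 1) * ((Real.exp (-(x^2-x)/T) - 1) * (σ^2 * x ^ (-(2/m))))
        = (σ^2/m) * ((Real.exp (-(x^2-x)/T) - 1) * (x ^ (-(1/m) - 1) * x ^ (-(2/m)))) := by
          ring
      _ = (σ^2/m) * ((Real.exp (-(x^2-x)/T) - 1) * x ^ (-s-1)) := by rw [e5]
  have h4 : ∫ x in Ioi (0:ℝ), (|(-(1/m))| * x ^ ((-(1/m)) - 1)) • g (x ^ (-(1/m)))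
      = (σ^2/m) * ∫ x in Ioi (0:ℝ), (Real.exp (-(x^2-x)/T) - 1) * x ^ (-s-1) := by
    rw [setIntegral_congr_fun measurableSet_Ioi h3, MeasureTheory.integral_const_mul]
  have hstepA : ∫ r in Ioi (0:ℝ), f r
      = (σ^3/m) * ∫ t in Ioi (0:ℝ), (Real.exp (-(t^2-t)/T) - 1) * t ^ (-s-1) := by
    have := h2
    rw [h4, h1] at this
    have hσne : σ ≠ 0 := hσ.ne'
    field_simp at this ⊢
    linarith [this]
  -- evaluate J
  have hJval : ∫ t in Ioi (0:ℝ), (Real.exp (-(t^2-t)/T) - 1) * t ^ (-s-1)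
      = (T ^ (-(s/2)) * (Real.Gamma (-(s/2)) * kummer (-(s/2)) (1/2) (1/(4*T)) +
          Real.Gamma ((1-s)/2) / Real.sqrt T * kummer ((1-s)/2) (3/2) (1/(4*T)))) / 2 := by
    rw [J_eq hT hs0 hs1, K_eval hT hs0 hs1]
    have hsne : s ≠ 0 := hs0.ne'
    have hTne : T ≠ 0 := hT.ne'
    field_simp
  -- final assembly
  rw [show (∫ r in Set.Ioi (0:ℝ),
      (Real.exp (-(1 / T) * ((σ / r) ^ (2 * m) - (σ / r) ^ m)) - 1) * r ^ 2)
      = ∫ r in Ioi (0:ℝ), f r from rfl]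
  rw [hstepA, hJval]
  rw [show -(3/(2*m)) = -(s/2) by rw [hs, div_div, mul_comm m 2]]
  rw [show (1:ℝ)/2 - 3/(2*m) = (1-s)/2 by rw [hs, sub_div, div_div, mul_comm m 2]]
  rw [show (3:ℝ)/(2*m) = s/2 by rw [hs, div_div, mul_comm m 2]]
  have hTp : (0:ℝ) < T ^ (s/2) := Real.rpow_pos_of_pos hT _
  rw [Real.rpow_neg hT.le]
  field_simp
end

section
/- (Kummer's transformation) For real numbers a, b with b not a nonpositive integer, and any real x, the Kummer function satisfies ₁F₁(a; b; x) = e^x · ₁F₁(b - a; b; -x). -/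
open Real

lemma rF_succ_left (t : ℝ) (m : ℕ) :
    risingFactorial t (m + 1) = t * risingFactorial (t + 1) m := by
  unfold risingFactorial
  rw [Finset.prod_range_succ']
  simp only [Nat.cast_zero, add_zero]
  rw [mul_comm]
  congr 1
  apply Finset.prod_congr rfl
  intro i _
  push_cast
  ring

lemma rF_succ (t : ℝ) (m : ℕ) :
    risingFactorial t (m + 1) = risingFactorial t m * (t + m) :=
  Finset.prod_range_succ _ _

lemma rF_add (b : ℝ) (j m : ℕ) :
    risingFactorial b (j + m) = risingFactorial b j * risingFactorial (b + j) m := by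
  unfold risingFactorial
  rw [Finset.prod_range_add]
  congr 1
  apply Finset.prod_congr rfl
  intro i _
  push_cast
  ring

lemma key (n : ℕ) : ∀ b c : ℝ,
    ∑ j ∈ Finset.range (n + 1), (n.choose j : ℝ) * (-1) ^ j * risingFactorial c j *
      risingFactorial (b + j) (n - j) = risingFactorial (b - c) n := by
  induction n with
  | zero => intro b c; simp [risingFactorial]
  | succ n ih =>
    intro b c
    have hA : ∑ j ∈ Finset.range (n + 1), (n.choose j : ℝ) * (-1) ^ j * risingFactorial c j *
        risingFactorial (b + j) (n + 1 - j)
        = risingFactorial b (n + 1)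
          + ∑ j ∈ Finset.range (n + 1), (n.choose (j + 1) : ℝ) * (-1) ^ (j + 1) *
            risingFactorial c (j + 1) * risingFactorial (b + (j + 1)) (n - j) := by
      have : ∑ j ∈ Finset.range (n + 2), (n.choose j : ℝ) * (-1) ^ j * risingFactorial c j *
          risingFactorial (b + j) (n + 1 - j)
          = ∑ j ∈ Finset.range (n + 1), (n.choose j : ℝ) * (-1) ^ j * risingFactorial c j *
          risingFactorial (b + j) (n + 1 - j) := by
        rw [Finset.sum_range_succ, Nat.choose_succ_self]
        simp
      rw [← this, Finset.sum_range_succ', add_comm]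
      congr 1
      · simp [risingFactorial]
      · apply Finset.sum_congr rfl
        intro j hj
        simp only [Finset.mem_range] at hj
        have h2 : (n + 1) - (j + 1) = n - j := by omega
        rw [h2]
        push_cast
        ring_nf
    have hD : ∑ j ∈ Finset.range (n + 2), ((n + 1).choose j : ℝ) * (-1) ^ j *
        risingFactorial c j * risingFactorial (b + j) (n + 1 - j)
        = risingFactorial b (n + 1) + ∑ j ∈ Finset.range (n + 1),
          ((n.choose j : ℝ) + (n.choose (j + 1) : ℝ)) * (-1) ^ (j + 1) *
          risingFactorial c (j + 1) * risingFactorial (b + (j + 1)) (n - j) := by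
      rw [Finset.sum_range_succ', add_comm]
      congr 1
      · simp [risingFactorial]
      · apply Finset.sum_congr rfl
        intro j hj
        simp only [Finset.mem_range] at hj
        have h2 : (n + 1) - (j + 1) = n - j := by omega
        rw [h2, Nat.choose_succ_succ]
        push_cast
        ring
    calc ∑ j ∈ Finset.range (n + 1 + 1), ((n + 1).choose j : ℝ) * (-1) ^ j *
          risingFactorial c j * risingFactorial (b + j) (n + 1 - j)
        = risingFactorial b (n + 1) + ∑ j ∈ Finset.range (n + 1),
          ((n.choose j : ℝ) + (n.choose (j + 1) : ℝ)) * (-1) ^ (j + 1) *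
          risingFactorial c (j + 1) * risingFactorial (b + (j + 1)) (n - j) := hD
      _ = (risingFactorial b (n + 1) + ∑ j ∈ Finset.range (n + 1),
            (n.choose (j + 1) : ℝ) * (-1) ^ (j + 1) * risingFactorial c (j + 1) *
            risingFactorial (b + (j + 1)) (n - j))
          + ∑ j ∈ Finset.range (n + 1), (n.choose j : ℝ) * (-1) ^ (j + 1) *
            risingFactorial c (j + 1) * risingFactorial (b + (j + 1)) (n - j) := by
          simp only [add_mul, Finset.sum_add_distrib]
          ring
      _ = ∑ j ∈ Finset.range (n + 1), (n.choose j : ℝ) * (-1) ^ j * risingFactorial c j *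
            risingFactorial (b + j) (n + 1 - j)
          + ∑ j ∈ Finset.range (n + 1), (n.choose j : ℝ) * (-1) ^ (j + 1) *
            risingFactorial c (j + 1) * risingFactorial (b + (j + 1)) (n - j) := by rw [hA]
      _ = ∑ j ∈ Finset.range (n + 1), (b - c) * ((n.choose j : ℝ) * (-1) ^ j *
            risingFactorial c j * risingFactorial ((b + 1) + j) (n - j)) := by
          rw [← Finset.sum_add_distrib]
          apply Finset.sum_congr rfl
          intro j hj
          simp only [Finset.mem_range] at hj
          have h1 : n + 1 - j = (n - j) + 1 := by omega
          rw [h1, rF_succ_left (b + j) (n - j), rF_succ c j]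
          have e1 : b + (j : ℝ) + 1 = b + 1 + (j : ℝ) := by ring
          have e2 : b + ((j : ℝ) + 1) = b + 1 + (j : ℝ) := by ring
          rw [e1, e2]
          ring
      _ = (b - c) * risingFactorial ((b + 1) - c) n := by rw [← Finset.mul_sum, ih (b + 1) c]
      _ = risingFactorial (b - c) (n + 1) := by
          rw [rF_succ_left]
          have h4 : b + 1 - c = (b - c) + 1 := by ring
          rw [h4]

lemma rF_ne_zero (b : ℝ) (hb : ∀ k : ℕ, b ≠ -(k : ℝ)) (k : ℕ) : risingFactorial b k ≠ 0 :=
  Finset.prod_ne_zero_iff.2 fun i _ => fun h => hb i (by linarith)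

lemma kummer_summable (c b x : ℝ) (hb : ∀ k : ℕ, b ≠ -(k : ℝ)) :
    Summable (fun k : ℕ => ‖risingFactorial c k / risingFactorial b k * x ^ k /
      (k.factorial : ℝ)‖) := by
  have hbne : ∀ i : ℕ, b + (i : ℝ) ≠ 0 := fun i h => hb i (by linarith)
  obtain ⟨M, hM0, hM⟩ : ∃ M : ℝ, 0 ≤ M ∧ ∀ i : ℕ, |c + i| ≤ M * |b + i| := by
    set N : ℕ := ⌈2 * |b| + |c|⌉₊ with hN
    set S : ℝ := ∑ i ∈ Finset.range N, |c + i| / |b + i| with hS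
    have hS0 : 0 ≤ S := Finset.sum_nonneg fun i _ => by positivity
    refine ⟨2 + S, by linarith, fun i => ?_⟩
    have hbpos : 0 < |b + (i : ℝ)| := abs_pos.2 (hbne i)
    by_cases hi : i < N
    · have h1 : |c + (i : ℝ)| / |b + i| ≤ S :=
        Finset.single_le_sum (f := fun i : ℕ => |c + (i : ℝ)| / |b + i|)
          (fun j _ => by positivity) (Finset.mem_range.2 hi)
      rw [div_le_iff₀ hbpos] at h1
      nlinarith
    · push_neg at hi
      have hiN : 2 * |b| + |c| ≤ (i : ℝ) := by
        calc 2 * |b| + |c| ≤ (N : ℝ) := Nat.le_ceil _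
          _ ≤ i := by exact_mod_cast hi
      have h3 : (i : ℝ) - |b| ≤ |b + i| := by
        have h := abs_add_le (b + (i : ℝ)) (-b)
        have h' : |(i : ℝ)| = (i : ℝ) := abs_of_nonneg (by positivity)
        have h2 : b + (i : ℝ) + -b = (i : ℝ) := by ring
        rw [h2, abs_neg, h'] at h
        linarith
      have h4 : |c + (i : ℝ)| ≤ |c| + i := by
        calc |c + (i : ℝ)| ≤ |c| + |(i : ℝ)| := abs_add_le c i
          _ = |c| + i := by rw [abs_of_nonneg (by positivity : (0:ℝ) ≤ (i:ℝ))]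
      nlinarith
  have hrb : ∀ k, risingFactorial b k ≠ 0 := rF_ne_zero b hb
  apply Summable.of_nonneg_of_le (fun k => norm_nonneg _) (fun k => ?_)
    (Real.summable_pow_div_factorial (M * |x|))
  have hq : 0 < |risingFactorial b k| := abs_pos.2 (hrb k)
  have hprod : |risingFactorial c k| ≤ M ^ k * |risingFactorial b k| := by
    unfold risingFactorial
    rw [Finset.abs_prod, Finset.abs_prod]
    calc ∏ i ∈ Finset.range k, |c + (i : ℝ)|
        ≤ ∏ i ∈ Finset.range k, M * |b + (i : ℝ)| :=
          Finset.prod_le_prod (fun i _ => abs_nonneg _) (fun i _ => hM i)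
      _ = M ^ k * ∏ i ∈ Finset.range k, |b + (i : ℝ)| := by
          rw [Finset.prod_mul_distrib, Finset.prod_const, Finset.card_range]
  have h5 : |risingFactorial c k| / |risingFactorial b k| ≤ M ^ k :=
    (div_le_iff₀ hq).2 hprod
  calc ‖risingFactorial c k / risingFactorial b k * x ^ k / (k.factorial : ℝ)‖
      = |risingFactorial c k| / |risingFactorial b k| * |x| ^ k / (k.factorial : ℝ) := by
        rw [Real.norm_eq_abs, abs_div, abs_mul, abs_div, abs_pow, Nat.abs_cast]
    _ ≤ M ^ k * |x| ^ k / (k.factorial : ℝ) := by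
        gcongr
    _ = (M * |x|) ^ k / (k.factorial : ℝ) := by rw [mul_pow]

/-- Kummer's transformation: if `b` is not a nonpositive integer then
`₁F₁(a;b;x) = eˣ ₁F₁(b-a;b;-x)` for all real `x`. -/
theorem kummer_transformation (a b x : ℝ) (hb : ∀ k : ℕ, b ≠ -(k : ℝ)) :
    kummer a b x = Real.exp x * kummer (b - a) b (-x) := by
  have hbne : ∀ i : ℕ, b + (i : ℝ) ≠ 0 := fun i h => hb i (by linarith)
  have hrb : ∀ k, risingFactorial b k ≠ 0 := rF_ne_zero b hb
  have hf : Summable (fun k : ℕ => ‖x ^ k / (k.factorial : ℝ)‖) := by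
    apply (Real.summable_pow_div_factorial |x|).congr
    intro k
    rw [Real.norm_eq_abs, abs_div, abs_pow, Nat.abs_cast]
  have hg := kummer_summable (b - a) b (-x) hb
  have hexp : Real.exp x = ∑' k : ℕ, x ^ k / (k.factorial : ℝ) := by
    rw [Real.exp_eq_exp_ℝ, NormedSpace.exp_eq_tsum_div]
  unfold kummer
  rw [hexp, tsum_mul_tsum_eq_tsum_sum_range_of_summable_norm hf hg]
  apply tsum_congr
  intro n
  have hrefl := Finset.sum_range_reflect
    (fun j => (n.choose j : ℝ) * (-1) ^ j * risingFactorial (b - a) j *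
      risingFactorial (b + j) (n - j)) (n + 1)
  simp only [Nat.add_sub_cancel] at hrefl
  calc risingFactorial a n / risingFactorial b n * x ^ n / (n.factorial : ℝ)
      = risingFactorial a n * (x ^ n / ((n.factorial : ℝ) * risingFactorial b n)) := by
        field_simp
    _ = (∑ j ∈ Finset.range (n + 1), (n.choose j : ℝ) * (-1) ^ j *
          risingFactorial (b - a) j * risingFactorial (b + j) (n - j)) *
          (x ^ n / ((n.factorial : ℝ) * risingFactorial b n)) := by
        rw [key n b (b - a)]
        congr 2
        ring
    _ = (∑ k ∈ Finset.range (n + 1), (n.choose (n - k) : ℝ) * (-1) ^ (n - k) *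
          risingFactorial (b - a) (n - k) * risingFactorial (b + (n - k : ℕ)) (n - (n - k))) *
          (x ^ n / ((n.factorial : ℝ) * risingFactorial b n)) := by
        rw [hrefl]
    _ = ∑ k ∈ Finset.range (n + 1), ((n.choose (n - k) : ℝ) * (-1) ^ (n - k) *
          risingFactorial (b - a) (n - k) * risingFactorial (b + (n - k : ℕ)) (n - (n - k))) *
          (x ^ n / ((n.factorial : ℝ) * risingFactorial b n)) := Finset.sum_mul _ _ _
    _ = ∑ k ∈ Finset.range (n + 1), x ^ k / (k.factorial : ℝ) *
          (risingFactorial (b - a) (n - k) / risingFactorial b (n - k) * (-x) ^ (n - k) /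
            ((n - k).factorial : ℝ)) := by
        apply Finset.sum_congr rfl
        intro k hk
        simp only [Finset.mem_range] at hk
        have hkn : k ≤ n := by omega
        have h1 : n - (n - k) = k := by omega
        have h2 : (n - k) + k = n := by omega
        have hfac : ((n.choose (n - k)) : ℝ) * ((n - k).factorial : ℝ) * (k.factorial : ℝ)
            = (n.factorial : ℝ) := by
          have := Nat.choose_mul_factorial_mul_factorial (Nat.sub_le n k)
          rw [h1] at this
          exact_mod_cast congrArg (Nat.cast : ℕ → ℝ) this
        have hsplit : risingFactorial b n
            = risingFactorial b (n - k) * risingFactorial (b + (n - k : ℕ)) k := by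
          have := rF_add b (n - k) k
          rw [h2] at this
          exact this
        have hxn : x ^ n = x ^ (n - k) * x ^ k := by
          rw [← pow_add]
          congr 1
          omega
        rw [h1, hsplit, ← hfac, hxn, neg_pow]
        have hq1 : risingFactorial b (n - k) ≠ 0 := hrb _
        have hq2 : risingFactorial (b + (n - k : ℕ)) k ≠ 0 := by
          apply Finset.prod_ne_zero_iff.2
          intro i _
          have := hbne ((n - k) + i)
          push_cast at this ⊢
          intro h
          apply this
          linarith
        have hq3 : ((k.factorial : ℝ)) ≠ 0 := Nat.cast_ne_zero.2 (Nat.factorial_ne_zero _)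
        have hq4 : (((n - k).factorial : ℝ)) ≠ 0 := Nat.cast_ne_zero.2 (Nat.factorial_ne_zero _)
        have hq5 : ((n.choose (n - k) : ℝ)) ≠ 0 :=
          Nat.cast_ne_zero.2 (Nat.choose_pos (Nat.sub_le n k)).ne'
        set C : ℝ := ((n.choose (n - k)) : ℝ) with hCdef
        set R : ℝ := (((n - k).factorial) : ℝ) with hRdef
        set K : ℝ := ((k.factorial) : ℝ) with hKdef
        set P : ℝ := risingFactorial (b - a) (n - k) with hPdef
        set Q : ℝ := risingFactorial b (n - k) with hQdef
        set T : ℝ := risingFactorial (b + ((n - k : ℕ) : ℝ)) k with hTdef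
        field_simp
        ring
end

section
/- Let a, b be real numbers with b not a nonpositive integer and a not a nonpositive integer. Then, as x → ∞, ₁F₁(a; b; x) · e^{-x} · x^{b-a} tends to Γ(b)/Γ(a); that is, ₁F₁(a; b; x) is asymptotic to (Γ(b)/Γ(a)) · e^x · x^{a-b} as x → ∞. -/
open Real Filter

lemma tsum_exp_eq (x : ℝ) : ∑' k : ℕ, x ^ k / (k.factorial : ℝ) = Real.exp x := by
  rw [Real.exp_eq_exp_ℝ, NormedSpace.exp_eq_tsum_div]

lemma summable_poly_fac (m : ℕ) (x : ℝ) (hx : 0 ≤ x) :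
    Summable (fun k : ℕ => ((k : ℝ) + 1) ^ m * x ^ k / (k.factorial : ℝ)) := by
  apply summable_of_ratio_norm_eventually_le (r := 1/2) (by norm_num)
  filter_upwards [eventually_ge_atTop (⌈2 ^ (m+1) * x⌉₊)] with k hk
  have hk' : 2 ^ (m+1) * x ≤ (k : ℝ) := (Nat.ceil_le.1 hk).trans (by exact_mod_cast le_refl _)
  have h1 : (0:ℝ) ≤ ((k:ℝ)+1) ^ m * x ^ k / (k.factorial : ℝ) := by positivity
  have h2 : (0:ℝ) ≤ ((k:ℝ)+1+1) ^ m * x ^ (k+1) / ((k+1).factorial : ℝ) := by positivity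
  push_cast
  rw [Real.norm_of_nonneg h2, Real.norm_of_nonneg h1]
  have hfac : ((k+1).factorial : ℝ) = ((k:ℝ)+1) * (k.factorial : ℝ) := by
    rw [Nat.factorial_succ]; push_cast; ring
  have hfk : (0:ℝ) < (k.factorial : ℝ) := by exact_mod_cast k.factorial_pos
  have hb : ((k:ℝ)+1+1) ^ m ≤ 2 ^ m * ((k:ℝ)+1) ^ m := by
    rw [← mul_pow]; apply pow_le_pow_left₀ (by positivity); linarith [Nat.cast_nonneg (α := ℝ) k]
  have hx2 : x ^ (k+1) = x * x ^ k := by ring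
  rw [hfac, hx2]
  have key : ((k:ℝ)+1+1) ^ m * (x * x ^ k) / (((k:ℝ)+1) * (k.factorial:ℝ))
      ≤ (2 ^ m * ((k:ℝ)+1) ^ m) * (x * x ^ k) / (((k:ℝ)+1) * (k.factorial:ℝ)) := by
    gcongr
  refine key.trans ?_
  rw [div_le_iff₀ (by positivity)]
  have expand : 1 / 2 * (((k:ℝ)+1) ^ m * x ^ k / (k.factorial:ℝ)) * (((k:ℝ)+1) * (k.factorial:ℝ))
      = ((k:ℝ)+1) ^ m * x ^ k * (((k:ℝ)+1)/2) := by field_simp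
  rw [expand]
  have h3 : 2 ^ m * x ≤ ((k:ℝ)+1)/2 := by
    have : (2:ℝ) ^ (m+1) * x = 2 * (2 ^ m * x) := by ring
    nlinarith [hk']
  calc 2 ^ m * ((k:ℝ)+1) ^ m * (x * x ^ k) = (((k:ℝ)+1) ^ m * x ^ k) * (2 ^ m * x) := by ring
    _ ≤ (((k:ℝ)+1) ^ m * x ^ k) * (((k:ℝ)+1)/2) := by gcongr
    _ = ((k:ℝ)+1) ^ m * x ^ k * (((k:ℝ)+1)/2) := by ring

lemma summable_mul_fac {f : ℕ → ℝ} {C : ℝ} {m : ℕ}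
    (h : ∀ k, |f k| ≤ C * ((k : ℝ) + 1) ^ m) (x : ℝ) (hx : 0 ≤ x) :
    Summable (fun k : ℕ => f k * x ^ k / (k.factorial : ℝ)) := by
  apply Summable.of_norm_bounded (((summable_poly_fac m x hx)).mul_left C)
  intro k
  have hfk : (0:ℝ) < (k.factorial : ℝ) := by exact_mod_cast k.factorial_pos
  calc ‖f k * x ^ k / (k.factorial : ℝ)‖ = |f k| * (x ^ k / (k.factorial : ℝ)) := by
        rw [Real.norm_eq_abs, abs_div, abs_mul, abs_of_nonneg (pow_nonneg hx k),
          abs_of_pos hfk, mul_div_assoc]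
    _ ≤ (C * ((k:ℝ)+1)^m) * (x ^ k / (k.factorial : ℝ)) :=
        mul_le_mul_of_nonneg_right (h k) (by positivity)
    _ = C * (((k:ℝ)+1)^m * x ^ k / (k.factorial : ℝ)) := by ring
  
lemma tsum_shift (g : ℕ → ℝ) (y : ℝ)
    (hs : Summable fun k : ℕ => (k : ℝ) * g k * y ^ k / (k.factorial : ℝ)) :
    ∑' k : ℕ, (k : ℝ) * g k * y ^ k / (k.factorial : ℝ)
      = y * ∑' k : ℕ, g (k + 1) * y ^ k / (k.factorial : ℝ) := by
  rw [Summable.tsum_eq_zero_add hs]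
  simp only [Nat.cast_zero, zero_mul, zero_div, zero_add]
  rw [← tsum_mul_left]
  congr 1 with k
  have hfk : ((k.factorial : ℝ)) ≠ 0 := by exact_mod_cast k.factorial_pos.ne'
  rw [Nat.factorial_succ]
  push_cast
  field_simp
  ring


lemma bound_kj (m j : ℕ) : ∀ k : ℕ, |((k:ℝ)+j)^m| ≤ ((j:ℝ)+1)^m * ((k:ℝ)+1)^m := by
  intro k
  rw [abs_of_nonneg (by positivity), ← mul_pow]
  apply pow_le_pow_left₀ (by positivity)
  nlinarith [Nat.cast_nonneg (α := ℝ) k, Nat.cast_nonneg (α := ℝ) j]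

lemma summable_kj (m j : ℕ) (y : ℝ) (hy : 0 ≤ y) :
    Summable (fun k : ℕ => ((k:ℝ)+j)^m * y ^ k / (k.factorial : ℝ)) :=
  summable_mul_fac (bound_kj m j) y hy

lemma summable_kkj (m j : ℕ) (y : ℝ) (hy : 0 ≤ y) :
    Summable (fun k : ℕ => (k:ℝ) * ((k:ℝ)+j)^m * y ^ k / (k.factorial : ℝ)) := by
  refine summable_mul_fac (C := ((j:ℝ)+1)^m) (m := m+1) (fun k => ?_) y hy
  have h1 : |(k:ℝ) * ((k:ℝ)+j)^m| = (k:ℝ) * ((k:ℝ)+j)^m := abs_of_nonneg (by positivity)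
  rw [h1, pow_succ']
  have h2 : ((k:ℝ)+j)^m ≤ ((j:ℝ)+1)^m * ((k:ℝ)+1)^m := by
    have := bound_kj m j k; rwa [abs_of_nonneg (by positivity)] at this
  calc (k:ℝ) * ((k:ℝ)+j)^m ≤ ((k:ℝ)+1) * (((j:ℝ)+1)^m * ((k:ℝ)+1)^m) := by
        apply mul_le_mul (by linarith) h2 (by positivity) (by positivity)
    _ = ((j:ℝ)+1)^m * (((k:ℝ)+1) * ((k:ℝ)+1)^m) := by ring

lemma moment_le (m : ℕ) (j : ℕ) (y : ℝ) (hy : 0 ≤ y) :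
    ∑' k : ℕ, ((k:ℝ)+j)^m * y ^ k / (k.factorial : ℝ) ≤ (y + j + m)^m * Real.exp y := by
  induction m generalizing j with
  | zero => simp [tsum_exp_eq y]
  | succ m ih =>
    have hsum1 := summable_kkj m j y hy
    have hsum2 := summable_kj m j y hy
    have hsplit : ∀ k : ℕ, ((k:ℝ)+j)^(m+1) * y ^ k / (k.factorial : ℝ)
        = (k:ℝ) * ((k:ℝ)+j)^m * y ^ k / (k.factorial : ℝ)
          + (j:ℝ) * (((k:ℝ)+j)^m * y ^ k / (k.factorial : ℝ)) := by
      intro k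
      rw [pow_succ' (((k:ℝ)+j)) m]
      ring
    rw [tsum_congr hsplit, Summable.tsum_add hsum1 ((summable_kj m j y hy).mul_left _), tsum_mul_left,
      tsum_shift (fun k => ((k:ℝ)+j)^m) y hsum1]
    have hre : ∑' k : ℕ, (((k+1:ℕ):ℝ)+j)^m * y ^ k / (k.factorial : ℝ)
        = ∑' k : ℕ, ((k:ℝ)+(j+1:ℕ))^m * y ^ k / (k.factorial : ℝ) := by
      apply tsum_congr; intro k; push_cast; ring_nf
    rw [hre]
    have h1 := ih (j+1)
    have h2 := ih j
    have hP : (0:ℝ) ≤ y + j + m := by positivity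
    have hPm : ((y:ℝ) + j + m)^m ≤ (y + j + (m+1):ℝ)^m := by
      apply pow_le_pow_left₀ hP; push_cast; linarith
    have hcast : (y + (j+1:ℕ) + m : ℝ) = y + j + (m+1) := by push_cast; ring
    rw [hcast] at h1
    have hexp := Real.exp_pos y
    have hPnn : (0:ℝ) ≤ (y + j + (m+1):ℝ)^m := by positivity
    have step1 : y * (∑' k : ℕ, ((k:ℝ)+(j+1:ℕ))^m * y ^ k / (k.factorial : ℝ))
          + (j:ℝ) * ∑' k : ℕ, ((k:ℝ)+j)^m * y ^ k / (k.factorial : ℝ)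
        ≤ (y + j + (m+1):ℝ)^(m+1) * Real.exp y := by
      have t1 : y * (∑' k : ℕ, ((k:ℝ)+(j+1:ℕ))^m * y ^ k / (k.factorial : ℝ))
          ≤ y * ((y + j + (m+1):ℝ)^m * Real.exp y) := mul_le_mul_of_nonneg_left h1 hy
      have t2 : (j:ℝ) * (∑' k : ℕ, ((k:ℝ)+j)^m * y ^ k / (k.factorial : ℝ))
          ≤ (j:ℝ) * ((y + j + (m+1):ℝ)^m * Real.exp y) := by
        refine mul_le_mul_of_nonneg_left (h2.trans ?_) (Nat.cast_nonneg j)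
        exact mul_le_mul_of_nonneg_right hPm hexp.le
      have t3 : (y + (j:ℝ)) * ((y + j + (m+1):ℝ)^m * Real.exp y)
          ≤ (y + j + (m+1):ℝ) * ((y + j + (m+1):ℝ)^m * Real.exp y) := by
        apply mul_le_mul_of_nonneg_right (by linarith) (by positivity)
      calc _ ≤ (y + (j:ℝ)) * ((y + j + (m+1):ℝ)^m * Real.exp y) := by linarith
        _ ≤ (y + j + (m+1):ℝ) * ((y + j + (m+1):ℝ)^m * Real.exp y) := t3
        _ = (y + j + (m+1):ℝ)^(m+1) * Real.exp y := by rw [pow_succ']; ring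
    refine step1.trans (le_of_eq ?_)
    push_cast
    ring



lemma zrle_one (c : ℝ) : (0:ℝ) ^ c ≤ 1 := by
  rcases eq_or_ne c 0 with rfl | hc
  · rw [Real.rpow_zero]
  · rw [Real.zero_rpow hc]; norm_num

lemma zero_rpow_nonneg (c : ℝ) : (0:ℝ) ≤ (0:ℝ) ^ c := Real.rpow_nonneg le_rfl c

-- C1
lemma rpow_le_npow_of_one_le {t c : ℝ} {m : ℕ} (ht : 1 ≤ t) (hc : c ≤ m) :
    t ^ c ≤ t ^ m := by
  have := Real.rpow_le_rpow_of_exponent_le ht hc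
  rwa [Real.rpow_natCast] at this

-- C2
lemma rpow_le_inv_npow_of_le_one {t c : ℝ} {m : ℕ} (ht0 : 0 < t) (ht : t ≤ 1)
    (hc : -(m:ℝ) ≤ c) : t ^ c ≤ (t⁻¹) ^ m := by
  have := Real.rpow_le_rpow_of_exponent_ge ht0 ht hc
  rwa [Real.rpow_neg ht0.le, Real.rpow_natCast, ← inv_pow] at this

-- C3
lemma rpow_mem_window {u t v c : ℝ} (hu : 0 < u) (hut : u ≤ t) (htv : t ≤ v) :
    min (u ^ c) (v ^ c) ≤ t ^ c ∧ t ^ c ≤ max (u ^ c) (v ^ c) := by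
  rcases le_or_gt 0 c with hc | hc
  · constructor
    · exact (min_le_left _ _).trans (Real.rpow_le_rpow hu.le hut hc)
    · exact (Real.rpow_le_rpow (hu.trans_le hut).le htv hc).trans (le_max_right _ _)
  · constructor
    · exact (min_le_right _ _).trans (Real.rpow_le_rpow_of_nonpos (hu.trans_le hut) htv hc.le)
    · exact (Real.rpow_le_rpow_of_nonpos hu hut hc.le).trans (le_max_left _ _)

-- (k/x)^c ≤ x^m when k ≤ x
lemma div_rpow_le_pow {c : ℝ} {m : ℕ} (hc : |c| ≤ m) {x : ℝ} (hx : 1 ≤ x) (k : ℕ)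
    (hk : (k : ℝ) ≤ x) : ((k:ℝ)/x) ^ c ≤ x ^ m := by
  have hx0 : (0:ℝ) < x := lt_of_lt_of_le one_pos hx
  have h1x : (1:ℝ) ≤ x ^ m := one_le_pow₀ hx
  rcases Nat.eq_zero_or_pos k with rfl | hk1
  · simp only [Nat.cast_zero, zero_div]
    exact (zrle_one c).trans h1x
  · have hkpos : (0:ℝ) < k := by exact_mod_cast hk1
    have hk1' : (1:ℝ) ≤ (k:ℝ) := by exact_mod_cast hk1
    have ht0 : (0:ℝ) < (k:ℝ)/x := by positivity
    have ht1 : (k:ℝ)/x ≤ 1 := by rw [div_le_one hx0]; exact hk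
    have := rpow_le_inv_npow_of_le_one ht0 ht1 (neg_le_of_abs_le hc)
    refine this.trans ?_
    rw [inv_div]
    apply pow_le_pow_left₀ (by positivity)
    rw [div_le_iff₀ hkpos]
    nlinarith

lemma T1_abs_bound {c : ℝ} {m : ℕ} (hc : |c| ≤ (m:ℝ)) {x : ℝ} (hx : 0 < x) :
    ∀ k : ℕ, |((k:ℝ)/x) ^ c| ≤ ((1+x⁻¹)^m + x^m) * ((k:ℝ)+1)^m := by
  intro k
  have hrn : (0:ℝ) ≤ ((k:ℝ)/x) ^ c := Real.rpow_nonneg (by positivity) c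
  rw [abs_of_nonneg hrn]
  have hk1 : (1:ℝ) ≤ ((k:ℝ)+1) ^ m := one_le_pow₀ (by linarith [Nat.cast_nonneg (α := ℝ) k])
  rcases Nat.eq_zero_or_pos k with rfl | hk0
  · simp only [Nat.cast_zero, zero_div]
    have c1 : (1:ℝ) ≤ (1+x⁻¹)^m := one_le_pow₀ (by linarith [inv_nonneg.2 hx.le])
    have c2 : (0:ℝ) ≤ x^m := by positivity
    have h0 := zrle_one c
    norm_num
    nlinarith
  · have hkpos : (0:ℝ) < k := by exact_mod_cast hk0
    have hk1' : (1:ℝ) ≤ (k:ℝ) := by exact_mod_cast hk0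
    have ht0 : (0:ℝ) < (k:ℝ)/x := by positivity
    rcases le_or_gt 1 ((k:ℝ)/x) with h1 | h1
    · have := rpow_le_npow_of_one_le h1 ((le_abs_self c).trans hc)
      refine this.trans ?_
      have : ((k:ℝ)/x) ^ m ≤ ((1+x⁻¹) * ((k:ℝ)+1)) ^ m := by
        apply pow_le_pow_left₀ (by positivity)
        rw [div_le_iff₀ hx]
        have hxi : x⁻¹ * x = 1 := inv_mul_cancel₀ hx.ne'
        nlinarith [Nat.cast_nonneg (α := ℝ) k, pow_nonneg hx.le m]
      rw [mul_pow] at this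
      refine this.trans ?_
      have c2 : (0:ℝ) ≤ x^m := by positivity
      nlinarith [pow_nonneg (by positivity : (0:ℝ) ≤ 1+x⁻¹) m]
    · have := rpow_le_inv_npow_of_le_one ht0 h1.le (neg_le_of_abs_le hc)
      refine this.trans ?_
      rw [inv_div]
      have hxk : (x/(k:ℝ)) ^ m ≤ x ^ m := by
        apply pow_le_pow_left₀ (by positivity)
        rw [div_le_iff₀ hkpos]; nlinarith
      have c1 : (0:ℝ) ≤ (1+x⁻¹)^m := by positivity
      nlinarith [pow_nonneg (by positivity : (0:ℝ) ≤ x) m]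


lemma summable_T1 {c : ℝ} {m : ℕ} (hc : |c| ≤ (m:ℝ)) {x : ℝ} (hx : 0 < x) :
    Summable (fun k : ℕ => ((k:ℝ)/x) ^ c * x ^ k / (k.factorial : ℝ)) :=
  summable_mul_fac (T1_abs_bound hc hx) x hx.le

-- exponent inequalities
lemma ineq_low {δ : ℝ} (hδ : 0 < δ) (hδ2 : δ ≤ 1/2) :
    Real.exp (-(δ/3)) - 1 + (δ/3)*(1-δ) ≤ -(2*δ^2/9) := by
  have h := Real.add_one_le_exp (δ/3)
  have hp : (0:ℝ) < 1 + δ/3 := by linarith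
  have h2 : Real.exp (-(δ/3)) ≤ (1+δ/3)⁻¹ := by
    rw [Real.exp_neg]
    exact inv_anti₀ hp (by linarith)
  have h3 : (1+δ/3)⁻¹ ≤ 1 - δ/3 + (δ/3)^2 := by
    rw [inv_eq_one_div, div_le_iff₀ hp]
    nlinarith
  nlinarith [sq_nonneg δ]

lemma ineq_high {δ : ℝ} (hδ : 0 < δ) (hδ2 : δ ≤ 1/2) :
    Real.exp (δ/3) - 1 - (δ/3)*(1+δ) ≤ -(δ^2/6) := by
  have h := Real.add_one_le_exp (-(δ/3))
  have hp : (0:ℝ) < 1 - δ/3 := by linarith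
  have hee : Real.exp (δ/3) * Real.exp (-(δ/3)) = 1 := by
    rw [← Real.exp_add]; norm_num
  have h2 : Real.exp (δ/3) * (1 - δ/3) ≤ 1 := by
    have := mul_le_mul_of_nonneg_left h (Real.exp_pos (δ/3)).le
    nlinarith
  have h3 : Real.exp (δ/3) ≤ 1 + δ/3 + (6/5)*(δ/3)^2 := by
    have hB : (1:ℝ) ≤ (1 + δ/3 + (6/5)*(δ/3)^2) * (1 - δ/3) := by nlinarith
    nlinarith [Real.exp_pos (δ/3)]
  nlinarith [sq_nonneg δ]


lemma chern_low {δ x : ℝ} (hδ : 0 < δ) (hδ2 : δ ≤ 1/2) (hx : 1 ≤ x) :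
    (∑' k : ℕ, (if (k:ℝ) ≤ (1-δ)*x then x ^ k / (k.factorial:ℝ) else 0)) * Real.exp (-x)
      ≤ Real.exp (-(2*δ^2/9) * x) := by
  have hx0 : (0:ℝ) < x := lt_of_lt_of_le one_pos hx
  set θ : ℝ := δ/3 with hθ
  have hθ0 : 0 < θ := by positivity
  set g : ℕ → ℝ := fun k => Real.exp (θ*((1-δ)*x)) * ((x*Real.exp (-θ)) ^ k / (k.factorial:ℝ))
    with hgdef
  have hgs : Summable g := (Real.summable_pow_div_factorial _).mul_left _
  have hpt : ∀ k : ℕ, (if (k:ℝ) ≤ (1-δ)*x then x ^ k / (k.factorial:ℝ) else 0) ≤ g k := by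
    intro k
    have hgk : g k = Real.exp (θ*((1-δ)*x - k)) * (x ^ k / (k.factorial:ℝ)) := by
      rw [hgdef]
      simp only
      rw [mul_pow, ← Real.exp_nat_mul,
        show θ*((1-δ)*x - (k:ℝ)) = θ*((1-δ)*x) + (k:ℝ)*(-θ) by ring, Real.exp_add]
      ring
    split_ifs with h
    · rw [hgk]
      nth_rewrite 1 [show x ^ k / (k.factorial:ℝ) = 1 * (x ^ k / (k.factorial:ℝ)) by ring]
      apply mul_le_mul_of_nonneg_right _ (by positivity)
      apply Real.one_le_exp
      have : (0:ℝ) ≤ (1-δ)*x - k := by linarith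
      positivity
    · rw [hgk]; positivity
  have hsumInd : Summable (fun k : ℕ => if (k:ℝ) ≤ (1-δ)*x then x ^ k / (k.factorial:ℝ) else 0) := by
    apply Summable.of_nonneg_of_le _ hpt hgs
    intro k; split_ifs <;> positivity
  have h1 := Summable.tsum_le_tsum hpt hsumInd hgs
  have h2 : ∑' k, g k = Real.exp (θ*((1-δ)*x)) * Real.exp (x*Real.exp (-θ)) := by
    rw [hgdef, tsum_mul_left, tsum_exp_eq]
  calc (∑' k : ℕ, (if (k:ℝ) ≤ (1-δ)*x then x ^ k / (k.factorial:ℝ) else 0)) * Real.exp (-x)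
      ≤ (∑' k, g k) * Real.exp (-x) := by
        apply mul_le_mul_of_nonneg_right h1 (Real.exp_pos _).le
    _ = Real.exp (x * (Real.exp (-θ) - 1 + θ*(1-δ))) := by
        rw [h2, ← Real.exp_add, ← Real.exp_add]
        congr 1
        ring
    _ ≤ Real.exp (-(2*δ^2/9) * x) := by
        apply Real.exp_le_exp.2
        rw [show -(2*δ^2/9) * x = x * -(2*δ^2/9) by ring]
        exact mul_le_mul_of_nonneg_left (ineq_low hδ hδ2) (by linarith)

lemma chern_high (m : ℕ) {δ x : ℝ} (hδ : 0 < δ) (hδ2 : δ ≤ 1/2) (hx : 1 ≤ x) :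
    (∑' k : ℕ, (if (1+δ)*x ≤ (k:ℝ) then ((k:ℝ)/x) ^ m * x ^ k / (k.factorial:ℝ) else 0))
        * Real.exp (-x)
      ≤ (Real.exp 1 + m) ^ m * Real.exp (-(δ^2/6) * x) := by
  have hx0 : (0:ℝ) < x := lt_of_lt_of_le one_pos hx
  set θ : ℝ := δ/3 with hθ
  have hθ0 : 0 < θ := by positivity
  set y : ℝ := x * Real.exp θ with hy
  have hy0 : (0:ℝ) < y := by positivity
  set A : ℝ := Real.exp (-(θ*((1+δ)*x))) * (x^m)⁻¹ with hA
  have hA0 : 0 < A := by positivity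
  set g : ℕ → ℝ := fun k => A * (((k:ℝ)+(0:ℕ))^m * y ^ k / (k.factorial:ℝ)) with hgdef
  have hgs : Summable g := (summable_kj m 0 y hy0.le).mul_left _
  have hpt : ∀ k : ℕ, (if (1+δ)*x ≤ (k:ℝ) then ((k:ℝ)/x) ^ m * x ^ k / (k.factorial:ℝ) else 0)
      ≤ g k := by
    intro k
    have hfk : ((k.factorial:ℝ)) ≠ 0 := by exact_mod_cast k.factorial_pos.ne'
    have hgk : g k = Real.exp (θ*((k:ℝ)-(1+δ)*x)) * (((k:ℝ)/x) ^ m * x ^ k / (k.factorial:ℝ)) := by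
      rw [hgdef]
      simp only [Nat.cast_zero, add_zero]
      rw [hy, hA, mul_pow x (Real.exp θ) k, ← Real.exp_nat_mul, div_pow]
      rw [show θ*((k:ℝ)-(1+δ)*x) = (k:ℝ)*θ + -(θ*((1+δ)*x)) by ring, Real.exp_add]
      field_simp
    split_ifs with h
    · rw [hgk]
      nth_rewrite 1 [show ((k:ℝ)/x) ^ m * x ^ k / (k.factorial:ℝ)
        = 1 * (((k:ℝ)/x) ^ m * x ^ k / (k.factorial:ℝ)) by ring]
      apply mul_le_mul_of_nonneg_right _ (by positivity)
      apply Real.one_le_exp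
      have : (0:ℝ) ≤ (k:ℝ) - (1+δ)*x := by linarith
      positivity
    · rw [hgk]; positivity
  have hsumInd : Summable (fun k : ℕ =>
      if (1+δ)*x ≤ (k:ℝ) then ((k:ℝ)/x) ^ m * x ^ k / (k.factorial:ℝ) else 0) := by
    apply Summable.of_nonneg_of_le _ hpt hgs
    intro k; split_ifs <;> positivity
  have h1 := Summable.tsum_le_tsum hpt hsumInd hgs
  have h2 : ∑' k, g k ≤ A * ((y + m)^m * Real.exp y) := by
    rw [hgdef, tsum_mul_left]
    apply mul_le_mul_of_nonneg_left _ hA0.le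
    have := moment_le m 0 y hy0.le
    simpa using this
  have h3 : A * ((y + m)^m * Real.exp y) * Real.exp (-x)
      ≤ (Real.exp 1 + m) ^ m * Real.exp (-(δ^2/6) * x) := by
    have e1 : A * ((y + m)^m * Real.exp y) * Real.exp (-x)
        = ((y+m)/x)^m * Real.exp (y - x - θ*((1+δ)*x)) := by
      rw [hA, div_pow,
        show y - x - θ*((1+δ)*x) = y + -x + -(θ*((1+δ)*x)) by ring, Real.exp_add, Real.exp_add,
        Real.exp_neg x]
      have hxm : (x:ℝ)^m ≠ 0 := by positivity
      field_simp
    rw [e1]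
    have b1 : ((y+m)/x)^m ≤ (Real.exp 1 + m) ^ m := by
      apply pow_le_pow_left₀ (by positivity)
      rw [div_le_iff₀ hx0, hy]
      have hth : Real.exp θ ≤ Real.exp 1 := Real.exp_le_exp.2 (by linarith)
      nlinarith [Nat.cast_nonneg (α := ℝ) m, Real.exp_pos 1]
    have b2 : Real.exp (y - x - θ*((1+δ)*x)) ≤ Real.exp (-(δ^2/6) * x) := by
      apply Real.exp_le_exp.2
      rw [hy, show x * Real.exp θ - x - θ*((1+δ)*x) = x * (Real.exp θ - 1 - θ*(1+δ)) by ring,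
        show -(δ^2/6) * x = x * -(δ^2/6) by ring]
      exact mul_le_mul_of_nonneg_left (ineq_high hδ hδ2) (by linarith)
    have : (0:ℝ) ≤ ((y+m)/x)^m := by positivity
    calc ((y+m)/x)^m * Real.exp (y - x - θ*((1+δ)*x))
        ≤ ((y+m)/x)^m * Real.exp (-(δ^2/6) * x) := mul_le_mul_of_nonneg_left b2 this
      _ ≤ (Real.exp 1 + m) ^ m * Real.exp (-(δ^2/6) * x) :=
          mul_le_mul_of_nonneg_right b1 (Real.exp_pos _).le
  calc (∑' k : ℕ, (if (1+δ)*x ≤ (k:ℝ) then ((k:ℝ)/x) ^ m * x ^ k / (k.factorial:ℝ) else 0))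
        * Real.exp (-x)
      ≤ (∑' k, g k) * Real.exp (-x) := mul_le_mul_of_nonneg_right h1 (Real.exp_pos _).le
    _ ≤ A * ((y + m)^m * Real.exp y) * Real.exp (-x) :=
        mul_le_mul_of_nonneg_right h2 (Real.exp_pos _).le
    _ ≤ _ := h3


set_option maxHeartbeats 1000000 in
lemma main_est (c : ℝ) (m : ℕ) (hm : |c| ≤ (m:ℝ)) (δ : ℝ) (hδ : 0 < δ) (hδ2 : δ ≤ 1/2)
    (x : ℝ) (hx1 : 1 ≤ x) :
    (min ((1-δ)^c) ((1+δ)^c)) * (1 - (Real.exp (-(2*δ^2/9)*x) + Real.exp (-(δ^2/6)*x)))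
      ≤ (∑' k : ℕ, ((k:ℝ)/x) ^ c * x ^ k / (k.factorial:ℝ)) * Real.exp (-x)
    ∧ (∑' k : ℕ, ((k:ℝ)/x) ^ c * x ^ k / (k.factorial:ℝ)) * Real.exp (-x)
      ≤ x^m * Real.exp (-(2*δ^2/9) * x) + (max ((1-δ)^c) ((1+δ)^c))
        + (Real.exp 1 + m)^m * Real.exp (-(δ^2/6) * x) := by
  set lo : ℝ := min ((1-δ)^c) ((1+δ)^c) with hlodef
  set hi : ℝ := max ((1-δ)^c) ((1+δ)^c) with hhidef
  have hhi0 : 0 ≤ hi := by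
    rw [hhidef]
    have h1 : (0:ℝ) < (1+δ)^c := Real.rpow_pos_of_pos (by linarith) c
    have h2 := le_max_right ((1-δ)^c) ((1+δ)^c)
    linarith
  have hlo0 : 0 < lo := by
    rw [hlodef]
    have h1 : (0:ℝ) < (1+δ)^c := Real.rpow_pos_of_pos (by linarith) c
    have h2 : (0:ℝ) < (1-δ)^c := Real.rpow_pos_of_pos (by linarith) c
    exact lt_min h2 h1
  have hx0 : (0:ℝ) < x := lt_of_lt_of_le one_pos hx1
  have hE : (0:ℝ) < Real.exp (-x) := Real.exp_pos _
  -- basic functions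
  set T1 : ℕ → ℝ := fun k => ((k:ℝ)/x) ^ c * x ^ k / (k.factorial:ℝ) with hT1def
  set s : ℕ → ℝ := fun k => x ^ k / (k.factorial:ℝ) with hsdef
  have hT1nn : ∀ k, 0 ≤ T1 k := fun k => by
    rw [hT1def]; exact div_nonneg (mul_nonneg (Real.rpow_nonneg (by positivity) c) (by positivity)) (by positivity)
  have hsnn : ∀ k, 0 ≤ s k := fun k => by rw [hsdef]; positivity
  have sT1 : Summable T1 := summable_T1 hm hx0
  have ss : Summable s := Real.summable_pow_div_factorial x
  -- region indicator functions
  set fL : ℕ → ℝ := fun k => if (k:ℝ) ≤ (1-δ)*x then T1 k else 0 with hfL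
  set fM : ℕ → ℝ := fun k => if (1-δ)*x < (k:ℝ) ∧ (k:ℝ) < (1+δ)*x then T1 k else 0 with hfM
  set fH : ℕ → ℝ := fun k => if (1+δ)*x ≤ (k:ℝ) then T1 k else 0 with hfH
  set gL : ℕ → ℝ := fun k => if (k:ℝ) ≤ (1-δ)*x then s k else 0 with hgL
  set gM : ℕ → ℝ := fun k => if (1-δ)*x < (k:ℝ) ∧ (k:ℝ) < (1+δ)*x then s k else 0 with hgM
  set gH : ℕ → ℝ := fun k => if (1+δ)*x ≤ (k:ℝ) then s k else 0 with hgH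
  have hfLnn : ∀ k, 0 ≤ fL k := fun k => by rw [hfL]; dsimp only; split_ifs; exacts [hT1nn k, le_rfl]
  have hfMnn : ∀ k, 0 ≤ fM k := fun k => by rw [hfM]; dsimp only; split_ifs; exacts [hT1nn k, le_rfl]
  have hfHnn : ∀ k, 0 ≤ fH k := fun k => by rw [hfH]; dsimp only; split_ifs; exacts [hT1nn k, le_rfl]
  have hgLnn : ∀ k, 0 ≤ gL k := fun k => by rw [hgL]; dsimp only; split_ifs; exacts [hsnn k, le_rfl]
  have hgMnn : ∀ k, 0 ≤ gM k := fun k => by rw [hgM]; dsimp only; split_ifs; exacts [hsnn k, le_rfl]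
  have hgHnn : ∀ k, 0 ≤ gH k := fun k => by rw [hgH]; dsimp only; split_ifs; exacts [hsnn k, le_rfl]
  have hfLle : ∀ k, fL k ≤ T1 k := fun k => by
    rw [hfL]; dsimp only; split_ifs; exacts [le_rfl, hT1nn k]
  have hfMle : ∀ k, fM k ≤ T1 k := fun k => by
    rw [hfM]; dsimp only; split_ifs; exacts [le_rfl, hT1nn k]
  have hfHle : ∀ k, fH k ≤ T1 k := fun k => by
    rw [hfH]; dsimp only; split_ifs; exacts [le_rfl, hT1nn k]
  have hgLle : ∀ k, gL k ≤ s k := fun k => by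
    rw [hgL]; dsimp only; split_ifs; exacts [le_rfl, hsnn k]
  have hgMle : ∀ k, gM k ≤ s k := fun k => by
    rw [hgM]; dsimp only; split_ifs; exacts [le_rfl, hsnn k]
  have hgHle : ∀ k, gH k ≤ s k := fun k => by
    rw [hgH]; dsimp only; split_ifs; exacts [le_rfl, hsnn k]
  have sfL : Summable fL := Summable.of_nonneg_of_le hfLnn hfLle sT1
  have sfM : Summable fM := Summable.of_nonneg_of_le hfMnn hfMle sT1
  have sfH : Summable fH := Summable.of_nonneg_of_le hfHnn hfHle sT1
  have sgL : Summable gL := Summable.of_nonneg_of_le hgLnn hgLle ss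
  have sgM : Summable gM := Summable.of_nonneg_of_le hgMnn hgMle ss
  have sgH : Summable gH := Summable.of_nonneg_of_le hgHnn hgHle ss
  have hδx : (1-δ)*x < (1+δ)*x := by nlinarith
  -- partitions
  have hpartT : ∀ k, T1 k = fL k + fM k + fH k := by
    intro k
    rw [hfL, hfM, hfH]
    dsimp only
    rcases le_or_gt (k:ℝ) ((1-δ)*x) with h1 | h1
    · rw [if_pos h1, if_neg (by push_neg; intro h; linarith), if_neg (by linarith)]
      ring
    · rcases lt_or_ge (k:ℝ) ((1+δ)*x) with h2 | h2
      · rw [if_neg (by linarith), if_pos ⟨h1, h2⟩, if_neg (by linarith)]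
        ring
      · rw [if_neg (by linarith), if_neg (by push_neg; intro h; linarith), if_pos h2]
        ring
  have hpartS : ∀ k, s k = gL k + gM k + gH k := by
    intro k
    rw [hgL, hgM, hgH]
    dsimp only
    rcases le_or_gt (k:ℝ) ((1-δ)*x) with h1 | h1
    · rw [if_pos h1, if_neg (by push_neg; intro h; linarith), if_neg (by linarith)]
      ring
    · rcases lt_or_ge (k:ℝ) ((1+δ)*x) with h2 | h2
      · rw [if_neg (by linarith), if_pos ⟨h1, h2⟩, if_neg (by linarith)]
        ring
      · rw [if_neg (by linarith), if_neg (by push_neg; intro h; linarith), if_pos h2]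
        ring
  have hsumT : ∑' k, T1 k = ∑' k, fL k + ∑' k, fM k + ∑' k, fH k := by
    rw [tsum_congr hpartT, Summable.tsum_add (sfL.add sfM) sfH, Summable.tsum_add sfL sfM]
  have hsumS : Real.exp x = ∑' k, gL k + ∑' k, gM k + ∑' k, gH k := by
    rw [← tsum_exp_eq x]
    have : ∑' k : ℕ, x ^ k / (k.factorial:ℝ) = ∑' k, s k := by rw [hsdef]
    rw [this, tsum_congr hpartS, Summable.tsum_add (sgL.add sgM) sgH, Summable.tsum_add sgL sgM]
  -- low piece
  have eSL : ∑' k, fL k ≤ x^m * ∑' k, gL k := by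
    rw [← tsum_mul_left]
    apply Summable.tsum_le_tsum _ sfL (sgL.mul_left _)
    intro k
    rw [hfL, hgL]
    dsimp only
    split_ifs with h
    · have hkx : (k:ℝ) ≤ x := by nlinarith
      have hb := div_rpow_le_pow hm hx1 k hkx
      rw [hT1def, hsdef]
      dsimp only
      rw [mul_div_assoc]
      exact mul_le_mul_of_nonneg_right hb (by positivity)
    · simp
  have ePLe : (∑' k, gL k) * Real.exp (-x) ≤ Real.exp (-(2*δ^2/9)*x) := chern_low hδ hδ2 hx1
  have eSLe : (∑' k, fL k) * Real.exp (-x) ≤ x^m * Real.exp (-(2*δ^2/9) * x) := by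
    calc (∑' k, fL k) * Real.exp (-x) ≤ (x^m * ∑' k, gL k) * Real.exp (-x) :=
          mul_le_mul_of_nonneg_right eSL hE.le
      _ = x^m * ((∑' k, gL k) * Real.exp (-x)) := by ring
      _ ≤ x^m * Real.exp (-(2*δ^2/9)*x) := mul_le_mul_of_nonneg_left ePLe (by positivity)
  -- high piece
  have ssH : Summable (fun k : ℕ =>
      if (1+δ)*x ≤ (k:ℝ) then ((k:ℝ)/x) ^ m * x ^ k / (k.factorial:ℝ) else 0) := by
    have base : Summable (fun k : ℕ => ((k:ℝ)/x) ^ m * x ^ k / (k.factorial:ℝ)) := by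
      refine summable_mul_fac (C := (x⁻¹)^m) (m := m) (fun k => ?_) x hx0.le
      rw [abs_of_nonneg (by positivity), div_pow, div_eq_mul_inv, ← inv_pow, mul_comm]
      apply mul_le_mul_of_nonneg_left _ (by positivity)
      apply pow_le_pow_left₀ (Nat.cast_nonneg k)
      linarith
    apply Summable.of_nonneg_of_le _ _ base
    · intro k; split_ifs <;> positivity
    · intro k; split_ifs with h
      · exact le_rfl
      · positivity
  have eSH : ∑' k, fH k ≤ ∑' k : ℕ,
      (if (1+δ)*x ≤ (k:ℝ) then ((k:ℝ)/x) ^ m * x ^ k / (k.factorial:ℝ) else 0) := by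
    apply Summable.tsum_le_tsum _ sfH ssH
    intro k
    rw [hfH]
    dsimp only
    split_ifs with h
    · have h1x : (1:ℝ) ≤ (k:ℝ)/x := by rw [le_div_iff₀ hx0]; nlinarith
      have hb := rpow_le_npow_of_one_le h1x ((le_abs_self c).trans hm)
      rw [hT1def]
      dsimp only
      rw [mul_div_assoc, mul_div_assoc]
      exact mul_le_mul_of_nonneg_right hb (by positivity)
    · exact le_rfl
  have eSHe : (∑' k, fH k) * Real.exp (-x) ≤ (Real.exp 1 + m)^m * Real.exp (-(δ^2/6) * x) :=
    (mul_le_mul_of_nonneg_right eSH hE.le).trans (chern_high m hδ hδ2 hx1)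
  have ePHe : (∑' k, gH k) * Real.exp (-x) ≤ Real.exp (-(δ^2/6)*x) := by
    have h0 := chern_high 0 hδ hδ2 hx1
    simpa using h0
  -- mid piece
  have eSMhi : ∑' k, fM k ≤ hi * ∑' k, gM k := by
    rw [← tsum_mul_left]
    apply Summable.tsum_le_tsum _ sfM (sgM.mul_left _)
    intro k
    rw [hfM, hgM]
    dsimp only
    split_ifs with h
    · obtain ⟨hl, hr⟩ := h
      have hu : (0:ℝ) < 1 - δ := by linarith
      have hut : 1 - δ ≤ (k:ℝ)/x := by rw [le_div_iff₀ hx0]; nlinarith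
      have htv : (k:ℝ)/x ≤ 1 + δ := by rw [div_le_iff₀ hx0]; nlinarith
      have hw := (rpow_mem_window (c := c) hu hut htv).2
      rw [hT1def, hsdef]
      dsimp only
      rw [mul_div_assoc]
      exact mul_le_mul_of_nonneg_right hw (by positivity)
    · simp
  have eSMlo : lo * ∑' k, gM k ≤ ∑' k, fM k := by
    rw [← tsum_mul_left]
    apply Summable.tsum_le_tsum _ (sgM.mul_left _) sfM
    intro k
    rw [hfM, hgM]
    dsimp only
    split_ifs with h
    · obtain ⟨hl, hr⟩ := h
      have hu : (0:ℝ) < 1 - δ := by linarith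
      have hut : 1 - δ ≤ (k:ℝ)/x := by rw [le_div_iff₀ hx0]; nlinarith
      have htv : (k:ℝ)/x ≤ 1 + δ := by rw [div_le_iff₀ hx0]; nlinarith
      have hw := (rpow_mem_window (c := c) hu hut htv).1
      rw [hT1def, hsdef]
      dsimp only
      rw [mul_div_assoc]
      exact mul_le_mul_of_nonneg_right hw (by positivity)
    · simp
  have ePM1 : (∑' k, gM k) * Real.exp (-x) ≤ 1 := by
    have hle : ∑' k, gM k ≤ Real.exp x := by
      have h1 : ∑' k, gM k ≤ ∑' k, s k := Summable.tsum_le_tsum hgMle sgM ss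
      have h2 : ∑' k, s k = Real.exp x := tsum_exp_eq x
      linarith
    calc (∑' k, gM k) * Real.exp (-x) ≤ Real.exp x * Real.exp (-x) :=
          mul_le_mul_of_nonneg_right hle hE.le
      _ = 1 := by rw [← Real.exp_add]; simp
  have hxx : Real.exp x * Real.exp (-x) = 1 := by rw [← Real.exp_add]; simp
  have ePMeq : (∑' k, gM k) * Real.exp (-x)
      = 1 - (∑' k, gL k) * Real.exp (-x) - (∑' k, gH k) * Real.exp (-x) := by
    have hgMeq : ∑' k, gM k = Real.exp x - ∑' k, gL k - ∑' k, gH k := by linarith [hsumS]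
    rw [hgMeq, sub_mul, sub_mul, hxx]
  -- nonnegativity
  have nnL : 0 ≤ (∑' k, fL k) * Real.exp (-x) :=
    mul_nonneg (tsum_nonneg hfLnn) hE.le
  have nnH : 0 ≤ (∑' k, fH k) * Real.exp (-x) :=
    mul_nonneg (tsum_nonneg hfHnn) hE.le
  have nngL : 0 ≤ (∑' k, gL k) * Real.exp (-x) :=
    mul_nonneg (tsum_nonneg hgLnn) hE.le
  have nngH : 0 ≤ (∑' k, gH k) * Real.exp (-x) :=
    mul_nonneg (tsum_nonneg hgHnn) hE.le
  have hf : (∑' k, T1 k) * Real.exp (-x)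
      = (∑' k, fL k) * Real.exp (-x) + (∑' k, fM k) * Real.exp (-x)
        + (∑' k, fH k) * Real.exp (-x) := by
    rw [hsumT]; ring
  constructor
  · have m2 : lo * (1 - (Real.exp (-(2*δ^2/9)*x) + Real.exp (-(δ^2/6)*x)))
        ≤ (∑' k, fM k) * Real.exp (-x) := by
      have w1 : 1 - (Real.exp (-(2*δ^2/9)*x) + Real.exp (-(δ^2/6)*x))
          ≤ (∑' k, gM k) * Real.exp (-x) := by linarith [ePMeq, ePLe, ePHe]
      calc lo * (1 - (Real.exp (-(2*δ^2/9)*x) + Real.exp (-(δ^2/6)*x)))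
          ≤ lo * ((∑' k, gM k) * Real.exp (-x)) := mul_le_mul_of_nonneg_left w1 hlo0.le
        _ = (lo * ∑' k, gM k) * Real.exp (-x) := by ring
        _ ≤ (∑' k, fM k) * Real.exp (-x) := mul_le_mul_of_nonneg_right eSMlo hE.le
    linarith [hf, nnL, nnH, m2]
  · have m1 : (∑' k, fM k) * Real.exp (-x) ≤ hi := by
      calc (∑' k, fM k) * Real.exp (-x) ≤ (hi * ∑' k, gM k) * Real.exp (-x) :=
            mul_le_mul_of_nonneg_right eSMhi hE.le
        _ = hi * ((∑' k, gM k) * Real.exp (-x)) := by ring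
        _ ≤ hi * 1 := mul_le_mul_of_nonneg_left ePM1 hhi0
        _ = hi := mul_one hi
    linarith [hf, eSLe, eSHe, m1]

theorem aux_S (c : ℝ) :
    Tendsto (fun x : ℝ => (∑' k : ℕ, ((k:ℝ)/x) ^ c * x ^ k / (k.factorial:ℝ)) * Real.exp (-x))
      atTop (nhds 1) := by
  set m : ℕ := ⌈|c|⌉₊ with hmdef
  have hm : |c| ≤ (m:ℝ) := Nat.le_ceil _
  rw [Metric.tendsto_nhds]
  suffices H : ∀ ε : ℝ, 0 < ε → ε ≤ 1 → ∀ᶠ x in atTop,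
      dist ((∑' k : ℕ, ((k:ℝ)/x) ^ c * x ^ k / (k.factorial:ℝ)) * Real.exp (-x)) 1 < ε by
    intro ε hε
    filter_upwards [H (min ε 1) (lt_min hε one_pos) (min_le_right _ _)] with x hx
    exact hx.trans_le (min_le_left _ _)
  intro ε hε hε1
  -- choose δ
  have cont1 : Tendsto (fun d : ℝ => (1+d) ^ c) (nhds 0) (nhds 1) := by
    have h1 : ContinuousAt (fun t : ℝ => t ^ c) 1 :=
      Real.continuousAt_rpow_const 1 c (Or.inl one_ne_zero)
    have h2 : Tendsto (fun d : ℝ => 1 + d) (nhds 0) (nhds 1) := by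
      simpa using (tendsto_const_nhds : Tendsto (fun _ : ℝ => (1:ℝ)) (nhds 0) (nhds 1)).add (tendsto_id : Tendsto id (nhds (0:ℝ)) (nhds 0))
    simpa [Real.one_rpow, Function.comp_def] using h1.tendsto.comp h2
  have cont2 : Tendsto (fun d : ℝ => (1-d) ^ c) (nhds 0) (nhds 1) := by
    have h1 : ContinuousAt (fun t : ℝ => t ^ c) 1 :=
      Real.continuousAt_rpow_const 1 c (Or.inl one_ne_zero)
    have h2 : Tendsto (fun d : ℝ => 1 - d) (nhds 0) (nhds 1) := by
      simpa using (tendsto_const_nhds : Tendsto (fun _ : ℝ => (1:ℝ)) (nhds 0) (nhds 1)).sub (tendsto_id : Tendsto id (nhds (0:ℝ)) (nhds 0))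
    simpa [Real.one_rpow, Function.comp_def] using h1.tendsto.comp h2
  have ev1 : ∀ᶠ d in nhds (0:ℝ), |(1+d)^c - 1| < ε/4 := by
    have := Metric.tendsto_nhds.1 cont1 (ε/4) (by positivity)
    filter_upwards [this] with d hd
    rwa [Real.dist_eq] at hd
  have ev2 : ∀ᶠ d in nhds (0:ℝ), |(1-d)^c - 1| < ε/4 := by
    have := Metric.tendsto_nhds.1 cont2 (ε/4) (by positivity)
    filter_upwards [this] with d hd
    rwa [Real.dist_eq] at hd
  have ev3 : ∀ᶠ d in nhds (0:ℝ), |d| < 1/2 := by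
    filter_upwards [Metric.ball_mem_nhds (0:ℝ) (show (0:ℝ) < 1/2 by norm_num)] with d hd
    simpa [Real.dist_eq] using hd
  obtain ⟨δ, ⟨⟨hδ1, hδ2'⟩, hδ3⟩, hδIoi⟩ :=
    ((((ev1.and ev2).and ev3).filter_mono (nhdsWithin_le_nhds (s := Set.Ioi (0:ℝ)))).and
      eventually_mem_nhdsWithin).exists
  have hδ : 0 < δ := hδIoi
  have hδ2 : δ ≤ 1/2 := by
    have := abs_lt.1 hδ3
    linarith [this.2]
  set lo : ℝ := min ((1-δ)^c) ((1+δ)^c) with hlodef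
  set hi : ℝ := max ((1-δ)^c) ((1+δ)^c) with hhidef
  have hloB : 1 - ε/4 < lo := by
    have a1 := abs_lt.1 hδ1
    have a2 := abs_lt.1 hδ2'
    rcases min_cases ((1-δ)^c) ((1+δ)^c) with ⟨h, _⟩ | ⟨h, _⟩ <;> rw [hlodef, h] <;> linarith
  have hhiB : hi < 1 + ε/4 := by
    have a1 := abs_lt.1 hδ1
    have a2 := abs_lt.1 hδ2'
    rcases max_cases ((1-δ)^c) ((1+δ)^c) with ⟨h, _⟩ | ⟨h, _⟩ <;> rw [hhidef, h] <;> linarith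
  have hhi0 : 0 ≤ hi := by
    rw [hhidef]
    have : (0:ℝ) < (1+δ)^c := Real.rpow_pos_of_pos (by linarith) c
    have h2 := le_max_right ((1-δ)^c) ((1+δ)^c)
    linarith
  have hlo0 : 0 < lo := by linarith
  -- eventual conditions in x
  have κ1pos : (0:ℝ) < 2*δ^2/9 := by positivity
  have κ2pos : (0:ℝ) < δ^2/6 := by positivity
  have dec1 : Tendsto (fun x : ℝ => x^(m:ℝ) * Real.exp (-(2*δ^2/9) * x)) atTop (nhds 0) :=
    tendsto_rpow_mul_exp_neg_mul_atTop_nhds_zero m _ κ1pos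
  have dec2 : Tendsto (fun x : ℝ => Real.exp (-(δ^2/6) * x)) atTop (nhds 0) := by
    have harg : Tendsto (fun x : ℝ => -(δ^2/6) * x) atTop atBot :=
      tendsto_id.const_mul_atTop_of_neg (by linarith)
    exact Real.tendsto_exp_atBot.comp harg
  have dec3 : Tendsto (fun x : ℝ => Real.exp (-(2*δ^2/9) * x)) atTop (nhds 0) := by
    have harg : Tendsto (fun x : ℝ => -(2*δ^2/9) * x) atTop atBot :=
      tendsto_id.const_mul_atTop_of_neg (by linarith)
    exact Real.tendsto_exp_atBot.comp harg
  have evx2 : ∀ᶠ x : ℝ in atTop, x^m * Real.exp (-(2*δ^2/9) * x) < ε/4 := by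
    have h := (Metric.tendsto_nhds.1 dec1 (ε/4) (by positivity))
    filter_upwards [h, eventually_gt_atTop (0:ℝ)] with x hx hx0
    rw [Real.dist_eq, sub_zero] at hx
    have : x^(m:ℝ) = x^m := Real.rpow_natCast x m
    rw [this] at hx
    calc x^m * Real.exp (-(2*δ^2/9) * x) ≤ |x^m * Real.exp (-(2*δ^2/9) * x)| := le_abs_self _
      _ < ε/4 := hx
  have evx3 : ∀ᶠ x : ℝ in atTop, (Real.exp 1 + m)^m * Real.exp (-(δ^2/6) * x) < ε/4 := by
    have h2 : Tendsto (fun x : ℝ => (Real.exp 1 + m)^m * Real.exp (-(δ^2/6) * x)) atTop (nhds 0) := by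
      simpa using dec2.const_mul ((Real.exp 1 + m)^m)
    have h := (Metric.tendsto_nhds.1 h2 (ε/4) (by positivity))
    filter_upwards [h] with x hx
    rw [Real.dist_eq, sub_zero] at hx
    exact (le_abs_self _).trans_lt hx
  have evx4 : ∀ᶠ x : ℝ in atTop,
      Real.exp (-(2*δ^2/9) * x) + Real.exp (-(δ^2/6) * x) < ε/4 := by
    have h2 : Tendsto (fun x : ℝ => Real.exp (-(2*δ^2/9) * x) + Real.exp (-(δ^2/6) * x))
        atTop (nhds 0) := by simpa using dec3.add dec2
    have h := (Metric.tendsto_nhds.1 h2 (ε/4) (by positivity))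
    filter_upwards [h] with x hx
    rw [Real.dist_eq, sub_zero] at hx
    exact (le_abs_self _).trans_lt hx
  filter_upwards [eventually_ge_atTop (1:ℝ), evx2, evx3, evx4] with x hx1 hx2 hx3 hx4
  obtain ⟨hLB, hUB⟩ := main_est c m hm δ hδ hδ2 x hx1
  rw [← hlodef] at hLB
  rw [← hhidef] at hUB
  rw [Real.dist_eq, abs_sub_lt_iff]
  have hw : Real.exp (-(2*δ^2/9)*x) + Real.exp (-(δ^2/6)*x) < ε/4 := hx4
  have hw0 : 0 < Real.exp (-(2*δ^2/9)*x) + Real.exp (-(δ^2/6)*x) := by positivity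
  have hlohi : lo ≤ hi := min_le_max
  have hlo2 : lo < 2 := by linarith
  constructor
  · linarith [hUB, hx2, hx3, hhiB]
  · nlinarith [hLB, hloB, hw, hw0, hlo0, hlo2, hε1]


lemma summable_epsT1 {c : ℝ} {m : ℕ} (hc : |c| ≤ (m:ℝ)) {x : ℝ} (hx : 0 < x)
    {ε : ℕ → ℝ} {B : ℝ} (hB : ∀ k, |ε k| ≤ B) :
    Summable (fun k : ℕ => ε k * (((k:ℝ)/x) ^ c * x ^ k / (k.factorial : ℝ))) := by
  have h := summable_mul_fac (f := fun k => ε k * ((k:ℝ)/x) ^ c)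
    (C := B * ((1+x⁻¹)^m + x^m)) (m := m) (fun k => ?_) x hx.le
  · apply h.congr
    intro k
    ring
  · rw [abs_mul, mul_assoc]
    have h1 := T1_abs_bound hc hx k
    have h2 := hB k
    have h3 : (0:ℝ) ≤ |((k:ℝ)/x)^c| := abs_nonneg _
    have h4 : (0:ℝ) ≤ |ε k| := abs_nonneg _
    calc |ε k| * |((k:ℝ)/x)^c| ≤ B * (((1+x⁻¹)^m + x^m) * ((k:ℝ)+1)^m) := by
          apply mul_le_mul h2 h1 h3 (h4.trans h2)
      _ = B * (((1+x⁻¹)^m + x^m) * ((k:ℝ)+1)^m) := rfl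

set_option maxHeartbeats 1000000 in
lemma aux_H (c : ℝ) {ε : ℕ → ℝ} (hε : Tendsto ε atTop (nhds 0)) :
    Tendsto (fun x : ℝ =>
        (∑' k : ℕ, ε k * (((k:ℝ)/x) ^ c * x ^ k / (k.factorial:ℝ))) * Real.exp (-x))
      atTop (nhds 0) := by
  set m : ℕ := ⌈|c|⌉₊ with hmdef
  have hm : |c| ≤ (m:ℝ) := Nat.le_ceil _
  have habs : Tendsto (fun k => |ε k|) atTop (nhds 0) := by
    simpa using hε.abs
  obtain ⟨B, hB⟩ : ∃ B : ℝ, ∀ k, |ε k| ≤ B := by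
    obtain ⟨B, hB⟩ := habs.bddAbove_range
    exact ⟨B, fun k => hB (Set.mem_range_self k)⟩
  have hB0 : 0 ≤ B := (abs_nonneg _).trans (hB 0)
  rw [Metric.tendsto_nhds]
  intro η hη
  -- find K
  obtain ⟨K, hK⟩ : ∃ K : ℕ, ∀ k ≥ K, |ε k| ≤ η/4 := by
    have h := Metric.tendsto_nhds.1 habs (η/4) (by positivity)
    rw [eventually_atTop] at h
    obtain ⟨K, hK⟩ := h
    exact ⟨K, fun k hk => by
      have := hK k hk
      rw [Real.dist_eq, sub_zero, abs_abs] at this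
      linarith⟩
  -- eventual conditions
  have decK : Tendsto (fun x : ℝ => (B*K) * ((x^K + x^(m+K)) * Real.exp (-x))) atTop (nhds 0) := by
    have h1 := tendsto_pow_mul_exp_neg_atTop_nhds_zero K
    have h2 := tendsto_pow_mul_exp_neg_atTop_nhds_zero (m+K)
    have := (h1.add h2).const_mul (B*(K:ℝ))
    simpa [mul_add, add_mul] using this
  have ev3 : ∀ᶠ x : ℝ in atTop, (B*K) * ((x^K + x^(m+K)) * Real.exp (-x)) < η/4 := by
    have h := Metric.tendsto_nhds.1 decK (η/4) (by positivity)
    filter_upwards [h] with x hx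
    rw [Real.dist_eq, sub_zero] at hx
    exact (le_abs_self _).trans_lt hx
  have ev2 : ∀ᶠ x : ℝ in atTop,
      (∑' k : ℕ, ((k:ℝ)/x) ^ c * x ^ k / (k.factorial:ℝ)) * Real.exp (-x) ≤ 2 := by
    have h := Metric.tendsto_nhds.1 (aux_S c) 1 one_pos
    filter_upwards [h] with x hx
    rw [Real.dist_eq, abs_sub_lt_iff] at hx
    linarith [hx.1]
  filter_upwards [eventually_ge_atTop (1:ℝ), eventually_ge_atTop (K:ℝ), ev2, ev3]
    with x hx1 hxK hS2 hpoly
  have hx0 : (0:ℝ) < x := lt_of_lt_of_le one_pos hx1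
  have hE : (0:ℝ) < Real.exp (-x) := Real.exp_pos _
  set T1 : ℕ → ℝ := fun k => ((k:ℝ)/x) ^ c * x ^ k / (k.factorial:ℝ) with hT1def
  have hT1nn : ∀ k, 0 ≤ T1 k := fun k =>
    div_nonneg (mul_nonneg (Real.rpow_nonneg (by positivity) c) (by positivity)) (by positivity)
  have sT1 : Summable T1 := summable_T1 hm hx0
  have sabs : Summable (fun k => |ε k| * T1 k) :=
    (summable_epsT1 hm hx0 (ε := fun k => |ε k|) (B := B) (fun k => by rw [abs_abs]; exact hB k)).congr
      (fun k => by rw [hT1def])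
  have sepsT1 : Summable (fun k => ε k * T1 k) :=
    (summable_epsT1 hm hx0 hB).congr (fun k => by rw [hT1def])
  rw [Real.dist_eq, sub_zero]
  -- |H| ≤ Σ |ε| T1 * E
  have step1 : |(∑' k, ε k * T1 k) * Real.exp (-x)| ≤ (∑' k, |ε k| * T1 k) * Real.exp (-x) := by
    rw [abs_mul, abs_of_pos hE]
    apply mul_le_mul_of_nonneg_right _ hE.le
    have h := norm_tsum_le_tsum_norm (f := fun k => ε k * T1 k) (by
      apply sabs.congr
      intro k
      rw [Real.norm_eq_abs, abs_mul, abs_of_nonneg (hT1nn k)])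
    rw [Real.norm_eq_abs] at h
    refine h.trans (le_of_eq (tsum_congr fun k => ?_))
    rw [Real.norm_eq_abs, abs_mul, abs_of_nonneg (hT1nn k)]
  -- split at K
  have hsplit : (∑ k ∈ Finset.range K, |ε k| * T1 k) + ∑' k, |ε (k+K)| * T1 (k+K)
      = ∑' k, |ε k| * T1 k := Summable.sum_add_tsum_nat_add K sabs
  have tail_le : ∑' k, |ε (k+K)| * T1 (k+K) ≤ (η/4) * ∑' k, T1 k := by
    have hshift : Summable (fun k => T1 (k+K)) :=
      (summable_nat_add_iff (f := T1) K).2 sT1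
    have hshift2 : Summable (fun k => |ε (k+K)| * T1 (k+K)) :=
      (summable_nat_add_iff (f := fun k => |ε k| * T1 k) K).2 sabs
    have h1 : ∑' k, |ε (k+K)| * T1 (k+K) ≤ ∑' k, (η/4) * T1 (k+K) :=
      Summable.tsum_le_tsum (fun k =>
        mul_le_mul_of_nonneg_right (hK (k+K) (Nat.le_add_left K k)) (hT1nn _))
        hshift2 (hshift.mul_left _)
    refine h1.trans ?_
    rw [tsum_mul_left]
    apply mul_le_mul_of_nonneg_left _ (by positivity)
    have := Summable.sum_add_tsum_nat_add K sT1
    have hfin : 0 ≤ ∑ k ∈ Finset.range K, T1 k := Finset.sum_nonneg fun k _ => hT1nn k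
    linarith
  have fin_le : ∑ k ∈ Finset.range K, |ε k| * T1 k ≤ (B*K) * (x^K + x^(m+K)) := by
    have hterm : ∀ k ∈ Finset.range K, |ε k| * T1 k ≤ B * (x^K + x^(m+K)) := by
      intro k hk
      rw [Finset.mem_range] at hk
      have hkx : (k:ℝ) ≤ x := le_trans (by exact_mod_cast hk.le) hxK
      have hT1b : T1 k ≤ x^m * x^K := by
        rw [hT1def]
        dsimp only
        have h1 : ((k:ℝ)/x) ^ c ≤ x^m := div_rpow_le_pow hm hx1 k hkx
        have h2 : x ^ k / (k.factorial:ℝ) ≤ x^K := by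
          have hf1 : (1:ℝ) ≤ (k.factorial:ℝ) := by exact_mod_cast k.factorial_pos
          have hp : x^k ≤ x^K := pow_le_pow_right₀ hx1 hk.le
          calc x ^ k / (k.factorial:ℝ) ≤ x ^ k := div_le_self (by positivity) hf1
            _ ≤ x^K := hp
        calc ((k:ℝ)/x) ^ c * x ^ k / (k.factorial:ℝ)
            = ((k:ℝ)/x) ^ c * (x ^ k / (k.factorial:ℝ)) := by ring
          _ ≤ x^m * x^K := by
              apply mul_le_mul h1 h2 (by positivity) (by positivity)
      calc |ε k| * T1 k ≤ B * (x^m * x^K) :=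
            mul_le_mul (hB k) hT1b (hT1nn k) hB0
        _ ≤ B * (x^K + x^(m+K)) := by
            apply mul_le_mul_of_nonneg_left _ hB0
            rw [pow_add]
            have : (0:ℝ) ≤ x^K := by positivity
            linarith
    calc ∑ k ∈ Finset.range K, |ε k| * T1 k ≤ ∑ _k ∈ Finset.range K, B * (x^K + x^(m+K)) :=
          Finset.sum_le_sum hterm
      _ = K * (B * (x^K + x^(m+K))) := by rw [Finset.sum_const, Finset.card_range]; ring
      _ = (B*K) * (x^K + x^(m+K)) := by ring
  -- assemble
  have main : (∑' k, |ε k| * T1 k) * Real.exp (-x) < η := by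
    have e1 : (∑' k, |ε k| * T1 k) * Real.exp (-x)
        = (∑ k ∈ Finset.range K, |ε k| * T1 k) * Real.exp (-x)
          + (∑' k, |ε (k+K)| * T1 (k+K)) * Real.exp (-x) := by
      rw [← hsplit]; ring
    have e2 : (∑ k ∈ Finset.range K, |ε k| * T1 k) * Real.exp (-x)
        ≤ (B*K) * ((x^K + x^(m+K)) * Real.exp (-x)) := by
      calc (∑ k ∈ Finset.range K, |ε k| * T1 k) * Real.exp (-x)
          ≤ ((B*K) * (x^K + x^(m+K))) * Real.exp (-x) :=
            mul_le_mul_of_nonneg_right fin_le hE.le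
        _ = (B*K) * ((x^K + x^(m+K)) * Real.exp (-x)) := by ring
    have e3 : (∑' k, |ε (k+K)| * T1 (k+K)) * Real.exp (-x)
        ≤ (η/4) * ((∑' k, T1 k) * Real.exp (-x)) := by
      calc (∑' k, |ε (k+K)| * T1 (k+K)) * Real.exp (-x)
          ≤ ((η/4) * ∑' k, T1 k) * Real.exp (-x) := mul_le_mul_of_nonneg_right tail_le hE.le
        _ = (η/4) * ((∑' k, T1 k) * Real.exp (-x)) := by ring
    have e4 : (η/4) * ((∑' k, T1 k) * Real.exp (-x)) ≤ (η/4) * 2 :=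
      mul_le_mul_of_nonneg_left hS2 (by positivity)
    linarith
  exact lt_of_le_of_lt step1 main


set_option maxHeartbeats 1000000 in
theorem aux_main (c L : ℝ) (r : ℕ → ℝ)
    (hr : Tendsto (fun k : ℕ => r k / ((k:ℝ))^c) atTop (nhds L)) :
    Tendsto (fun x : ℝ => (∑' k : ℕ, r k * x^k / (k.factorial:ℝ)) * Real.exp (-x) * x^(-c))
      atTop (nhds L) := by
  set m : ℕ := ⌈|c|⌉₊ with hmdef
  have hm : |c| ≤ (m:ℝ) := Nat.le_ceil _
  set ε : ℕ → ℝ := fun k => if k = 0 then 0 else r k / ((k:ℝ))^c - L with hεdef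
  have hε : Tendsto ε atTop (nhds 0) := by
    have h1 : Tendsto (fun k : ℕ => r k / ((k:ℝ))^c - L) atTop (nhds 0) := by
      simpa using hr.sub_const L
    apply h1.congr'
    filter_upwards [eventually_ge_atTop 1] with k hk
    rw [hεdef]
    simp only
    rw [if_neg (by omega)]
  obtain ⟨B, hB⟩ : ∃ B : ℝ, ∀ k, |ε k| ≤ B := by
    have habs : Tendsto (fun k => |ε k|) atTop (nhds 0) := by simpa using hε.abs
    obtain ⟨B, hB⟩ := habs.bddAbove_range
    exact ⟨B, fun k => hB (Set.mem_range_self k)⟩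
  have hB0 : 0 ≤ B := (abs_nonneg _).trans (hB 0)
  have hrval : ∀ k : ℕ, 1 ≤ k → r k = (L + ε k) * ((k:ℝ))^c := by
    intro k hk
    have hkpos : (0:ℝ) < (k:ℝ) := by exact_mod_cast hk
    have hkc : ((k:ℝ))^c ≠ 0 := (Real.rpow_pos_of_pos hkpos c).ne'
    rw [hεdef]
    simp only
    rw [if_neg (by omega)]
    field_simp
    ring
  have hrbound : ∀ k : ℕ, |r k| ≤ (|r 0| + (|L| + B)) * ((k:ℝ)+1)^m := by
    intro k
    have h1p : (1:ℝ) ≤ ((k:ℝ)+1)^m := one_le_pow₀ (by linarith [Nat.cast_nonneg (α := ℝ) k])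
    rcases Nat.eq_zero_or_pos k with rfl | hk
    · calc |r 0| ≤ (|r 0| + (|L| + B)) * 1 := by nlinarith [abs_nonneg L]
        _ ≤ (|r 0| + (|L| + B)) * (((0:ℕ):ℝ)+1)^m := by
            apply mul_le_mul_of_nonneg_left _ (by positivity)
            simpa using h1p
    · have hk1 : (1:ℝ) ≤ (k:ℝ) := by exact_mod_cast hk
      have hkc : (0:ℝ) < ((k:ℝ))^c := Real.rpow_pos_of_pos (by linarith) c
      have hbc : ((k:ℝ))^c ≤ ((k:ℝ)+1)^m := by
        have h2 := rpow_le_npow_of_one_le hk1 ((le_abs_self c).trans hm)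
        refine h2.trans (pow_le_pow_left₀ (by linarith) (by linarith) m)
      rw [hrval k hk, abs_mul, abs_of_pos hkc]
      have hLB : |L + ε k| ≤ |L| + B := (abs_add_le _ _).trans (by linarith [hB k])
      calc |L + ε k| * ((k:ℝ))^c ≤ (|L| + B) * ((k:ℝ)+1)^m := by
            apply mul_le_mul hLB hbc hkc.le (by linarith [abs_nonneg L])
        _ ≤ (|r 0| + (|L| + B)) * ((k:ℝ)+1)^m := by
            apply mul_le_mul_of_nonneg_right _ (by positivity)
            linarith [abs_nonneg (r 0)]
  -- eventual equality
  have heq : ∀ᶠ x : ℝ in atTop,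
      (∑' k : ℕ, r k * x^k / (k.factorial:ℝ)) * Real.exp (-x) * x^(-c)
      = L * ((∑' k : ℕ, ((k:ℝ)/x)^c * x^k / (k.factorial:ℝ)) * Real.exp (-x))
        + (∑' k : ℕ, ε k * (((k:ℝ)/x)^c * x^k / (k.factorial:ℝ))) * Real.exp (-x)
        + (r 0 * (x^(-c) * Real.exp (-x)) - (L * ((0:ℝ))^c) * Real.exp (-x)) := by
    filter_upwards [eventually_ge_atTop (1:ℝ)] with x hx1
    have hx0 : (0:ℝ) < x := lt_of_lt_of_le one_pos hx1
    set T1 : ℕ → ℝ := fun k => ((k:ℝ)/x) ^ c * x ^ k / (k.factorial:ℝ) with hT1def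
    have sT1 : Summable T1 := summable_T1 hm hx0
    have sεT1 : Summable (fun k => ε k * T1 k) := summable_epsT1 hm hx0 hB
    have hsr : Summable (fun k : ℕ => r k * x^k / (k.factorial:ℝ)) :=
      summable_mul_fac hrbound x hx0.le
    have hsrX : Summable (fun k : ℕ => r k * x^k / (k.factorial:ℝ) * x^(-c)) :=
      hsr.mul_right _
    have hcomb : Summable (fun k => L * T1 k + ε k * T1 k) :=
      (sT1.mul_left L).add sεT1
    have hshift_eq : ∀ k : ℕ,
        r (k+1) * x^(k+1) / ((k+1).factorial:ℝ) * x^(-c)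
          = L * T1 (k+1) + ε (k+1) * T1 (k+1) := by
      intro k
      have hk1 : 1 ≤ k+1 := Nat.le_add_left 1 k
      have hkpos : (0:ℝ) < ((k+1:ℕ):ℝ) := by positivity
      have hdiv : (((k+1:ℕ):ℝ)/x)^c = ((k+1:ℕ):ℝ)^c / x^c :=
        Real.div_rpow hkpos.le hx0.le c
      have hxc : x^(-c) = (x^c)⁻¹ := Real.rpow_neg hx0.le c
      have hxcne : x^c ≠ 0 := (Real.rpow_pos_of_pos hx0 c).ne'
      have hfne : (((k+1).factorial:ℝ)) ≠ 0 := by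
        exact_mod_cast (k+1).factorial_pos.ne'
      rw [hrval (k+1) hk1, hT1def]
      simp only
      rw [hdiv, hxc]
      field_simp
    have key : (∑' k : ℕ, r k * x^k / (k.factorial:ℝ)) * x^(-c)
        = L * (∑' k, T1 k) + (∑' k, ε k * T1 k) + (r 0 * x^(-c) - L * ((0:ℝ))^c) := by
      have e1 : (∑' k : ℕ, r k * x^k / (k.factorial:ℝ)) * x^(-c)
          = ∑' k : ℕ, r k * x^k / (k.factorial:ℝ) * x^(-c) := (tsum_mul_right).symm
      have e2 := Summable.tsum_eq_zero_add hsrX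
      have e3 := Summable.tsum_eq_zero_add hcomb
      have e4 : ∑' k : ℕ, (L * T1 (k+1) + ε (k+1) * T1 (k+1))
          = ∑' k : ℕ, r (k+1) * x^(k+1) / ((k+1).factorial:ℝ) * x^(-c) :=
        tsum_congr fun k => (hshift_eq k).symm
      have e5 : ∑' k, (L * T1 k + ε k * T1 k) = L * (∑' k, T1 k) + ∑' k, ε k * T1 k := by
        rw [Summable.tsum_add (sT1.mul_left L) sεT1, tsum_mul_left]
      have h00 : r 0 * x^(0:ℕ) / ((0:ℕ).factorial:ℝ) * x^(-c) = r 0 * x^(-c) := by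
        norm_num
      have h01 : L * T1 0 + ε 0 * T1 0 = L * ((0:ℝ))^c := by
        rw [hT1def, hεdef]
        norm_num
      have e6 : ∑' k, (L * T1 k + ε k * T1 k)
          = L * ((0:ℝ))^c + ∑' k : ℕ, (L * T1 (k+1) + ε (k+1) * T1 (k+1)) := by
        rw [e3, h01]
      linarith [e1, e2, e4, e5, e6, h00]
    calc (∑' k : ℕ, r k * x^k / (k.factorial:ℝ)) * Real.exp (-x) * x^(-c)
        = ((∑' k : ℕ, r k * x^k / (k.factorial:ℝ)) * x^(-c)) * Real.exp (-x) := by ring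
      _ = (L * (∑' k, T1 k) + (∑' k, ε k * T1 k) + (r 0 * x^(-c) - L * ((0:ℝ))^c))
            * Real.exp (-x) := by rw [key]
      _ = _ := by ring
  -- limit of RHS
  have t2 : Tendsto (fun x : ℝ => Real.exp (-x)) atTop (nhds 0) :=
    Real.tendsto_exp_atBot.comp tendsto_neg_atTop_atBot
  have t1 : Tendsto (fun x : ℝ => x^(-c) * Real.exp (-x)) atTop (nhds 0) := by
    have h := tendsto_rpow_mul_exp_neg_mul_atTop_nhds_zero (-c) 1 one_pos
    simpa using h
  have hlim : Tendsto (fun x : ℝ =>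
      L * ((∑' k : ℕ, ((k:ℝ)/x)^c * x^k / (k.factorial:ℝ)) * Real.exp (-x))
        + (∑' k : ℕ, ε k * (((k:ℝ)/x)^c * x^k / (k.factorial:ℝ))) * Real.exp (-x)
        + (r 0 * (x^(-c) * Real.exp (-x)) - (L * ((0:ℝ))^c) * Real.exp (-x)))
      atTop (nhds (L * 1 + 0 + (r 0 * 0 - (L * ((0:ℝ))^c) * 0))) := by
    exact (((aux_S c).const_mul L).add (aux_H c hε)).add
      ((t1.const_mul (r 0)).sub (t2.const_mul (L * ((0:ℝ))^c)))
  have : (L * 1 + 0 + (r 0 * 0 - (L * ((0:ℝ))^c) * 0)) = L := by ring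
  rw [this] at hlim
  have heq' : (fun x : ℝ =>
      L * ((∑' k : ℕ, ((k:ℝ)/x)^c * x^k / (k.factorial:ℝ)) * Real.exp (-x))
        + (∑' k : ℕ, ε k * (((k:ℝ)/x)^c * x^k / (k.factorial:ℝ))) * Real.exp (-x)
        + (r 0 * (x^(-c) * Real.exp (-x)) - (L * ((0:ℝ))^c) * Real.exp (-x)))
      =ᶠ[atTop] (fun x : ℝ =>
        (∑' k : ℕ, r k * x^k / (k.factorial:ℝ)) * Real.exp (-x) * x^(-c)) := by
    filter_upwards [heq] with x hx
    exact hx.symm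
  exact Tendsto.congr' heq' hlim
lemma risingFactorial_ne_zero {a : ℝ} (ha : ∀ k : ℕ, a ≠ -(k : ℝ)) (n : ℕ) :
    risingFactorial a n ≠ 0 := by
  rw [risingFactorial]
  apply Finset.prod_ne_zero_iff.2
  intro i _
  intro h
  exact ha i (by linarith)

lemma ratio_tendsto (a b : ℝ) (ha : ∀ k : ℕ, a ≠ -(k : ℝ)) (hb : ∀ k : ℕ, b ≠ -(k : ℝ)) :
    Tendsto (fun k : ℕ => (risingFactorial a k / risingFactorial b k) / ((k:ℝ))^(a-b))
      atTop (nhds (Real.Gamma b / Real.Gamma a)) := by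
  have hGa : Real.Gamma a ≠ 0 := Real.Gamma_ne_zero ha
  have hratio : Tendsto (fun n : ℕ => Real.GammaSeq b n / Real.GammaSeq a n) atTop
      (nhds (Real.Gamma b / Real.Gamma a)) :=
    (Real.GammaSeq_tendsto_Gamma b).div (Real.GammaSeq_tendsto_Gamma a) hGa
  have hfrac : Tendsto (fun n : ℕ => ((n:ℝ)/((n:ℝ)+1))^(a-b)) atTop (nhds 1) := by
    have h1 : Tendsto (fun n : ℕ => (n:ℝ)/((n:ℝ)+1)) atTop (nhds 1) := by
      have := tendsto_natCast_div_add_atTop (𝕜 := ℝ) 1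
      exact this
    have h2 : ContinuousAt (fun t : ℝ => t ^ (a-b)) 1 :=
      Real.continuousAt_rpow_const 1 (a-b) (Or.inl one_ne_zero)
    have h3 := h2.tendsto.comp h1
    simpa [Real.one_rpow, Function.comp_def] using h3
  have key : ∀ᶠ n : ℕ in atTop,
      ((n:ℝ)/((n:ℝ)+1))^(a-b) * (Real.GammaSeq b n / Real.GammaSeq a n)
        = (risingFactorial a (n+1) / risingFactorial b (n+1)) / (((n+1:ℕ):ℝ))^(a-b) := by
    filter_upwards [eventually_ge_atTop 1] with n hn
    have hn0 : (0:ℝ) < (n:ℝ) := by exact_mod_cast hn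
    have hn1 : (0:ℝ) < (n:ℝ)+1 := by linarith
    have hRa := risingFactorial_ne_zero ha (n+1)
    have hRb := risingFactorial_ne_zero hb (n+1)
    have hfa : (0:ℝ) < (n:ℝ)^a := Real.rpow_pos_of_pos hn0 a
    have hfb : (0:ℝ) < (n:ℝ)^b := Real.rpow_pos_of_pos hn0 b
    have hn1c : (0:ℝ) < ((n:ℝ)+1)^(a-b) := Real.rpow_pos_of_pos hn1 (a-b)
    have hfac : (0:ℝ) < ((n.factorial:ℝ)) := by exact_mod_cast n.factorial_pos
    have hGSa : Real.GammaSeq a n = (n:ℝ)^a * (n.factorial:ℝ) / risingFactorial a (n+1) := by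
      rw [Real.GammaSeq, risingFactorial]
    have hGSb : Real.GammaSeq b n = (n:ℝ)^b * (n.factorial:ℝ) / risingFactorial b (n+1) := by
      rw [Real.GammaSeq, risingFactorial]
    have hdivr : ((n:ℝ)/((n:ℝ)+1))^(a-b) = (n:ℝ)^(a-b) / ((n:ℝ)+1)^(a-b) :=
      Real.div_rpow hn0.le hn1.le (a-b)
    have hsub : (n:ℝ)^(a-b) = (n:ℝ)^a / (n:ℝ)^b := Real.rpow_sub hn0 a b
    have hcast : (((n+1:ℕ):ℝ)) = (n:ℝ)+1 := by push_cast; ring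
    rw [hGSa, hGSb, hdivr, hsub, hcast]
    field_simp
  have hmul : Tendsto (fun n : ℕ =>
      ((n:ℝ)/((n:ℝ)+1))^(a-b) * (Real.GammaSeq b n / Real.GammaSeq a n)) atTop
      (nhds (1 * (Real.Gamma b / Real.Gamma a))) := hfrac.mul hratio
  rw [one_mul] at hmul
  have hshift : Tendsto (fun n : ℕ =>
      (risingFactorial a (n+1) / risingFactorial b (n+1)) / (((n+1:ℕ):ℝ))^(a-b)) atTop
      (nhds (Real.Gamma b / Real.Gamma a)) := Tendsto.congr' key hmul
  exact (tendsto_add_atTop_iff_nat 1).1 hshift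

/-- Asymptotics of the Kummer function: if neither `a` nor `b` is a nonpositive
integer, then `₁F₁(a;b;x) e^{-x} x^{b-a} → Γ(b)/Γ(a)` as `x → ∞`. -/
theorem kummer_asymptotic (a b : ℝ)
    (ha : ∀ k : ℕ, a ≠ -(k : ℝ)) (hb : ∀ k : ℕ, b ≠ -(k : ℝ)) :
    Tendsto (fun x : ℝ => kummer a b x * Real.exp (-x) * x ^ (b - a)) atTop
      (nhds (Real.Gamma b / Real.Gamma a)) := by
  have h := aux_main (a-b) (Real.Gamma b / Real.Gamma a)
    (fun k => risingFactorial a k / risingFactorial b k) (ratio_tendsto a b ha hb)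
  have hne : -(a-b) = b - a := by ring
  rw [hne] at h
  exact h.congr fun x => by rw [kummer]
end
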